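/- arXiv:2212.02335 — 11 statements merged into one kernel-verified Lean document; each statement's English description precedes it below -/
import Mathlib

section
/- Robustness of the doubly robust value score to misspecification of the action probability model: for every measurable g : ℋ × {0,1} → (0,1] with g(H, A) ≥ δ almost surely for some δ > 0, and every measurable policy d : ℋ → {0,1}, E[Z(d, g, Q₀)] = E[Q₀(H, d(H))]. -/
open MeasureTheory

section Aux

variable {Ω 𝓗 : Type*} [MeasurableSpace Ω] [MeasurableSpace 𝓗]

lemma meas_apply_bool {f : 𝓗 → Bool → ℝ} (hf : ∀ a, Measurable fun h => f h a)
    {d : 𝓗 → Bool} (hd : Measurable d) : Measurable fun h => f h (d h) := by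
  have h1 : (fun h => f h (d h)) = fun h => if d h = true then f h true else f h false := by
    funext h; cases hdh : d h <;> simp [hdh]
  rw [h1]
  exact Measurable.ite (hd (measurableSet_singleton true)) (hf true) (hf false)

lemma sm_comp {H : Ω → 𝓗} {φ : 𝓗 → ℝ} (hφ : Measurable φ) :
    StronglyMeasurable[MeasurableSpace.comap H inferInstance] (fun ω => φ (H ω)) := by
  have hHm : @Measurable Ω 𝓗 (MeasurableSpace.comap H inferInstance) _ H :=
    fun s hs => ⟨s, hs, rfl⟩
  exact (hφ.comp hHm).stronglyMeasurable

/-- pull-out: ∫ χ·X = ∫ χ·E[X|m] for m-strongly-measurable χ. -/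
lemma pull_out {m : MeasurableSpace Ω} {m0 : MeasurableSpace Ω} (hm : m ≤ m0)
    {μ : Measure Ω} [IsFiniteMeasure μ] {χ X : Ω → ℝ}
    (hχ : StronglyMeasurable[m] χ) (hX : Integrable X μ)
    (hχX : Integrable (fun ω => χ ω * X ω) μ) :
    ∫ ω, χ ω * X ω ∂μ = ∫ ω, χ ω * (μ[X|m]) ω ∂μ := by
  have h1 : ∫ ω, (μ[(fun ω => χ ω * X ω)|m]) ω ∂μ = ∫ ω, χ ω * X ω ∂μ :=
    integral_condExp hm
  rw [← h1]
  refine integral_congr_ae ?_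
  have := condExp_mul_of_stronglyMeasurable_left hχ (f := χ) (g := X) hχX hX
  filter_upwards [this] with ω hω
  exact hω

end Aux

/-- Robustness of the doubly robust value score to misspecification of the action
probability model: for every measurable `g : ℋ × {0,1} → (0,1]` with `g(H, A) ≥ δ` a.s.
for some `δ > 0`, and every measurable policy `d : ℋ → {0,1}`,
`E[Z(d, g, Q₀)] = E[Q₀(H, d(H))]`. -/
theorem dr_score_robust_g
    {Ω 𝓗 : Type*} [MeasurableSpace Ω] [MeasurableSpace 𝓗]
    (μ : Measure Ω) [IsProbabilityMeasure μ]
    (H : Ω → 𝓗) (hH : Measurable H)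
    (A : Ω → Bool) (hA : Measurable A)
    (U : Ω → ℝ) (hU : Integrable U μ)
    (g₀ : 𝓗 → Bool → ℝ) (hg₀m : ∀ a, Measurable fun h => g₀ h a)
    (hg₀01 : ∀ h a, g₀ h a ∈ Set.Icc (0:ℝ) 1)
    (hg₀cond : ∀ a : Bool, (fun ω => g₀ (H ω) a)
      =ᵐ[μ] μ[(fun ω => if A ω = a then (1:ℝ) else 0) | MeasurableSpace.comap H inferInstance])
    (ε : ℝ) (hε : 0 < ε)
    (hpos : ∀ᵐ ω ∂μ, ε ≤ g₀ (H ω) (A ω))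
    (Q₀ : 𝓗 → Bool → ℝ) (hQ₀m : ∀ a, Measurable fun h => Q₀ h a)
    (hQ₀int : ∀ a : Bool, Integrable (fun ω => Q₀ (H ω) a) μ)
    (hQ₀cond : ∀ a : Bool, (fun ω => g₀ (H ω) a * Q₀ (H ω) a)
      =ᵐ[μ] μ[(fun ω => (if A ω = a then (1:ℝ) else 0) * U ω)
              | MeasurableSpace.comap H inferInstance]) :
    ∀ g : 𝓗 → Bool → ℝ, (∀ a, Measurable fun h => g h a) →
      (∀ h a, g h a ∈ Set.Ioc (0:ℝ) 1) →
      (∃ δ > (0:ℝ), ∀ᵐ ω ∂μ, δ ≤ g (H ω) (A ω)) →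
      ∀ d : 𝓗 → Bool, Measurable d →
        ∫ ω, (Q₀ (H ω) (d (H ω))
            + (if A ω = d (H ω) then (1:ℝ) else 0) / g (H ω) (A ω)
              * (U ω - Q₀ (H ω) (A ω))) ∂μ
          = ∫ ω, Q₀ (H ω) (d (H ω)) ∂μ := by
  rintro g hgm hg01 ⟨δ, hδ, hδae⟩ d hd
  have hm : MeasurableSpace.comap H inferInstance ≤ ‹MeasurableSpace Ω› := hH.comap_le
  set ψ : 𝓗 → ℝ := fun h => (max (g h (d h)) δ)⁻¹ with hψdef
  have hψm : Measurable ψ := ((meas_apply_bool hgm hd).max measurable_const).inv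
  have hψbd : ∀ h, |ψ h| ≤ δ⁻¹ := by
    intro h
    have h1 : δ ≤ max (g h (d h)) δ := le_max_right _ _
    have h2 : (0:ℝ) < max (g h (d h)) δ := lt_of_lt_of_le hδ h1
    rw [abs_of_nonneg (le_of_lt (inv_pos.mpr h2))]
    exact inv_anti₀ hδ h1
  -- measurability / integrability helpers
  have hQd_m : Measurable fun ω => Q₀ (H ω) (d (H ω)) :=
    (meas_apply_bool hQ₀m hd).comp hH
  have hQA_m : Measurable fun ω => Q₀ (H ω) (A ω) := by
    have h1 : (fun ω => Q₀ (H ω) (A ω))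
        = fun ω => if A ω = true then Q₀ (H ω) true else Q₀ (H ω) false := by
      funext ω; cases hω : A ω <;> simp [hω]
    rw [h1]
    exact Measurable.ite (hA (measurableSet_singleton true))
      ((hQ₀m true).comp hH) ((hQ₀m false).comp hH)
  have hQd_int : Integrable (fun ω => Q₀ (H ω) (d (H ω))) μ := by
    refine Integrable.mono' ((hQ₀int true).abs.add (hQ₀int false).abs)
      hQd_m.aestronglyMeasurable ?_
    refine Filter.Eventually.of_forall fun ω => ?_
    cases hω : d (H ω)
    · simp only [hω, Real.norm_eq_abs]
      exact le_add_of_nonneg_left (abs_nonneg _)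
    · simp only [hω, Real.norm_eq_abs]
      exact le_add_of_nonneg_right (abs_nonneg _)
  have hQA_int : Integrable (fun ω => Q₀ (H ω) (A ω)) μ := by
    refine Integrable.mono' ((hQ₀int true).abs.add (hQ₀int false).abs)
      hQA_m.aestronglyMeasurable ?_
    refine Filter.Eventually.of_forall fun ω => ?_
    cases hω : A ω
    · simp only [hω, Real.norm_eq_abs]
      exact le_add_of_nonneg_left (abs_nonneg _)
    · simp only [hω, Real.norm_eq_abs]
      exact le_add_of_nonneg_right (abs_nonneg _)
  have hind_m : Measurable fun ω => (if A ω = d (H ω) then (1:ℝ) else 0) := by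
    refine Measurable.ite ?_ measurable_const measurable_const
    exact measurableSet_eq_fun hA (hd.comp hH)
  -- F : bounded-weight version of the correction term
  have hF_sm : AEStronglyMeasurable (fun ω => ψ (H ω)
      * ((if A ω = d (H ω) then (1:ℝ) else 0) * (U ω - Q₀ (H ω) (A ω)))) μ :=
    (hψm.comp hH).aestronglyMeasurable.mul
      (hind_m.aestronglyMeasurable.mul (hU.1.sub hQA_m.aestronglyMeasurable))
  have hF_int : Integrable (fun ω => ψ (H ω)
      * ((if A ω = d (H ω) then (1:ℝ) else 0) * (U ω - Q₀ (H ω) (A ω)))) μ := by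
    refine Integrable.mono' ((hU.abs.add hQA_int.abs).const_mul δ⁻¹) hF_sm ?_
    refine Filter.Eventually.of_forall fun ω => ?_
    have h1 : |ψ (H ω)| ≤ δ⁻¹ := hψbd _
    have h2 : |(if A ω = d (H ω) then (1:ℝ) else 0)| ≤ 1 := by split <;> simp
    have h3 : |U ω - Q₀ (H ω) (A ω)| ≤ |U ω| + |Q₀ (H ω) (A ω)| := abs_sub _ _
    calc ‖ψ (H ω) * ((if A ω = d (H ω) then (1:ℝ) else 0) * (U ω - Q₀ (H ω) (A ω)))‖
        = |ψ (H ω)| * (|(if A ω = d (H ω) then (1:ℝ) else 0)|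
          * |U ω - Q₀ (H ω) (A ω)|) := by
          rw [Real.norm_eq_abs, abs_mul, abs_mul]
      _ ≤ δ⁻¹ * (1 * (|U ω| + |Q₀ (H ω) (A ω)|)) := by
          refine mul_le_mul h1 (mul_le_mul h2 h3 (abs_nonneg _) zero_le_one)
            (mul_nonneg (abs_nonneg _) (abs_nonneg _)) (le_of_lt (inv_pos.mpr hδ))
      _ = δ⁻¹ * (|U ω| + |Q₀ (H ω) (A ω)|) := by ring
  -- the correction term equals F a.e.
  have hcorr_ae : (fun ω => (if A ω = d (H ω) then (1:ℝ) else 0) / g (H ω) (A ω)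
      * (U ω - Q₀ (H ω) (A ω))) =ᵐ[μ] fun ω => ψ (H ω)
      * ((if A ω = d (H ω) then (1:ℝ) else 0) * (U ω - Q₀ (H ω) (A ω))) := by
    filter_upwards [hδae] with ω hω
    by_cases hAd : A ω = d (H ω)
    · have hmax : max (g (H ω) (d (H ω))) δ = g (H ω) (A ω) := by
        rw [← hAd]; exact max_eq_left hω
      simp only [hAd, if_pos rfl, hψdef, hmax]
      rw [div_eq_inv_mul]
      ring
    · simp [hAd]
  have hcorr_int : Integrable (fun ω => (if A ω = d (H ω) then (1:ℝ) else 0) / g (H ω) (A ω)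
      * (U ω - Q₀ (H ω) (A ω))) μ := hF_int.congr hcorr_ae.symm
  -- key vanishing lemma for each action a with a bounded H-measurable weight
  have key : ∀ χ : 𝓗 → ℝ, Measurable χ → (∀ h, |χ h| ≤ δ⁻¹) → ∀ a : Bool,
      ∫ ω, χ (H ω) * ((if A ω = a then (1:ℝ) else 0) * (U ω - Q₀ (H ω) a)) ∂μ = 0 := by
    intro χ hχm hχbd a
    have hχ_sm : StronglyMeasurable[MeasurableSpace.comap H inferInstance]
        (fun ω => χ (H ω)) := sm_comp hχm
    have hχ_asm : AEStronglyMeasurable (fun ω => χ (H ω)) μ :=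
      (hχm.comp hH).aestronglyMeasurable
    have hχbd' : ∀ ω, ‖χ (H ω)‖ ≤ δ⁻¹ := fun ω => by
      rw [Real.norm_eq_abs]; exact hχbd _
    have hind_a_m : Measurable fun ω => (if A ω = a then (1:ℝ) else 0) :=
      Measurable.ite (hA (measurableSet_singleton a)) measurable_const measurable_const
    have hind_bd : ∀ ω : Ω, ‖(if A ω = a then (1:ℝ) else 0)‖ ≤ 1 := fun ω => by
      rw [Real.norm_eq_abs]; split <;> simp
    have hX_int : Integrable (fun ω => (if A ω = a then (1:ℝ) else 0) * U ω) μ :=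
      hU.bdd_mul hind_a_m.aestronglyMeasurable (Filter.Eventually.of_forall hind_bd)
    have hY_int : Integrable (fun ω => (if A ω = a then (1:ℝ) else 0)) μ := by
      refine Integrable.mono' (integrable_const (1:ℝ)) hind_a_m.aestronglyMeasurable ?_
      exact Filter.Eventually.of_forall hind_bd
    have hχX_int : Integrable
        (fun ω => χ (H ω) * ((if A ω = a then (1:ℝ) else 0) * U ω)) μ :=
      hX_int.bdd_mul hχ_asm (Filter.Eventually.of_forall hχbd')
    have hχ'_m : Measurable fun h => χ h * Q₀ h a := hχm.mul (hQ₀m a)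
    have hχ'_int : Integrable (fun ω => χ (H ω) * Q₀ (H ω) a) μ :=
      (hQ₀int a).bdd_mul hχ_asm (Filter.Eventually.of_forall hχbd')
    have hχ'Y_int : Integrable
        (fun ω => (χ (H ω) * Q₀ (H ω) a) * (if A ω = a then (1:ℝ) else 0)) μ := by
      have h0 : Integrable
          (fun ω => (if A ω = a then (1:ℝ) else 0) * (χ (H ω) * Q₀ (H ω) a)) μ :=
        hχ'_int.bdd_mul hind_a_m.aestronglyMeasurable (Filter.Eventually.of_forall hind_bd)
      exact h0.congr (Filter.Eventually.of_forall fun ω => mul_comm _ _)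
    have hI1 : ∫ ω, χ (H ω) * ((if A ω = a then (1:ℝ) else 0) * U ω) ∂μ
        = ∫ ω, χ (H ω) * (g₀ (H ω) a * Q₀ (H ω) a) ∂μ := by
      rw [pull_out hm hχ_sm hX_int hχX_int]
      refine integral_congr_ae ?_
      filter_upwards [hQ₀cond a] with ω hω
      rw [← hω]
    have hI2 : ∫ ω, (χ (H ω) * Q₀ (H ω) a) * (if A ω = a then (1:ℝ) else 0) ∂μ
        = ∫ ω, (χ (H ω) * Q₀ (H ω) a) * g₀ (H ω) a ∂μ := by
      rw [pull_out hm (sm_comp hχ'_m) hY_int hχ'Y_int]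
      refine integral_congr_ae ?_
      filter_upwards [hg₀cond a] with ω hω
      rw [← hω]
    have hsplit : ∫ ω, χ (H ω) * ((if A ω = a then (1:ℝ) else 0) * (U ω - Q₀ (H ω) a)) ∂μ
        = (∫ ω, χ (H ω) * ((if A ω = a then (1:ℝ) else 0) * U ω) ∂μ)
          - ∫ ω, (χ (H ω) * Q₀ (H ω) a) * (if A ω = a then (1:ℝ) else 0) ∂μ := by
      rw [← integral_sub hχX_int hχ'Y_int]
      exact integral_congr_ae (Filter.Eventually.of_forall fun ω => by ring)
    rw [hsplit, hI1, hI2]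
    have h3 : ∫ ω, χ (H ω) * (g₀ (H ω) a * Q₀ (H ω) a) ∂μ
        = ∫ ω, (χ (H ω) * Q₀ (H ω) a) * g₀ (H ω) a ∂μ :=
      integral_congr_ae (Filter.Eventually.of_forall fun ω => by ring)
    rw [h3, sub_self]
  -- weights for each action
  have hχa_m : ∀ a : Bool, Measurable fun h => ψ h * (if d h = a then (1:ℝ) else 0) :=
    fun a => hψm.mul (Measurable.ite (hd (measurableSet_singleton a))
      measurable_const measurable_const)
  have hχa_bd : ∀ (a : Bool) (h : 𝓗), |ψ h * (if d h = a then (1:ℝ) else 0)| ≤ δ⁻¹ := by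
    intro a h
    rw [abs_mul]
    calc |ψ h| * |(if d h = a then (1:ℝ) else 0)| ≤ δ⁻¹ * 1 := by
          refine mul_le_mul (hψbd _) ?_ (abs_nonneg _) (le_of_lt (inv_pos.mpr hδ))
          split <;> simp
      _ = δ⁻¹ := mul_one _
  -- split F pointwise into the two action pieces
  have hFsplit : (fun ω => ψ (H ω)
      * ((if A ω = d (H ω) then (1:ℝ) else 0) * (U ω - Q₀ (H ω) (A ω)))) = fun ω =>
      ((ψ (H ω) * (if d (H ω) = true then (1:ℝ) else 0))
        * ((if A ω = true then (1:ℝ) else 0) * (U ω - Q₀ (H ω) true)))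
      + ((ψ (H ω) * (if d (H ω) = false then (1:ℝ) else 0))
        * ((if A ω = false then (1:ℝ) else 0) * (U ω - Q₀ (H ω) false))) := by
    funext ω
    cases hω : A ω <;> cases hω2 : d (H ω) <;> simp [hω, hω2]
  have hpiece_int : ∀ a : Bool, Integrable (fun ω =>
      (ψ (H ω) * (if d (H ω) = a then (1:ℝ) else 0))
      * ((if A ω = a then (1:ℝ) else 0) * (U ω - Q₀ (H ω) a))) μ := by
    intro a
    have hinner : Integrable (fun ω => (if A ω = a then (1:ℝ) else 0)
        * (U ω - Q₀ (H ω) a)) μ := by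
      refine (hU.sub (hQ₀int a)).bdd_mul (c := 1) ?_ (Filter.Eventually.of_forall fun ω => ?_)
      · exact (Measurable.ite (hA (measurableSet_singleton a)) measurable_const
          measurable_const).aestronglyMeasurable
      · rw [Real.norm_eq_abs]; split <;> simp
    refine hinner.bdd_mul (c := δ⁻¹) ?_ (Filter.Eventually.of_forall fun ω => ?_)
    · exact ((hχa_m a).comp hH).aestronglyMeasurable
    · rw [Real.norm_eq_abs]; exact hχa_bd a _
  have hFint0 : ∫ ω, ψ (H ω)
      * ((if A ω = d (H ω) then (1:ℝ) else 0) * (U ω - Q₀ (H ω) (A ω))) ∂μ = 0 := by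
    rw [hFsplit, integral_add (hpiece_int true) (hpiece_int false),
      key _ (hχa_m true) (hχa_bd true) true, key _ (hχa_m false) (hχa_bd false) false,
      add_zero]
  rw [integral_add hQd_int hcorr_int, integral_congr_ae hcorr_ae, hFint0, add_zero]
end

section
/- Doubly robust conditional identification of the restricted quality function: fix a ∈ {0,1}, a measurable g : ℋ × {0,1} → (0,1] with g(H, A) ≥ δ almost surely for some δ > 0, and a measurable Q : ℋ × {0,1} → ℝ with Q(H, a′) integrable for each a′. If g = g₀ or Q = Q₀, then E[Z(a, g, Q) ∣ σ(V)] = QV₀(V, a) almost surely. -/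
open MeasureTheory

/-- Doubly robust conditional identification of the restricted quality function:
fix `a ∈ {0,1}`, a measurable `g` with values in `(0,1]` and `g(H, A) ≥ δ` a.s. for some
`δ > 0`, and a measurable `Q` with `Q(H, a′)` integrable for each `a′`.
If `g = g₀` or `Q = Q₀`, then `E[Z(a, g, Q) ∣ σ(V)] = QV₀(V, a)` almost surely. -/
theorem dr_conditional_identification
    {Ω 𝓗 𝓥 : Type*} [MeasurableSpace Ω] [MeasurableSpace 𝓗] [MeasurableSpace 𝓥]
    (μ : Measure Ω) [IsProbabilityMeasure μ]
    (H : Ω → 𝓗) (hH : Measurable H)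
    (A : Ω → Bool) (hA : Measurable A)
    (U : Ω → ℝ) (hU : Integrable U μ)
    (g₀ : 𝓗 → Bool → ℝ) (hg₀m : ∀ a, Measurable fun h => g₀ h a)
    (hg₀01 : ∀ h a, g₀ h a ∈ Set.Icc (0:ℝ) 1)
    (hg₀cond : ∀ a : Bool, (fun ω => g₀ (H ω) a)
      =ᵐ[μ] μ[(fun ω => if A ω = a then (1:ℝ) else 0) | MeasurableSpace.comap H inferInstance])
    (ε : ℝ) (hε : 0 < ε)
    (hpos : ∀ᵐ ω ∂μ, ε ≤ g₀ (H ω) (A ω))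
    (Q₀ : 𝓗 → Bool → ℝ) (hQ₀m : ∀ a, Measurable fun h => Q₀ h a)
    (hQ₀int : ∀ a : Bool, Integrable (fun ω => Q₀ (H ω) a) μ)
    (hQ₀cond : ∀ a : Bool, (fun ω => g₀ (H ω) a * Q₀ (H ω) a)
      =ᵐ[μ] μ[(fun ω => (if A ω = a then (1:ℝ) else 0) * U ω)
              | MeasurableSpace.comap H inferInstance])
    -- restriction V = f(H)
    (f : 𝓗 → 𝓥) (hf : Measurable f)
    (QV₀ : 𝓥 → Bool → ℝ) (hQV₀m : ∀ a, Measurable fun v => QV₀ v a)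
    (hQV₀cond : ∀ a : Bool, (fun ω => QV₀ (f (H ω)) a)
      =ᵐ[μ] μ[(fun ω => Q₀ (H ω) a)
              | MeasurableSpace.comap (fun ω => f (H ω)) inferInstance])
    -- fixed action, g-model and Q-model
    (a : Bool)
    (g : 𝓗 → Bool → ℝ) (hgm : ∀ a', Measurable fun h => g h a')
    (hg01 : ∀ h a', g h a' ∈ Set.Ioc (0:ℝ) 1)
    (δ : ℝ) (hδ : 0 < δ) (hgpos : ∀ᵐ ω ∂μ, δ ≤ g (H ω) (A ω))
    (Q : 𝓗 → Bool → ℝ) (hQm : ∀ a', Measurable fun h => Q h a')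
    (hQint : ∀ a' : Bool, Integrable (fun ω => Q (H ω) a') μ)
    (hgQ : g = g₀ ∨ Q = Q₀) :
    μ[(fun ω => Q (H ω) a
        + (if A ω = a then (1:ℝ) else 0) / g (H ω) (A ω) * (U ω - Q (H ω) (A ω)))
      | MeasurableSpace.comap (fun ω => f (H ω)) inferInstance]
      =ᵐ[μ] fun ω => QV₀ (f (H ω)) a := by
  classical
  have hmH : MeasurableSpace.comap H inferInstance ≤ (inferInstance : MeasurableSpace Ω) :=
    hH.comap_le
  have hVH : MeasurableSpace.comap (fun ω => f (H ω)) inferInstance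
      ≤ MeasurableSpace.comap H inferInstance := by
    calc MeasurableSpace.comap (fun ω => f (H ω)) inferInstance
        = (MeasurableSpace.comap f inferInstance).comap H := by
          rw [MeasurableSpace.comap_comp]; rfl
      _ ≤ MeasurableSpace.comap H inferInstance :=
          MeasurableSpace.comap_mono hf.comap_le
  have hHmH : @Measurable Ω 𝓗 (MeasurableSpace.comap H inferInstance) _ H := fun s hs => ⟨s, hs, rfl⟩
  set ind : Ω → ℝ := fun ω => if A ω = a then 1 else 0 with hinddef
  have hind_meas : Measurable ind := by
    apply Measurable.ite (hA (measurableSet_singleton a)) <;> exact measurable_const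
  have hind_bd : ∀ ω, |ind ω| ≤ 1 := by
    intro ω; by_cases h : A ω = a <;> simp [hinddef, h]
  have hind_int : Integrable ind μ := by
    refine (integrable_const (1:ℝ)).mono' hind_meas.aestronglyMeasurable ?_
    exact Filter.Eventually.of_forall fun ω => by simpa using hind_bd ω
  -- pointwise rewriting of the score
  have hZ_eq : ∀ ω, Q (H ω) a
      + (if A ω = a then (1:ℝ) else 0) / g (H ω) (A ω) * (U ω - Q (H ω) (A ω))
      = Q (H ω) a + (g (H ω) a)⁻¹ * (ind ω * (U ω - Q (H ω) a)) := by
    intro ω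
    by_cases h : A ω = a
    · have h1 : ind ω = 1 := by simp [hinddef, h]
      rw [if_pos h, h, h1, div_eq_mul_inv]; ring
    · have h1 : ind ω = 0 := by simp [hinddef, h]
      rw [h1]; simp [h]
  -- integrability facts
  have hUQ_int : Integrable (fun ω => U ω - Q (H ω) a) μ := hU.sub (hQint a)
  have hindUQ_int : Integrable (fun ω => ind ω * (U ω - Q (H ω) a)) μ := by
    refine hUQ_int.abs.mono' (hind_meas.aestronglyMeasurable.mul
      (hU.1.sub ((hQm a).comp hH).aestronglyMeasurable)) ?_
    refine Filter.Eventually.of_forall fun ω => ?_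
    simp only [norm_mul, Real.norm_eq_abs]
    calc |ind ω| * |U ω - Q (H ω) a| ≤ 1 * |U ω - Q (H ω) a| :=
          mul_le_mul_of_nonneg_right (hind_bd ω) (abs_nonneg _)
      _ = |U ω - Q (H ω) a| := one_mul _
  have hindU_int : Integrable (fun ω => ind ω * U ω) μ := by
    refine hU.abs.mono' (hind_meas.aestronglyMeasurable.mul hU.1) ?_
    refine Filter.Eventually.of_forall fun ω => ?_
    simp only [norm_mul, Real.norm_eq_abs]
    calc |ind ω| * |U ω| ≤ 1 * |U ω| :=
          mul_le_mul_of_nonneg_right (hind_bd ω) (abs_nonneg _)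
      _ = |U ω| := one_mul _
  have hQind_int : Integrable (fun ω => Q (H ω) a * ind ω) μ := by
    refine (hQint a).abs.mono' (((hQm a).comp hH).aestronglyMeasurable.mul
      hind_meas.aestronglyMeasurable) ?_
    refine Filter.Eventually.of_forall fun ω => ?_
    simp only [norm_mul, Real.norm_eq_abs]
    calc |Q (H ω) a| * |ind ω| ≤ |Q (H ω) a| * 1 :=
          mul_le_mul_of_nonneg_left (hind_bd ω) (abs_nonneg _)
      _ = |Q (H ω) a| := mul_one _
  have hT_aesm : AEStronglyMeasurable
      (fun ω => (g (H ω) a)⁻¹ * (ind ω * (U ω - Q (H ω) a))) μ :=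
    (((hgm a).comp hH).inv).aestronglyMeasurable.mul
      (hind_meas.aestronglyMeasurable.mul (hU.1.sub ((hQm a).comp hH).aestronglyMeasurable))
  have hT_int : Integrable (fun ω => (g (H ω) a)⁻¹ * (ind ω * (U ω - Q (H ω) a))) μ := by
    refine Integrable.mono' ((hUQ_int.abs).const_mul δ⁻¹) hT_aesm ?_
    filter_upwards [hgpos] with ω hg'
    by_cases h : A ω = a
    · have hga : δ ≤ g (H ω) a := by rw [← h]; exact hg'
      have h0 : (0:ℝ) < g (H ω) a := (hg01 _ a).1
      have hinv : (g (H ω) a)⁻¹ ≤ δ⁻¹ := inv_anti₀ hδ hga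
      simp only [norm_mul, Real.norm_eq_abs, hinddef]
      rw [abs_of_pos (inv_pos.mpr h0)]
      simp only [h, if_pos]
      calc (g (H ω) a)⁻¹ * (|(1:ℝ)| * |U ω - Q (H ω) a|)
          = (g (H ω) a)⁻¹ * |U ω - Q (H ω) a| := by simp
        _ ≤ δ⁻¹ * |U ω - Q (H ω) a| :=
            mul_le_mul_of_nonneg_right hinv (abs_nonneg _)
    · simp only [hinddef, h, if_false]
      simp [abs_nonneg, mul_nonneg (inv_nonneg.mpr hδ.le) (abs_nonneg _)]
  -- conditional expectation computations at the level of (MeasurableSpace.comap H inferInstance)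
  have h1 : μ[(fun ω => ind ω * U ω) | (MeasurableSpace.comap H inferInstance)] =ᵐ[μ] fun ω => g₀ (H ω) a * Q₀ (H ω) a :=
    (hQ₀cond a).symm
  have hQsm : StronglyMeasurable[(MeasurableSpace.comap H inferInstance)] (fun ω => Q (H ω) a) :=
    ((hQm a).comp hHmH).stronglyMeasurable
  have h2 : μ[(fun ω => Q (H ω) a * ind ω)|(MeasurableSpace.comap H inferInstance)] =ᵐ[μ] fun ω => Q (H ω) a * g₀ (H ω) a := by
    have hmul := condExp_mul_of_stronglyMeasurable_left hQsm hQind_int hind_int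
    refine hmul.trans ?_
    filter_upwards [hg₀cond a] with ω hω
    simp only [Pi.mul_apply]
    rw [← hω]
  have h3 : μ[(fun ω => ind ω * (U ω - Q (H ω) a))|(MeasurableSpace.comap H inferInstance)]
      =ᵐ[μ] fun ω => g₀ (H ω) a * Q₀ (H ω) a - Q (H ω) a * g₀ (H ω) a := by
    have heq : (fun ω => ind ω * (U ω - Q (H ω) a))
        = fun ω => ind ω * U ω - Q (H ω) a * ind ω := by funext ω; ring
    rw [heq]
    exact (condExp_sub hindU_int hQind_int _).trans (h1.sub h2)
  have hcsm : StronglyMeasurable[(MeasurableSpace.comap H inferInstance)] (fun ω => (g (H ω) a)⁻¹) :=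
    (((hgm a).comp hHmH).inv).stronglyMeasurable
  have h4 : μ[(fun ω => (g (H ω) a)⁻¹ * (ind ω * (U ω - Q (H ω) a)))|(MeasurableSpace.comap H inferInstance)]
      =ᵐ[μ] fun ω => (g (H ω) a)⁻¹ * (g₀ (H ω) a * Q₀ (H ω) a - Q (H ω) a * g₀ (H ω) a) := by
    have hmul := condExp_mul_of_stronglyMeasurable_left hcsm hT_int hindUQ_int
    refine hmul.trans ?_
    filter_upwards [h3] with ω hω
    simp only [Pi.mul_apply, hω]
  have h5 : μ[(fun ω => Q (H ω) a + (g (H ω) a)⁻¹ * (ind ω * (U ω - Q (H ω) a)))|(MeasurableSpace.comap H inferInstance)]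
      =ᵐ[μ] fun ω => Q (H ω) a
        + (g (H ω) a)⁻¹ * (g₀ (H ω) a * Q₀ (H ω) a - Q (H ω) a * g₀ (H ω) a) := by
    refine (condExp_add (hQint a) hT_int _).trans ?_
    have hQfix : μ[(fun ω => Q (H ω) a)|(MeasurableSpace.comap H inferInstance)] = fun ω => Q (H ω) a :=
      condExp_of_stronglyMeasurable hmH hQsm (hQint a)
    rw [hQfix]
    exact Filter.EventuallyEq.add Filter.EventuallyEq.rfl h4
  have h6 : μ[(fun ω => Q (H ω) a + (g (H ω) a)⁻¹ * (ind ω * (U ω - Q (H ω) a)))|(MeasurableSpace.comap H inferInstance)]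
      =ᵐ[μ] fun ω => Q₀ (H ω) a := by
    refine h5.trans (Filter.Eventually.of_forall fun ω => ?_)
    simp only []
    rcases hgQ with rfl | rfl
    · have h0 : g (H ω) a ≠ 0 := ne_of_gt (hg01 (H ω) a).1
      rw [show g (H ω) a * Q₀ (H ω) a - Q (H ω) a * g (H ω) a
          = g (H ω) a * (Q₀ (H ω) a - Q (H ω) a) by ring,
        inv_mul_cancel_left₀ h0]
      ring
    · ring
  -- tower property and restriction
  have hZcongr : μ[(fun ω => Q (H ω) a
        + (if A ω = a then (1:ℝ) else 0) / g (H ω) (A ω) * (U ω - Q (H ω) (A ω)))|(MeasurableSpace.comap (fun ω => f (H ω)) inferInstance)]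
      =ᵐ[μ] μ[(fun ω => Q (H ω) a + (g (H ω) a)⁻¹ * (ind ω * (U ω - Q (H ω) a)))|(MeasurableSpace.comap (fun ω => f (H ω)) inferInstance)] :=
    condExp_congr_ae (Filter.Eventually.of_forall hZ_eq)
  refine hZcongr.trans ?_
  have htower := condExp_condExp_of_le (μ := μ)
    (f := fun ω => Q (H ω) a + (g (H ω) a)⁻¹ * (ind ω * (U ω - Q (H ω) a))) hVH hmH
  refine htower.symm.trans ?_
  refine (condExp_congr_ae h6).trans ?_
  exact (hQV₀cond a).symm
end

section
/- Validity of the doubly robust blip loss: let W = Z(1, g₀, Q₀) − Z(0, g₀, Q₀) and assume W is square-integrable and B₀(V) is square-integrable, where B₀(v) = QV₀(v, 1) − QV₀(v, 0). Then for every measurable B : 𝒱 → ℝ with B(V) square-integrable, E[(W − B₀(V))²] ≤ E[(W − B(V))²]; that is, the expected blip loss over V-measurable functions is minimized at the blip B₀. -/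
open MeasureTheory Filter
open scoped ENNReal

/-- Auxiliary: the conditional expectation of the doubly robust score given the history
σ-algebra `m₂` is the difference of the outcome regressions. -/
theorem blip_aux_condexp {Ω : Type*} {m₂ mΩ : MeasurableSpace Ω} (hm2 : m₂ ≤ mΩ)
    (μ : Measure Ω) [IsProbabilityMeasure μ]
    (A : Ω → Bool) (hA : Measurable A)
    (U : Ω → ℝ) (hU : Integrable U μ)
    (G : Bool → Ω → ℝ) (hGm : ∀ a, StronglyMeasurable[m₂] (G a))
    (ε : ℝ) (hε : 0 < ε)
    (hpos : ∀ᵐ ω ∂μ, ε ≤ G (A ω) ω)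
    (Q : Bool → Ω → ℝ) (hQm : ∀ a, StronglyMeasurable[m₂] (Q a))
    (hQint : ∀ a, Integrable (Q a) μ)
    (hGcond : ∀ a : Bool, G a =ᵐ[μ] μ[(fun ω => if A ω = a then (1:ℝ) else 0) | m₂])
    (hQcond : ∀ a : Bool, (fun ω => G a ω * Q a ω)
      =ᵐ[μ] μ[(fun ω => (if A ω = a then (1:ℝ) else 0) * U ω) | m₂])
    (W : Ω → ℝ)
    (hW : ∀ ω, W ω =
      (Q true ω + (if A ω = true then (1:ℝ) else 0) / G (A ω) ω * (U ω - Q (A ω) ω))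
      - (Q false ω + (if A ω = false then (1:ℝ) else 0) / G (A ω) ω * (U ω - Q (A ω) ω)))
    (hW_int : Integrable W μ) :
    μ[W | m₂] =ᵐ[μ] fun ω => Q true ω - Q false ω := by
  -- indicator functions
  set ind : Bool → Ω → ℝ := fun a ω => if A ω = a then (1:ℝ) else 0 with hind_def
  have hind_meas : ∀ a, Measurable (ind a) := fun a =>
    Measurable.ite (hA (measurableSet_singleton a)) measurable_const measurable_const
  have hind_le : ∀ a ω, ‖ind a ω‖ ≤ 1 := by
    intro a ω
    by_cases h : A ω = a <;> simp [hind_def, h]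
  -- the correction terms
  set T : Bool → Ω → ℝ := fun a ω => (G a ω)⁻¹ * (ind a ω * (U ω - Q a ω)) with hT_def
  have hUQint : ∀ a : Bool, Integrable (fun ω => U ω - Q a ω) μ := fun a => by
    have := hU.sub (hQint a)
    exact this.congr (Eventually.of_forall fun ω => rfl)
  have hT_ae_bound : ∀ a, ∀ᵐ ω ∂μ, ‖T a ω‖ ≤ ε⁻¹ * ‖U ω - Q a ω‖ := by
    intro a
    filter_upwards [hpos] with ω hω
    by_cases h : A ω = a
    · have hg : ε ≤ G a ω := h ▸ hω
      have hg0 : 0 < G a ω := lt_of_lt_of_le hε hg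
      have hi : ind a ω = 1 := by simp [hind_def, h]
      simp only [hT_def, hi, one_mul]
      rw [norm_mul, norm_inv]
      have h1 : ‖G a ω‖⁻¹ ≤ ε⁻¹ := by
        rw [Real.norm_eq_abs, abs_of_pos hg0]
        gcongr
      exact mul_le_mul_of_nonneg_right h1 (norm_nonneg _)
    · simp only [hT_def, hind_def, if_neg h, zero_mul, mul_zero, norm_zero]
      positivity
  have hT_meas : ∀ a, AEStronglyMeasurable (T a) μ := by
    intro a
    have h1 : StronglyMeasurable (G a) := (hGm a).mono hm2
    have h2 : StronglyMeasurable (Q a) := (hQm a).mono hm2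
    exact ((h1.measurable.inv).aestronglyMeasurable.mul
      (((hind_meas a).aestronglyMeasurable.mul (hU.1.sub h2.aestronglyMeasurable))))
  have hT_int : ∀ a, Integrable (T a) μ := fun a =>
    Integrable.mono' (((hUQint a).norm).const_mul ε⁻¹) (hT_meas a) (hT_ae_bound a)
  -- conditional expectation of T a given m₂ is 0
  have hT_cond : ∀ a : Bool, μ[T a | m₂] =ᵐ[μ] 0 := by
    intro a
    have h2 : StronglyMeasurable (Q a) := (hQm a).mono hm2
    have hg_int : Integrable (fun ω => ind a ω * (U ω - Q a ω)) μ := by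
      refine Integrable.mono' ((hUQint a).norm)
        ((hind_meas a).aestronglyMeasurable.mul (hU.1.sub h2.aestronglyMeasurable)) ?_
      refine Eventually.of_forall fun ω => ?_
      rw [norm_mul]
      calc ‖ind a ω‖ * ‖U ω - Q a ω‖ ≤ 1 * ‖U ω - Q a ω‖ := by
            gcongr; exact hind_le a ω
        _ = ‖U ω - Q a ω‖ := one_mul _
    have hφ_sm : StronglyMeasurable[m₂] fun ω => (G a ω)⁻¹ :=
      ((hGm a).measurable.inv).stronglyMeasurable
    have hpull : μ[T a | m₂]
        =ᵐ[μ] (fun ω => (G a ω)⁻¹) * μ[(fun ω => ind a ω * (U ω - Q a ω)) | m₂] := by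
      have h := condExp_mul_of_stronglyMeasurable_left (μ := μ) hφ_sm
        (g := fun ω => ind a ω * (U ω - Q a ω))
        ((hT_int a).congr (Eventually.of_forall fun ω => rfl)) hg_int
      exact h
    have hinner : μ[(fun ω => ind a ω * (U ω - Q a ω)) | m₂] =ᵐ[μ] 0 := by
      have hsplit : (fun ω => ind a ω * (U ω - Q a ω))
          = fun ω => ind a ω * U ω - Q a ω * ind a ω := by
        funext ω; ring
      have hindU_int : Integrable (fun ω => ind a ω * U ω) μ := by
        refine Integrable.mono' hU.norm ((hind_meas a).aestronglyMeasurable.mul hU.1) ?_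
        refine Eventually.of_forall fun ω => ?_
        rw [norm_mul]
        calc ‖ind a ω‖ * ‖U ω‖ ≤ 1 * ‖U ω‖ := by gcongr; exact hind_le a ω
          _ = ‖U ω‖ := one_mul _
      have hQind_int : Integrable (fun ω => Q a ω * ind a ω) μ := by
        refine Integrable.mono' (hQint a).norm
          (h2.aestronglyMeasurable.mul (hind_meas a).aestronglyMeasurable) ?_
        refine Eventually.of_forall fun ω => ?_
        rw [norm_mul]
        calc ‖Q a ω‖ * ‖ind a ω‖ ≤ ‖Q a ω‖ * 1 := by gcongr; exact hind_le a ω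
          _ = ‖Q a ω‖ := mul_one _
      rw [hsplit]
      have h1 : μ[(fun ω => ind a ω * U ω - Q a ω * ind a ω) | m₂]
          =ᵐ[μ] μ[(fun ω => ind a ω * U ω) | m₂] - μ[(fun ω => Q a ω * ind a ω) | m₂] :=
        condExp_sub hindU_int hQind_int _
      have h2' : μ[(fun ω => Q a ω * ind a ω) | m₂] =ᵐ[μ] Q a * μ[ind a | m₂] := by
        have h := condExp_mul_of_stronglyMeasurable_left (μ := μ) (hQm a) (g := ind a)
          (hQind_int.congr (Eventually.of_forall fun ω => rfl))
          (Integrable.mono' (integrable_const 1) (hind_meas a).aestronglyMeasurable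
            (Eventually.of_forall fun ω => hind_le a ω))
        exact h
      refine h1.trans ?_
      filter_upwards [(hQcond a).symm, (hGcond a).symm, h2'] with ω h3ω h4ω h2ω
      simp only [Pi.sub_apply, Pi.zero_apply, Pi.mul_apply, hind_def] at *
      rw [h3ω, h2ω, h4ω]
      ring
    filter_upwards [hpull, hinner] with ω h1ω h2ω
    simp only [Pi.mul_apply, Pi.zero_apply] at *
    rw [h1ω, h2ω]
    ring
  -- W decomposes
  have hWdecomp : W = (fun ω => Q true ω - Q false ω) + fun ω => T true ω - T false ω := by
    funext ω
    simp only [Pi.add_apply]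
    rw [hW ω]
    rcases hAω : A ω with _ | _
    · simp only [hT_def, hind_def, hAω, if_true, if_false, reduceCtorEq, zero_div, zero_mul,
        mul_zero, one_mul]
      rw [div_eq_mul_inv]
      ring
    · simp only [hT_def, hind_def, hAω, if_true, if_false, reduceCtorEq, zero_div, zero_mul,
        mul_zero, one_mul]
      rw [div_eq_mul_inv]
      ring
  have hQdiff_int : Integrable (fun ω => Q true ω - Q false ω) μ := by
    have := (hQint true).sub (hQint false)
    exact this.congr (Eventually.of_forall fun ω => rfl)
  have h1 : μ[W | m₂]
      =ᵐ[μ] μ[(fun ω => Q true ω - Q false ω) | m₂] + μ[(fun ω => T true ω - T false ω) | m₂] := by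
    rw [hWdecomp]
    exact condExp_add hQdiff_int ((hT_int true).sub (hT_int false)) _
  have h2 : μ[(fun ω => Q true ω - Q false ω) | m₂] = fun ω => Q true ω - Q false ω :=
    condExp_of_stronglyMeasurable hm2
      (((hQm true).sub (hQm false) : StronglyMeasurable[m₂] _).mono le_rfl) hQdiff_int
  have h3 : μ[(fun ω => T true ω - T false ω) | m₂] =ᵐ[μ] μ[T true | m₂] - μ[T false | m₂] :=
    condExp_sub (hT_int true) (hT_int false) _
  filter_upwards [h1, h3, hT_cond true, hT_cond false] with ω h1ω h3ω h4ω h5ω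
  have h2ω := congrFun h2 ω
  simp only [Pi.add_apply, Pi.sub_apply, Pi.zero_apply] at *
  rw [h1ω, h2ω, h3ω, h4ω, h5ω]
  ring

/-- Auxiliary: L² minimization at the conditional expectation. -/
theorem blip_aux_l2min {Ω : Type*} {m₁ mΩ : MeasurableSpace Ω} (hm1 : m₁ ≤ mΩ)
    (μ : Measure Ω) [IsProbabilityMeasure μ]
    (W b c : Ω → ℝ)
    (hb : StronglyMeasurable[m₁] b) (hc : StronglyMeasurable[m₁] c)
    (hWL2 : MemLp W 2 μ) (hbL2 : MemLp b 2 μ) (hcL2 : MemLp c 2 μ)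
    (hcond : μ[W | m₁] =ᵐ[μ] b) :
    ∫ ω, (W ω - b ω)^2 ∂μ ≤ ∫ ω, (W ω - c ω)^2 ∂μ := by
  set R : Ω → ℝ := fun ω => W ω - b ω with hR_def
  set D : Ω → ℝ := fun ω => b ω - c ω with hD_def
  have hR_L2 : MemLp R 2 μ := hWL2.sub hbL2
  have hD_L2 : MemLp D 2 μ := hbL2.sub hcL2
  have hRD_int : Integrable (fun ω => D ω * R ω) μ := by
    have h := (hR_L2.smul hD_L2 (r := 1))
    exact (h.integrable le_rfl).congr (Eventually.of_forall fun ω => rfl)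
  have hR_int : Integrable R μ := hR_L2.integrable one_le_two
  have hW_int : Integrable W μ := hWL2.integrable one_le_two
  have hb_int : Integrable b μ := hbL2.integrable one_le_two
  have hD_smV : StronglyMeasurable[m₁] D := hb.sub hc
  have hR_condV : μ[R | m₁] =ᵐ[μ] 0 := by
    have h1 : μ[R | m₁] =ᵐ[μ] μ[W | m₁] - μ[b | m₁] := condExp_sub hW_int hb_int _
    have h2 : μ[b | m₁] = b := condExp_of_stronglyMeasurable hm1 hb hb_int
    filter_upwards [h1, hcond] with ω h1ω h3ω
    have h2ω := congrFun h2 ω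
    simp only [Pi.sub_apply, Pi.zero_apply] at *
    rw [h1ω, h2ω, h3ω]
    ring
  have hcross : ∫ ω, R ω * D ω ∂μ = 0 := by
    have hDR_int : Integrable (D * R) μ := hRD_int.congr (Eventually.of_forall fun ω => rfl)
    have h1 : μ[D * R | m₁] =ᵐ[μ] D * μ[R | m₁] :=
      condExp_mul_of_stronglyMeasurable_left hD_smV hDR_int hR_int
    have h2 : ∫ ω, (D * R) ω ∂μ = ∫ ω, (μ[D * R | m₁]) ω ∂μ := (integral_condExp hm1).symm
    have hzero : μ[D * R | m₁] =ᵐ[μ] 0 := by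
      filter_upwards [h1, hR_condV] with ω h1ω h2ω
      simp only [Pi.mul_apply, Pi.zero_apply] at *
      rw [h1ω, h2ω, mul_zero]
    have h3 : ∫ ω, (D * R) ω ∂μ = 0 := by
      rw [h2, integral_congr_ae hzero]
      simp
    calc ∫ ω, R ω * D ω ∂μ = ∫ ω, (D * R) ω ∂μ := by
          refine integral_congr_ae (Eventually.of_forall fun ω => ?_)
          simp [mul_comm]
      _ = 0 := h3
  have hR2_int : Integrable (fun ω => R ω ^ 2) μ := hR_L2.integrable_sq
  have hD2_int : Integrable (fun ω => D ω ^ 2) μ := hD_L2.integrable_sq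
  have hRHS : ∫ ω, (W ω - c ω) ^ 2 ∂μ
      = ∫ ω, R ω ^ 2 ∂μ + (2 * ∫ ω, R ω * D ω ∂μ + ∫ ω, D ω ^ 2 ∂μ) := by
    have hint2 : Integrable (fun ω => 2 * (R ω * D ω)) μ :=
      (hRD_int.congr (Eventually.of_forall fun ω => by simp [mul_comm])).const_mul 2
    have hstep : ∫ ω, (W ω - c ω) ^ 2 ∂μ
        = ∫ ω, (R ω ^ 2 + (2 * (R ω * D ω) + D ω ^ 2)) ∂μ := by
      refine integral_congr_ae (Eventually.of_forall fun ω => ?_)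
      simp only [hR_def, hD_def]; ring
    have hgint : Integrable (fun ω => 2 * (R ω * D ω) + D ω ^ 2) μ := hint2.add hD2_int
    rw [hstep, integral_add hR2_int hgint, integral_add hint2 hD2_int, integral_const_mul]
  have hD2_nonneg : (0:ℝ) ≤ ∫ ω, D ω ^ 2 ∂μ := integral_nonneg fun ω => sq_nonneg _
  calc ∫ ω, (W ω - b ω) ^ 2 ∂μ = ∫ ω, R ω ^ 2 ∂μ := rfl
    _ ≤ ∫ ω, R ω ^ 2 ∂μ + (2 * ∫ ω, R ω * D ω ∂μ + ∫ ω, D ω ^ 2 ∂μ) := by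
        rw [hcross]; linarith
    _ = ∫ ω, (W ω - c ω) ^ 2 ∂μ := hRHS.symm

/-- Validity of the doubly robust blip loss: with `W = Z(1, g₀, Q₀) − Z(0, g₀, Q₀)`
square-integrable and `B₀(V)` square-integrable, where `B₀(v) = QV₀(v,1) − QV₀(v,0)`,
for every measurable `B : 𝒱 → ℝ` with `B(V)` square-integrable,
`E[(W − B₀(V))²] ≤ E[(W − B(V))²]`. -/
theorem blip_loss_validity
    {Ω 𝓗 𝓥 : Type*} [MeasurableSpace Ω] [MeasurableSpace 𝓗] [MeasurableSpace 𝓥]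
    (μ : Measure Ω) [IsProbabilityMeasure μ]
    (H : Ω → 𝓗) (hH : Measurable H)
    (A : Ω → Bool) (hA : Measurable A)
    (U : Ω → ℝ) (hU : Integrable U μ)
    (g₀ : 𝓗 → Bool → ℝ) (hg₀m : ∀ a, Measurable fun h => g₀ h a)
    (hg₀01 : ∀ h a, g₀ h a ∈ Set.Icc (0:ℝ) 1)
    (hg₀cond : ∀ a : Bool, (fun ω => g₀ (H ω) a)
      =ᵐ[μ] μ[(fun ω => if A ω = a then (1:ℝ) else 0) | MeasurableSpace.comap H inferInstance])
    (ε : ℝ) (hε : 0 < ε)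
    (hpos : ∀ᵐ ω ∂μ, ε ≤ g₀ (H ω) (A ω))
    (Q₀ : 𝓗 → Bool → ℝ) (hQ₀m : ∀ a, Measurable fun h => Q₀ h a)
    (hQ₀int : ∀ a : Bool, Integrable (fun ω => Q₀ (H ω) a) μ)
    (hQ₀cond : ∀ a : Bool, (fun ω => g₀ (H ω) a * Q₀ (H ω) a)
      =ᵐ[μ] μ[(fun ω => (if A ω = a then (1:ℝ) else 0) * U ω)
              | MeasurableSpace.comap H inferInstance])
    -- restriction V = f(H)
    (f : 𝓗 → 𝓥) (hf : Measurable f)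
    (QV₀ : 𝓥 → Bool → ℝ) (hQV₀m : ∀ a, Measurable fun v => QV₀ v a)
    (hQV₀cond : ∀ a : Bool, (fun ω => QV₀ (f (H ω)) a)
      =ᵐ[μ] μ[(fun ω => Q₀ (H ω) a)
              | MeasurableSpace.comap (fun ω => f (H ω)) inferInstance])
    -- the doubly robust blip score W = Z(1, g₀, Q₀) − Z(0, g₀, Q₀)
    (W : Ω → ℝ)
    (hW : ∀ ω, W ω =
      (Q₀ (H ω) true
        + (if A ω = true then (1:ℝ) else 0) / g₀ (H ω) (A ω) * (U ω - Q₀ (H ω) (A ω)))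
      - (Q₀ (H ω) false
        + (if A ω = false then (1:ℝ) else 0) / g₀ (H ω) (A ω) * (U ω - Q₀ (H ω) (A ω))))
    (hWL2 : MemLp W 2 μ)
    (hB₀L2 : MemLp (fun ω => QV₀ (f (H ω)) true - QV₀ (f (H ω)) false) 2 μ) :
    ∀ B : 𝓥 → ℝ, Measurable B → MemLp (fun ω => B (f (H ω))) 2 μ →
      ∫ ω, (W ω - (QV₀ (f (H ω)) true - QV₀ (f (H ω)) false))^2 ∂μ
        ≤ ∫ ω, (W ω - B (f (H ω)))^2 ∂μ := by
  intro B hB hBL2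
  have hmH_le : MeasurableSpace.comap H inferInstance ≤ ‹MeasurableSpace Ω› := hH.comap_le
  have hmV_le : MeasurableSpace.comap (fun ω => f (H ω)) inferInstance
      ≤ ‹MeasurableSpace Ω› := (hf.comp hH).comap_le
  have hmV_mH : MeasurableSpace.comap (fun ω => f (H ω)) inferInstance
      ≤ MeasurableSpace.comap H inferInstance := by
    rw [show (fun ω => f (H ω)) = f ∘ H from rfl, ← MeasurableSpace.comap_comp]
    exact MeasurableSpace.comap_mono hf.comap_le
  have hHm : Measurable[MeasurableSpace.comap H inferInstance] H := Measurable.of_comap_le le_rfl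
  have hVm : Measurable[MeasurableSpace.comap (fun ω => f (H ω)) inferInstance]
      (fun ω => f (H ω)) := Measurable.of_comap_le le_rfl
  have hW_int : Integrable W μ := hWL2.integrable one_le_two
  -- step 1: conditional expectation of W given comap H
  have hW_condH : μ[W | MeasurableSpace.comap H inferInstance]
      =ᵐ[μ] fun ω => Q₀ (H ω) true - Q₀ (H ω) false :=
    blip_aux_condexp hmH_le μ A hA U hU (fun a ω => g₀ (H ω) a)
      (fun a => ((hg₀m a).comp hHm).stronglyMeasurable) ε hε hpos
      (fun a ω => Q₀ (H ω) a) (fun a => ((hQ₀m a).comp hHm).stronglyMeasurable)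
      (fun a => hQ₀int a) (fun a => hg₀cond a) (fun a => hQ₀cond a) W hW hW_int
  -- step 2: tower property
  have hW_condV : μ[W | MeasurableSpace.comap (fun ω => f (H ω)) inferInstance]
      =ᵐ[μ] fun ω => QV₀ (f (H ω)) true - QV₀ (f (H ω)) false := by
    have htower := (condExp_condExp_of_le (μ := μ) (f := W) hmV_mH hmH_le).symm
    have h1 : μ[μ[W | MeasurableSpace.comap H inferInstance]
        | MeasurableSpace.comap (fun ω => f (H ω)) inferInstance]
        =ᵐ[μ] μ[(fun ω => Q₀ (H ω) true - Q₀ (H ω) false)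
        | MeasurableSpace.comap (fun ω => f (H ω)) inferInstance] :=
      condExp_congr_ae hW_condH
    have h2 : μ[(fun ω => Q₀ (H ω) true - Q₀ (H ω) false)
        | MeasurableSpace.comap (fun ω => f (H ω)) inferInstance]
        =ᵐ[μ] μ[(fun ω => Q₀ (H ω) true)
            | MeasurableSpace.comap (fun ω => f (H ω)) inferInstance]
          - μ[(fun ω => Q₀ (H ω) false)
            | MeasurableSpace.comap (fun ω => f (H ω)) inferInstance] :=
      condExp_sub (hQ₀int true) (hQ₀int false) _
    refine htower.trans (h1.trans (h2.trans ?_))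
    filter_upwards [(hQV₀cond true).symm, (hQV₀cond false).symm] with ω hωt hωf
    simp only [Pi.sub_apply] at *
    rw [← hωt, ← hωf]
  -- step 3: L² minimization
  exact blip_aux_l2min hmV_le μ W
    (fun ω => QV₀ (f (H ω)) true - QV₀ (f (H ω)) false) (fun ω => B (f (H ω)))
    ((((hQV₀m true).comp hVm).sub ((hQV₀m false).comp hVm)).stronglyMeasurable)
    ((hB.comp hVm).stronglyMeasurable) hWL2 hB₀L2 hBL2 hW_condV
end

section
/- Validity of the doubly robust value loss for V-restricted policy search: let g : ℋ × {0,1} → (0,1] be measurable with g(H, A) ≥ δ almost surely for some δ > 0, and Q : ℋ × {0,1} → ℝ measurable with Q(H, a) integrable for each a. If g = g₀ or Q = Q₀, then for every measurable d : 𝒱 → {0,1}, the expected value loss satisfies E[−Z(d ∘ f, g, Q)] ≥ E[−Z(d₀ⱽ ∘ f, g, Q)], where d₀ⱽ(v) = 1{B₀(v) > 0}; that is, the expected value loss over V-restricted policies is minimized at the optimal V-restricted policy d₀ⱽ. -/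
/-!
The doubly robust score is `Q(H, π) + (g(H, π))⁻¹ · 1{A = π} (U − Q(H, π))`. Conditioning the
correction term on `H` replaces `1{A = a} (U − Q(H, a))` by `g₀(H, a) (Q₀(H, a) − Q(H, a))`, which
cancels the model error exactly when `g = g₀` and vanishes when `Q = Q₀`; either way the expected
score of a policy `π` is `E[Q₀(H, π(H))]`. For a policy `d ∘ f` that only sees `V = f(H)`, the tower
property turns this into `E[QV₀(V, d(V))]`, and `d₀ⱽ` maximises `QV₀(v, ·)` pointwise.
-/

open MeasureTheory

section EvalIndex

variable {Ω α β : Type*}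

theorem eval_index_eq_sum_indicator [Fintype α] [AddCommMonoid β] (Y : α → Ω → β) (π : Ω → α) :
    (fun ω => Y (π ω) ω) = ∑ a, {ω | π ω = a}.indicator (Y a) := by
  ext ω
  classical
  simp [Finset.sum_apply, Set.indicator_apply]

variable [MeasurableSpace α] [MeasurableSingletonClass α]

theorem Measurable.eval_index [Countable α] [MeasurableSpace β] {mΩ : MeasurableSpace Ω}
    {π : Ω → α} {Y : α → Ω → β} (hπ : Measurable π) (hY : ∀ a, Measurable (Y a)) :
    Measurable fun ω => Y (π ω) ω :=
  (measurable_from_prod_countable_right (f := fun p : α × Ω => Y p.1 p.2) hY).comp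
    (hπ.prodMk measurable_id)

variable [Fintype α] [NormedAddCommGroup β] {m m0 : MeasurableSpace Ω} {μ : Measure Ω}
  {π : Ω → α} {Y Z : α → Ω → β}

theorem Integrable.eval_index (hπ : Measurable π) (hY : ∀ a, Integrable (Y a) μ) :
    Integrable (fun ω => Y (π ω) ω) μ := by
  rw [eval_index_eq_sum_indicator]
  exact integrable_finsetSum' _ fun a _ => (hY a).indicator (hπ (measurableSet_singleton a))

theorem condExp_eval_index [NormedSpace ℝ β] [CompleteSpace β] (hm : m ≤ m0)
    (hπ : Measurable[m] π) (hY : ∀ a, Integrable (Y a) μ) (hZ : ∀ a, Z a =ᵐ[μ] μ[Y a | m]) :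
    μ[fun ω => Y (π ω) ω | m] =ᵐ[μ] fun ω => Z (π ω) ω := by
  have hπa (a : α) : MeasurableSet[m] {ω | π ω = a} := hπ (measurableSet_singleton a)
  rw [eval_index_eq_sum_indicator, eval_index_eq_sum_indicator]
  refine (condExp_finsetSum (fun a _ => (hY a).indicator (hm _ (hπa a))) m).trans ?_
  have hsummand (a : α) :
      μ[{ω | π ω = a}.indicator (Y a) | m] =ᵐ[μ] {ω | π ω = a}.indicator (Z a) :=
    (condExp_indicator (hY a) (hπa a)).trans (hZ a).symm.indicator
  filter_upwards [ae_all_iff.mpr hsummand] with ω hω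
  simp only [Finset.sum_apply, hω]

theorem integral_eval_index_eq_of_condExp (hm : m ≤ m0) [SigmaFinite (μ.trim hm)]
    [NormedSpace ℝ β] [CompleteSpace β] (hπ : Measurable[m] π) (hY : ∀ a, Integrable (Y a) μ)
    (hZ : ∀ a, Z a =ᵐ[μ] μ[Y a | m]) :
    ∫ ω, Y (π ω) ω ∂μ = ∫ ω, Z (π ω) ω ∂μ := by
  rw [← integral_condExp hm]
  exact integral_congr_ae (condExp_eval_index hm hπ hY hZ)

end EvalIndex

section PullOut

variable {Ω : Type*} {m m0 : MeasurableSpace Ω} {μ : Measure Ω}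

theorem integral_mul_eq_integral_mul_condExp (hm : m ≤ m0) [SigmaFinite (μ.trim hm)]
    {c Y : Ω → ℝ} (hc : StronglyMeasurable[m] c) (hcY : Integrable (c * Y) μ)
    (hY : Integrable Y μ) :
    ∫ ω, c ω * Y ω ∂μ = ∫ ω, c ω * (μ[Y | m]) ω ∂μ :=
  calc ∫ ω, c ω * Y ω ∂μ = ∫ ω, (μ[c * Y | m]) ω ∂μ := (integral_condExp hm).symm
    _ = ∫ ω, c ω * (μ[Y | m]) ω ∂μ :=
      integral_congr_ae (condExp_mul_of_stronglyMeasurable_left hc hcY hY)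

theorem condExp_mul_sub_of_stronglyMeasurable {X U r : Ω → ℝ} (hr : StronglyMeasurable[m] r)
    (hXU : Integrable (fun ω => X ω * U ω) μ) (hrX : Integrable (fun ω => r ω * X ω) μ)
    (hX : Integrable X μ) :
    μ[fun ω => X ω * (U ω - r ω) | m]
      =ᵐ[μ] fun ω => μ[fun ω => X ω * U ω | m] ω - r ω * μ[X | m] ω := by
  rw [show (fun ω => X ω * (U ω - r ω)) = (fun ω => X ω * U ω) - r * X by
    ext ω; simp only [Pi.sub_apply, Pi.mul_apply]; ring]
  exact (condExp_sub hXU hrX m).trans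
    (Filter.EventuallyEq.rfl.sub (condExp_mul_of_stronglyMeasurable_left hr hrX hX))

end PullOut

section DoublyRobust

variable {Ω α : Type*} [DecidableEq α]

/-- The doubly robust score `Z(π, g, Q)`, with `g a ω` and `q a ω` standing for `g(H ω, a)` and
`Q(H ω, a)`. -/
noncomputable def drScore (A π : Ω → α) (U : Ω → ℝ) (g q : α → Ω → ℝ) (ω : Ω) : ℝ :=
  q (π ω) ω + (if A ω = π ω then (1 : ℝ) else 0) / g (A ω) ω * (U ω - q (A ω) ω)

theorem drScore_eq (A π : Ω → α) (U : Ω → ℝ) (g q : α → Ω → ℝ) (ω : Ω) :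
    drScore A π U g q ω =
      q (π ω) ω + (g (π ω) ω)⁻¹ * ((if A ω = π ω then (1 : ℝ) else 0) * (U ω - q (π ω) ω)) := by
  unfold drScore
  split_ifs with h
  · rw [h]; ring
  · simp

variable [Fintype α] [MeasurableSpace α] [MeasurableSingletonClass α]
  {m m0 : MeasurableSpace Ω} {μ : Measure Ω} {A π : Ω → α} {U : Ω → ℝ} {p q₀ g q : α → Ω → ℝ}
  {δ : ℝ}

theorem integrable_inv_mul_ite_mul (hA : Measurable A) (hπ : Measurable π)
    (hU : Integrable U μ) (hg : ∀ a, Measurable (g a)) (hδ : 0 < δ)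
    (hgδ : ∀ᵐ ω ∂μ, δ ≤ g (A ω) ω) (hq : ∀ a, Integrable (q a) μ) :
    Integrable (fun ω =>
      (g (π ω) ω)⁻¹ * ((if A ω = π ω then (1 : ℝ) else 0) * (U ω - q (π ω) ω))) μ := by
  simp_rw [← mul_assoc]
  refine (hU.sub (Integrable.eval_index hπ hq)).bdd_mul (c := δ⁻¹) ?_ ?_
  · exact (Measurable.eval_index hπ fun a => (hg a).inv.mul
      (Measurable.ite (hA (measurableSet_singleton a)) measurable_const measurable_const))
      |>.aestronglyMeasurable
  · filter_upwards [hgδ] with ω hω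
    split_ifs with h
    · rw [← h, mul_one, norm_inv, Real.norm_of_nonneg (hδ.le.trans hω)]
      exact inv_anti₀ hδ hω
    · simp [hδ.le]

theorem integral_drScore_eq (hm : m ≤ m0) [IsFiniteMeasure μ] (hA : Measurable A)
    (hπ : Measurable[m] π) (hU : Integrable U μ)
    (hp : ∀ a, p a =ᵐ[μ] μ[fun ω => if A ω = a then (1 : ℝ) else 0 | m])
    (hq₀ : ∀ a, (fun ω => p a ω * q₀ a ω)
      =ᵐ[μ] μ[fun ω => (if A ω = a then (1 : ℝ) else 0) * U ω | m])
    (hq₀int : ∀ a, Integrable (q₀ a) μ)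
    (hg : ∀ a, Measurable[m] (g a)) (hgpos : ∀ a ω, 0 < g a ω) (hδ : 0 < δ)
    (hgδ : ∀ᵐ ω ∂μ, δ ≤ g (A ω) ω)
    (hq : ∀ a, Measurable[m] (q a)) (hqint : ∀ a, Integrable (q a) μ) (hgq : g = p ∨ q = q₀) :
    ∫ ω, drScore A π U g q ω ∂μ = ∫ ω, q₀ (π ω) ω ∂μ := by
  have hπ0 : Measurable π := hπ.mono hm le_rfl
  have hind (a : α) : Measurable fun ω => if A ω = a then (1 : ℝ) else 0 :=
    Measurable.ite (hA (measurableSet_singleton a)) measurable_const measurable_const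
  have hind_mul {F : Ω → ℝ} (a : α) (hF : Integrable F μ) :
      Integrable (fun ω => (if A ω = a then (1 : ℝ) else 0) * F ω) μ :=
    hF.bdd_mul (c := 1) (hind a).aestronglyMeasurable
      (ae_of_all μ fun ω => by split_ifs <;> simp)
  have hY (a : α) : Integrable (fun ω => (if A ω = a then (1 : ℝ) else 0) * (U ω - q a ω)) μ :=
    hind_mul a (hU.sub (hqint a))
  have hYcond (a : α) : (fun ω => p a ω * (q₀ a ω - q a ω))
      =ᵐ[μ] μ[fun ω => (if A ω = a then (1 : ℝ) else 0) * (U ω - q a ω) | m] := by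
    have hqA : Integrable (fun ω => q a ω * if A ω = a then (1 : ℝ) else 0) μ := by
      simpa only [mul_comm] using hind_mul a (hqint a)
    have hX : Integrable (fun ω => if A ω = a then (1 : ℝ) else 0) μ := by
      simpa using hind_mul a (integrable_const (1 : ℝ))
    filter_upwards [hp a, hq₀ a, condExp_mul_sub_of_stronglyMeasurable (hq a).stronglyMeasurable
      (hind_mul a hU) hqA hX] with ω h1 h2 h3
    rw [h3, ← h1, ← h2]
    ring
  have hc : StronglyMeasurable[m] fun ω => (g (π ω) ω)⁻¹ :=
    (Measurable.eval_index hπ hg).inv.stronglyMeasurable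
  have hipw := integrable_inv_mul_ite_mul hA hπ0 hU (fun a => (hg a).mono hm le_rfl) hδ hgδ hqint
  calc ∫ ω, drScore A π U g q ω ∂μ
      = ∫ ω, q (π ω) ω ∂μ + ∫ ω, (g (π ω) ω)⁻¹
          * ((if A ω = π ω then (1 : ℝ) else 0) * (U ω - q (π ω) ω)) ∂μ := by
        simp_rw [drScore_eq]
        exact integral_add (Integrable.eval_index hπ0 hqint) hipw
    _ = ∫ ω, q (π ω) ω ∂μ
          + ∫ ω, (g (π ω) ω)⁻¹ * (p (π ω) ω * (q₀ (π ω) ω - q (π ω) ω)) ∂μ := by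
        rw [integral_mul_eq_integral_mul_condExp hm hc hipw (Integrable.eval_index hπ0 hY)]
        exact congrArg _ (integral_congr_ae
          ((condExp_eval_index hm hπ hY hYcond).mono fun ω h => by simp only [h]))
    _ = ∫ ω, q₀ (π ω) ω ∂μ := by
        rcases hgq with rfl | rfl
        · simp_rw [inv_mul_cancel_left₀ (hgpos _ _).ne']
          rw [integral_sub (Integrable.eval_index hπ0 hq₀int) (Integrable.eval_index hπ0 hqint)]
          ring
        · simp

end DoublyRobust

theorem Bool.apply_le_apply_ite_pos_sub (x : Bool → ℝ) (b : Bool) :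
    x b ≤ x (if 0 < x true - x false then true else false) := by
  cases b <;> split_ifs <;> linarith

theorem value_loss_validity_general
    {Ω 𝓗 𝓥 : Type*} [MeasurableSpace Ω] [MeasurableSpace 𝓗] [MeasurableSpace 𝓥]
    (μ : Measure Ω) [IsProbabilityMeasure μ]
    (H : Ω → 𝓗) (hH : Measurable H)
    (A : Ω → Bool) (hA : Measurable A)
    (U : Ω → ℝ) (hU : Integrable U μ)
    (g₀ : 𝓗 → Bool → ℝ)
    (hg₀cond : ∀ a : Bool, (fun ω => g₀ (H ω) a)
      =ᵐ[μ] μ[(fun ω => if A ω = a then (1:ℝ) else 0) | MeasurableSpace.comap H inferInstance])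
    (Q₀ : 𝓗 → Bool → ℝ)
    (hQ₀int : ∀ a : Bool, Integrable (fun ω => Q₀ (H ω) a) μ)
    (hQ₀cond : ∀ a : Bool, (fun ω => g₀ (H ω) a * Q₀ (H ω) a)
      =ᵐ[μ] μ[(fun ω => (if A ω = a then (1:ℝ) else 0) * U ω)
              | MeasurableSpace.comap H inferInstance])
    -- restriction V = f(H)
    (f : 𝓗 → 𝓥) (hf : Measurable f)
    (QV₀ : 𝓥 → Bool → ℝ) (hQV₀m : ∀ a, Measurable fun v => QV₀ v a)
    (hQV₀cond : ∀ a : Bool, (fun ω => QV₀ (f (H ω)) a)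
      =ᵐ[μ] μ[(fun ω => Q₀ (H ω) a)
              | MeasurableSpace.comap (fun ω => f (H ω)) inferInstance])
    -- nuisance models
    (g : 𝓗 → Bool → ℝ) (hgm : ∀ a, Measurable fun h => g h a)
    (hg01 : ∀ h a, g h a ∈ Set.Ioc (0:ℝ) 1)
    (δ : ℝ) (hδ : 0 < δ) (hgpos : ∀ᵐ ω ∂μ, δ ≤ g (H ω) (A ω))
    (Q : 𝓗 → Bool → ℝ) (hQm : ∀ a, Measurable fun h => Q h a)
    (hQint : ∀ a : Bool, Integrable (fun ω => Q (H ω) a) μ)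
    (hgQ : g = g₀ ∨ Q = Q₀)
    -- the optimal V-restricted policy
    (d₀ : 𝓥 → Bool)
    (hd₀ : ∀ v, d₀ v = if 0 < QV₀ v true - QV₀ v false then true else false) :
    ∀ d : 𝓥 → Bool, Measurable d →
      ∫ ω, -(Q (H ω) (d (f (H ω)))
          + (if A ω = d (f (H ω)) then (1:ℝ) else 0) / g (H ω) (A ω)
            * (U ω - Q (H ω) (A ω))) ∂μ
      ≥ ∫ ω, -(Q (H ω) (d₀ (f (H ω)))
          + (if A ω = d₀ (f (H ω)) then (1:ℝ) else 0) / g (H ω) (A ω)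
            * (U ω - Q (H ω) (A ω))) ∂μ := by
  have hV : Measurable fun ω => f (H ω) := hf.comp hH
  have value (e : 𝓥 → Bool) (he : Measurable e) :
      ∫ ω, drScore A (fun ω => e (f (H ω))) U (fun a ω => g (H ω) a) (fun a ω => Q (H ω) a) ω ∂μ
        = ∫ ω, QV₀ (f (H ω)) (e (f (H ω))) ∂μ := by
    refine (integral_drScore_eq (π := fun ω => e (f (H ω))) (g := fun a ω => g (H ω) a)
      (p := fun a ω => g₀ (H ω) a) (q := fun a ω => Q (H ω) a) (q₀ := fun a ω => Q₀ (H ω) a)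
      hH.comap_le hA ((he.comp hf).comp (comap_measurable H)) hU
      hg₀cond hQ₀cond hQ₀int (fun a => (hgm a).comp (comap_measurable H))
      (fun a ω => (hg01 _ a).1) hδ hgpos (fun a => (hQm a).comp (comap_measurable H)) hQint
      (hgQ.imp (fun h => by rw [h]) (fun h => by rw [h]))).trans ?_
    exact integral_eval_index_eq_of_condExp hV.comap_le (he.comp (comap_measurable _)) hQ₀int
      hQV₀cond
  have hd₀m : Measurable d₀ := by
    rw [funext hd₀]
    exact Measurable.ite (measurableSet_lt measurable_const ((hQV₀m true).sub (hQV₀m false)))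
      measurable_const measurable_const
  have hQVint (e : 𝓥 → Bool) (he : Measurable e) :
      Integrable (fun ω => QV₀ (f (H ω)) (e (f (H ω)))) μ :=
    Integrable.eval_index (he.comp hV) fun a => integrable_condExp.congr (hQV₀cond a).symm
  intro d hd
  simp only [integral_neg, ge_iff_le, neg_le_neg_iff]
  refine (value d hd).trans_le ((integral_mono (hQVint d hd) (hQVint d₀ hd₀m) fun ω => ?_).trans_eq
    (value d₀ hd₀m).symm)
  rw [hd₀]
  exact Bool.apply_le_apply_ite_pos_sub (QV₀ (f (H ω))) _

/-- Validity of the doubly robust value loss for V-restricted policy search: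
if `g = g₀` or `Q = Q₀`, then for every measurable `d : 𝒱 → {0,1}`,
`E[−Z(d ∘ f, g, Q)] ≥ E[−Z(d₀ⱽ ∘ f, g, Q)]` where `d₀ⱽ(v) = 1{B₀(v) > 0}`. -/
theorem value_loss_validity
    {Ω 𝓗 𝓥 : Type*} [MeasurableSpace Ω] [MeasurableSpace 𝓗] [MeasurableSpace 𝓥]
    (μ : Measure Ω) [IsProbabilityMeasure μ]
    (H : Ω → 𝓗) (hH : Measurable H)
    (A : Ω → Bool) (hA : Measurable A)
    (U : Ω → ℝ) (hU : Integrable U μ)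
    (g₀ : 𝓗 → Bool → ℝ) (hg₀m : ∀ a, Measurable fun h => g₀ h a)
    (hg₀01 : ∀ h a, g₀ h a ∈ Set.Icc (0:ℝ) 1)
    (hg₀cond : ∀ a : Bool, (fun ω => g₀ (H ω) a)
      =ᵐ[μ] μ[(fun ω => if A ω = a then (1:ℝ) else 0) | MeasurableSpace.comap H inferInstance])
    (ε : ℝ) (hε : 0 < ε)
    (hpos : ∀ᵐ ω ∂μ, ε ≤ g₀ (H ω) (A ω))
    (Q₀ : 𝓗 → Bool → ℝ) (hQ₀m : ∀ a, Measurable fun h => Q₀ h a)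
    (hQ₀int : ∀ a : Bool, Integrable (fun ω => Q₀ (H ω) a) μ)
    (hQ₀cond : ∀ a : Bool, (fun ω => g₀ (H ω) a * Q₀ (H ω) a)
      =ᵐ[μ] μ[(fun ω => (if A ω = a then (1:ℝ) else 0) * U ω)
              | MeasurableSpace.comap H inferInstance])
    -- restriction V = f(H)
    (f : 𝓗 → 𝓥) (hf : Measurable f)
    (QV₀ : 𝓥 → Bool → ℝ) (hQV₀m : ∀ a, Measurable fun v => QV₀ v a)
    (hQV₀cond : ∀ a : Bool, (fun ω => QV₀ (f (H ω)) a)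
      =ᵐ[μ] μ[(fun ω => Q₀ (H ω) a)
              | MeasurableSpace.comap (fun ω => f (H ω)) inferInstance])
    -- nuisance models
    (g : 𝓗 → Bool → ℝ) (hgm : ∀ a, Measurable fun h => g h a)
    (hg01 : ∀ h a, g h a ∈ Set.Ioc (0:ℝ) 1)
    (δ : ℝ) (hδ : 0 < δ) (hgpos : ∀ᵐ ω ∂μ, δ ≤ g (H ω) (A ω))
    (Q : 𝓗 → Bool → ℝ) (hQm : ∀ a, Measurable fun h => Q h a)
    (hQint : ∀ a : Bool, Integrable (fun ω => Q (H ω) a) μ)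
    (hgQ : g = g₀ ∨ Q = Q₀)
    -- the optimal V-restricted policy
    (d₀ : 𝓥 → Bool)
    (hd₀ : ∀ v, d₀ v = if 0 < QV₀ v true - QV₀ v false then true else false) :
    ∀ d : 𝓥 → Bool, Measurable d →
      ∫ ω, -(Q (H ω) (d (f (H ω)))
          + (if A ω = d (f (H ω)) then (1:ℝ) else 0) / g (H ω) (A ω)
            * (U ω - Q (H ω) (A ω))) ∂μ
      ≥ ∫ ω, -(Q (H ω) (d₀ (f (H ω)))
          + (if A ω = d₀ (f (H ω)) then (1:ℝ) else 0) / g (H ω) (A ω)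
            * (U ω - Q (H ω) (A ω))) ∂μ :=
  value_loss_validity_general μ H hH A hA U hU g₀ hg₀cond Q₀ hQ₀int hQ₀cond f hf QV₀ hQV₀m hQV₀cond
    g hgm hg01 δ hδ hgpos Q hQm hQint hgQ d₀ hd₀
end

section
/- Equivalence of the value loss and the weighted classification loss up to a policy-free term: for measurable g : ℋ × {0,1} → (0,1], measurable Q : ℋ × {0,1} → ℝ, any measurable policy d : ℋ → {0,1}, and with W = Z(1, g, Q) − Z(0, g, Q), the following identity holds pointwise on Ω: Z(d, g, Q) = |W|·1{W > 0} + Z(0, g, Q) − |W|·1{d(H) ≠ 1{W > 0}}. In particular, the negative value loss −L̃(d) = Z(d, g, Q) and the negative weighted classification loss −|W|·1{d(H) ≠ 1{W > 0}} differ by a quantity not depending on d. -/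
/-! At each `ω` the score `Z(d, g, Q)` depends on `d` only through the chosen action
`b = d(H ω)`, so it is the value `f b` of the map `f a = Z(a, g, Q)(ω)` on `Bool`. For such a map,
with `W = f true - f false`, the better action is worth `f false + max W 0`, and the other action
loses exactly `|W|` against it. -/

open MeasureTheory

theorem Bool.apply_eq_abs_mul_ite_pos_add_apply_false_sub (f : Bool → ℝ) (b : Bool) {W : ℝ}
    (hW : W = f true - f false) :
    f b = |W| * (if 0 < W then 1 else 0) + f false
      - |W| * (if b ≠ (if 0 < W then true else false) then 1 else 0) := by
  by_cases hpos : 0 < W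
  · rw [abs_of_pos hpos]
    cases b
    · simp [hpos]
    · simp [hpos]; linarith
  · rw [abs_of_nonpos (not_lt.mp hpos)]
    cases b
    · simp [hpos]
    · simp [hpos]; linarith

theorem value_loss_eq_classification_loss_general
    {Ω 𝓗 : Type*}
    (H : Ω → 𝓗)
    (A : Ω → Bool)
    (U : Ω → ℝ)
    (g : 𝓗 → Bool → ℝ)
    (Q : 𝓗 → Bool → ℝ)
    (d : 𝓗 → Bool)
    -- W = Z(1, g, Q) − Z(0, g, Q)
    (W : Ω → ℝ)
    (hW : ∀ ω, W ω =
      (Q (H ω) true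
        + (if A ω = true then (1:ℝ) else 0) / g (H ω) (A ω) * (U ω - Q (H ω) (A ω)))
      - (Q (H ω) false
        + (if A ω = false then (1:ℝ) else 0) / g (H ω) (A ω) * (U ω - Q (H ω) (A ω)))) :
    ∀ ω : Ω,
      Q (H ω) (d (H ω))
        + (if A ω = d (H ω) then (1:ℝ) else 0) / g (H ω) (A ω) * (U ω - Q (H ω) (A ω))
      = |W ω| * (if 0 < W ω then (1:ℝ) else 0)
        + (Q (H ω) false
            + (if A ω = false then (1:ℝ) else 0) / g (H ω) (A ω) * (U ω - Q (H ω) (A ω)))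
        - |W ω| * (if d (H ω) ≠ (if 0 < W ω then true else false) then (1:ℝ) else 0) := fun ω =>
  Bool.apply_eq_abs_mul_ite_pos_add_apply_false_sub
    (fun a => Q (H ω) a + (if A ω = a then (1:ℝ) else 0) / g (H ω) (A ω) * (U ω - Q (H ω) (A ω)))
    (d (H ω)) (hW ω)

/-- Equivalence of the value loss and the weighted classification loss up to a
policy-free term: with `W = Z(1, g, Q) − Z(0, g, Q)`, the identity
`Z(d, g, Q) = |W|·1{W > 0} + Z(0, g, Q) − |W|·1{d(H) ≠ 1{W > 0}}`
holds pointwise on `Ω`. -/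
theorem value_loss_eq_classification_loss
    {Ω 𝓗 : Type*} [MeasurableSpace Ω] [MeasurableSpace 𝓗]
    (μ : Measure Ω) [IsProbabilityMeasure μ]
    (H : Ω → 𝓗) (hH : Measurable H)
    (A : Ω → Bool) (hA : Measurable A)
    (U : Ω → ℝ) (hU : Integrable U μ)
    (g : 𝓗 → Bool → ℝ) (hgm : ∀ a, Measurable fun h => g h a)
    (hg01 : ∀ h a, g h a ∈ Set.Ioc (0:ℝ) 1)
    (Q : 𝓗 → Bool → ℝ) (hQm : ∀ a, Measurable fun h => Q h a)
    (d : 𝓗 → Bool) (hd : Measurable d)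
    -- W = Z(1, g, Q) − Z(0, g, Q)
    (W : Ω → ℝ)
    (hW : ∀ ω, W ω =
      (Q (H ω) true
        + (if A ω = true then (1:ℝ) else 0) / g (H ω) (A ω) * (U ω - Q (H ω) (A ω)))
      - (Q (H ω) false
        + (if A ω = false then (1:ℝ) else 0) / g (H ω) (A ω) * (U ω - Q (H ω) (A ω)))) :
    ∀ ω : Ω,
      Q (H ω) (d (H ω))
        + (if A ω = d (H ω) then (1:ℝ) else 0) / g (H ω) (A ω) * (U ω - Q (H ω) (A ω))
      = |W ω| * (if 0 < W ω then (1:ℝ) else 0)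
        + (Q (H ω) false
            + (if A ω = false then (1:ℝ) else 0) / g (H ω) (A ω) * (U ω - Q (H ω) (A ω)))
        - |W ω| * (if d (H ω) ≠ (if 0 < W ω then true else false) then (1:ℝ) else 0) :=
  value_loss_eq_classification_loss_general H A U g Q d W hW
end

section
/- Fisher consistency of the doubly robust weighted classification (0-1) loss: let g : ℋ × {0,1} → (0,1] be measurable with g(H, A) ≥ δ almost surely for some δ > 0, and Q : ℋ × {0,1} → ℝ measurable with Q(H, a) integrable for each a. Suppose g = g₀ or Q = Q₀, and let W = Z(1, g, Q) − Z(0, g, Q). Then for every measurable d : 𝒱 → {0,1}, E[|W|·1{d(V) ≠ 1{W > 0}}] ≥ E[|W|·1{d₀ⱽ(V) ≠ 1{W > 0}}], where d₀ⱽ(v) = 1{B₀(v) > 0}; that is, the expected weighted classification loss over V-restricted policies is minimized at the optimal V-restricted policy d₀ⱽ. -/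
open MeasureTheory

/-- Fisher consistency of the doubly robust weighted classification (0-1) loss:
if `g = g₀` or `Q = Q₀`, and `W = Z(1, g, Q) − Z(0, g, Q)`, then for every measurable
`d : 𝒱 → {0,1}`, `E[|W|·1{d(V) ≠ 1{W > 0}}] ≥ E[|W|·1{d₀ⱽ(V) ≠ 1{W > 0}}]`,
where `d₀ⱽ(v) = 1{B₀(v) > 0}`. -/
theorem classification_loss_fisher_consistency
    {Ω 𝓗 𝓥 : Type*} [MeasurableSpace Ω] [MeasurableSpace 𝓗] [MeasurableSpace 𝓥]
    (μ : Measure Ω) [IsProbabilityMeasure μ]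
    (H : Ω → 𝓗) (hH : Measurable H)
    (A : Ω → Bool) (hA : Measurable A)
    (U : Ω → ℝ) (hU : Integrable U μ)
    (g₀ : 𝓗 → Bool → ℝ) (hg₀m : ∀ a, Measurable fun h => g₀ h a)
    (hg₀01 : ∀ h a, g₀ h a ∈ Set.Icc (0:ℝ) 1)
    (hg₀cond : ∀ a : Bool, (fun ω => g₀ (H ω) a)
      =ᵐ[μ] μ[(fun ω => if A ω = a then (1:ℝ) else 0) | MeasurableSpace.comap H inferInstance])
    (ε : ℝ) (hε : 0 < ε)
    (hpos : ∀ᵐ ω ∂μ, ε ≤ g₀ (H ω) (A ω))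
    (Q₀ : 𝓗 → Bool → ℝ) (hQ₀m : ∀ a, Measurable fun h => Q₀ h a)
    (hQ₀int : ∀ a : Bool, Integrable (fun ω => Q₀ (H ω) a) μ)
    (hQ₀cond : ∀ a : Bool, (fun ω => g₀ (H ω) a * Q₀ (H ω) a)
      =ᵐ[μ] μ[(fun ω => (if A ω = a then (1:ℝ) else 0) * U ω)
              | MeasurableSpace.comap H inferInstance])
    -- restriction V = f(H)
    (f : 𝓗 → 𝓥) (hf : Measurable f)
    (QV₀ : 𝓥 → Bool → ℝ) (hQV₀m : ∀ a, Measurable fun v => QV₀ v a)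
    (hQV₀cond : ∀ a : Bool, (fun ω => QV₀ (f (H ω)) a)
      =ᵐ[μ] μ[(fun ω => Q₀ (H ω) a)
              | MeasurableSpace.comap (fun ω => f (H ω)) inferInstance])
    -- nuisance models
    (g : 𝓗 → Bool → ℝ) (hgm : ∀ a, Measurable fun h => g h a)
    (hg01 : ∀ h a, g h a ∈ Set.Ioc (0:ℝ) 1)
    (δ : ℝ) (hδ : 0 < δ) (hgpos : ∀ᵐ ω ∂μ, δ ≤ g (H ω) (A ω))
    (Q : 𝓗 → Bool → ℝ) (hQm : ∀ a, Measurable fun h => Q h a)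
    (hQint : ∀ a : Bool, Integrable (fun ω => Q (H ω) a) μ)
    (hgQ : g = g₀ ∨ Q = Q₀)
    -- W = Z(1, g, Q) − Z(0, g, Q)
    (W : Ω → ℝ)
    (hW : ∀ ω, W ω =
      (Q (H ω) true
        + (if A ω = true then (1:ℝ) else 0) / g (H ω) (A ω) * (U ω - Q (H ω) (A ω)))
      - (Q (H ω) false
        + (if A ω = false then (1:ℝ) else 0) / g (H ω) (A ω) * (U ω - Q (H ω) (A ω))))
    -- the optimal V-restricted policy
    (d₀ : 𝓥 → Bool)
    (hd₀ : ∀ v, d₀ v = if 0 < QV₀ v true - QV₀ v false then true else false) :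
    ∀ d : 𝓥 → Bool, Measurable d →
      ∫ ω, |W ω| * (if d (f (H ω)) ≠ (if 0 < W ω then true else false)
            then (1:ℝ) else 0) ∂μ
      ≥ ∫ ω, |W ω| * (if d₀ (f (H ω)) ≠ (if 0 < W ω then true else false)
            then (1:ℝ) else 0) ∂μ := by
  intro d hd
  classical
  rename_i mΩ m𝓗i m𝓥i hPμ
  -- σ-algebras
  set m : MeasurableSpace Ω := MeasurableSpace.comap H inferInstance with hm_def
  set mV : MeasurableSpace Ω := MeasurableSpace.comap (fun ω => f (H ω)) inferInstance
    with hmV_def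
  letI : MeasurableSpace Ω := mΩ
  have hm_le : m ≤ mΩ := hH.comap_le
  have hmV_le : mV ≤ mΩ := (hf.comp hH).comap_le
  have hmV_le_m : mV ≤ m := by
    rw [hmV_def, hm_def]
    have h1 : (fun ω => f (H ω)) = f ∘ H := rfl
    rw [h1, ← MeasurableSpace.comap_comp]
    exact MeasurableSpace.comap_mono hf.comap_le
  haveI : SigmaFinite (μ.trim hm_le) := by
    haveI := isFiniteMeasure_trim (μ := μ) hm_le
    infer_instance
  haveI : SigmaFinite (μ.trim hmV_le) := by
    haveI := isFiniteMeasure_trim (μ := μ) hmV_le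
    infer_instance
  have hHm : Measurable[m] H := measurable_iff_comap_le.mpr le_rfl
  -- basic measurability
  have hgHa : ∀ a : Bool, Measurable[mΩ] fun ω => g (H ω) a := fun a => (hgm a).comp hH
  have hgne : ∀ ω a, g (H ω) a ≠ 0 := fun ω a => (hg01 (H ω) a).1.ne'
  have hindm : ∀ a : Bool, Measurable[mΩ] fun ω => (if A ω = a then (1:ℝ) else 0) := by
    intro a
    exact Measurable.ite (hA (measurableSet_singleton a)) measurable_const measurable_const
  have hUae : AEMeasurable U μ := hU.1.aemeasurable
  -- correction terms
  set T : Bool → Ω → ℝ :=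
    fun a ω => (if A ω = a then (1:ℝ) else 0) / g (H ω) a * (U ω - Q (H ω) a) with hT_def
  have hTae : ∀ a, AEMeasurable (T a) μ := fun a =>
    ((hindm a).div (hgHa a)).aemeasurable.mul (hUae.sub ((hQm a).comp hH).aemeasurable)
  -- integrability of the indicator-times-residual
  have hind_int : ∀ a : Bool,
      Integrable (fun ω => (if A ω = a then (1:ℝ) else 0) * (U ω - Q (H ω) a)) μ := by
    intro a
    exact (hU.sub (hQint a)).bdd_mul (hindm a).aestronglyMeasurable
      (c := 1) (Filter.Eventually.of_forall fun ω => by by_cases h : A ω = a <;> simp [h])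
  -- integrability of T a
  have hT_int : ∀ a, Integrable (T a) μ := by
    intro a
    refine Integrable.mono' (((hU.abs.add (hQint a).abs)).const_mul δ⁻¹)
      (hTae a).aestronglyMeasurable ?_
    filter_upwards [hgpos] with ω hω
    by_cases h : A ω = a
    · have hga : δ ≤ g (H ω) a := by rw [← h]; exact hω
      have hgpos' : 0 < g (H ω) a := (hg01 (H ω) a).1
      have hTval : T a ω = 1 / g (H ω) a * (U ω - Q (H ω) a) := by
        rw [hT_def]; simp [h]
      rw [hTval, Real.norm_eq_abs, abs_mul, abs_of_pos (show (0:ℝ) < 1 / g (H ω) a by positivity)]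
      have h1 : |U ω - Q (H ω) a| ≤ |U ω| + |Q (H ω) a| := abs_sub _ _
      have h2 : (1 : ℝ) / g (H ω) a ≤ δ⁻¹ := by
        rw [one_div]
        exact inv_anti₀ hδ hga
      exact mul_le_mul h2 h1 (abs_nonneg _) (le_of_lt (by positivity))
    · have hTval : T a ω = 0 := by
        rw [hT_def]; simp [h]
      rw [hTval]
      simp
      positivity
  -- m-strongly-measurable helpers
  have hginv_sm : ∀ a : Bool, StronglyMeasurable[m] fun ω => (g (H ω) a)⁻¹ := fun a =>
    (((hgm a).comp hHm).inv).stronglyMeasurable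
  have hQ_sm : ∀ a : Bool, StronglyMeasurable[m] fun ω => Q (H ω) a := fun a =>
    ((hQm a).comp hHm).stronglyMeasurable
  -- conditional expectation of T a
  have key : ∀ a : Bool, μ[T a | m]
      =ᵐ[μ] fun ω => (g (H ω) a)⁻¹ * g₀ (H ω) a * (Q₀ (H ω) a - Q (H ω) a) := by
    intro a
    have hTeq : T a = (fun ω => (g (H ω) a)⁻¹)
        * (fun ω => (if A ω = a then (1:ℝ) else 0) * (U ω - Q (H ω) a)) := by
      funext ω
      simp only [hT_def, Pi.mul_apply]
      ring
    have h1 := condExp_mul_of_stronglyMeasurable_left (μ := μ) (hginv_sm a)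
      (by rw [← hTeq]; exact hT_int a) (hind_int a)
    -- inner conditional expectation
    have hiU_int : Integrable (fun ω => (if A ω = a then (1:ℝ) else 0) * U ω) μ :=
      hU.bdd_mul (hindm a).aestronglyMeasurable
        (c := 1) (Filter.Eventually.of_forall fun ω => by by_cases h : A ω = a <;> simp [h])
    have hiQ_int : Integrable (fun ω => (if A ω = a then (1:ℝ) else 0) * Q (H ω) a) μ :=
      (hQint a).bdd_mul (hindm a).aestronglyMeasurable
        (c := 1) (Filter.Eventually.of_forall fun ω => by by_cases h : A ω = a <;> simp [h])
    have hinner : μ[(fun ω => (if A ω = a then (1:ℝ) else 0) * (U ω - Q (H ω) a)) | m]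
        =ᵐ[μ] fun ω => g₀ (H ω) a * (Q₀ (H ω) a - Q (H ω) a) := by
      have hsplit : (fun ω => (if A ω = a then (1:ℝ) else 0) * (U ω - Q (H ω) a))
          = fun ω => (fun ω => (if A ω = a then (1:ℝ) else 0) * U ω) ω
            - (fun ω => (if A ω = a then (1:ℝ) else 0) * Q (H ω) a) ω := by
        funext ω; ring
      rw [hsplit]
      refine (condExp_sub hiU_int hiQ_int m).trans ?_
      have h2 : μ[(fun ω => (if A ω = a then (1:ℝ) else 0) * Q (H ω) a) | m]
          =ᵐ[μ] fun ω => Q (H ω) a * g₀ (H ω) a := by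
        have hcomm : (fun ω => (if A ω = a then (1:ℝ) else 0) * Q (H ω) a)
            = (fun ω => Q (H ω) a) * (fun ω => (if A ω = a then (1:ℝ) else 0)) := by
          funext ω; simp [mul_comm]
        have hind_int1 : Integrable (fun ω => (if A ω = a then (1:ℝ) else 0)) μ := by
          refine Integrable.mono' (integrable_const (1:ℝ))
            (hindm a).aestronglyMeasurable ?_
          filter_upwards with ω
          by_cases h : A ω = a <;> simp [h]
        rw [hcomm]
        refine (condExp_mul_of_stronglyMeasurable_left (μ := μ) (hQ_sm a)
          (by rw [← hcomm]; exact hiQ_int) hind_int1).trans ?_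
        filter_upwards [hg₀cond a] with ω hω
        simp only [Pi.mul_apply]
        rw [← hω]
      filter_upwards [(hQ₀cond a).symm, h2] with ω hω1 hω2
      simp only [Pi.sub_apply]
      rw [hω1, hω2]
      ring
    rw [hTeq]
    refine h1.trans ?_
    filter_upwards [hinner] with ω hω
    simp only [Pi.mul_apply]
    rw [hω]
    ring
  -- decomposition of W
  have hWdec : W = fun ω => (Q (H ω) true - Q (H ω) false) + T true ω - T false ω := by
    funext ω
    rw [hW ω]
    cases h : A ω <;> simp only [hT_def, h] <;> simp <;> ring
  have hW_int : Integrable W μ := by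
    rw [hWdec]
    exact (((hQint true).sub (hQint false)).add (hT_int true)).sub (hT_int false)
  have hWae : AEMeasurable W μ := by
    rw [hWdec]
    exact ((((hQm true).comp hH).sub ((hQm false).comp hH)).aemeasurable.add
      (hTae true)).sub (hTae false)
  -- conditional expectation of W given m
  have hC_sm : StronglyMeasurable[m] fun ω => Q (H ω) true - Q (H ω) false :=
    (hQ_sm true).sub (hQ_sm false)
  have hC_int : Integrable (fun ω => Q (H ω) true - Q (H ω) false) μ :=
    (hQint true).sub (hQint false)
  have hWcond : μ[W | m] =ᵐ[μ] fun ω => Q₀ (H ω) true - Q₀ (H ω) false := by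
    rw [hWdec]
    have hstep : μ[(fun ω => (Q (H ω) true - Q (H ω) false) + T true ω - T false ω) | m]
        =ᵐ[μ] fun ω => (Q (H ω) true - Q (H ω) false)
          + (μ[T true | m]) ω - (μ[T false | m]) ω := by
      have e1 : (fun ω => (Q (H ω) true - Q (H ω) false) + T true ω - T false ω)
          = fun ω => ((fun ω => Q (H ω) true - Q (H ω) false) ω + T true ω) - T false ω := rfl
      rw [e1]
      refine (condExp_sub (hC_int.add (hT_int true)) (hT_int false) m).trans ?_
      have h3 := condExp_add (μ := μ) (m := m) hC_int (hT_int true)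
      have h4 := condExp_of_stronglyMeasurable hm_le hC_sm hC_int
      filter_upwards [h3] with ω hω3
      simp only [Pi.sub_apply, Pi.add_apply] at *
      rw [hω3, h4]
    refine hstep.trans ?_
    rcases hgQ with hg | hQe
    · subst hg
      filter_upwards [key true, key false] with ω h1 h0
      rw [h1, h0]
      rw [inv_mul_cancel₀ (hgne ω true), inv_mul_cancel₀ (hgne ω false)]
      ring
    · subst hQe
      filter_upwards [key true, key false] with ω h1 h0
      rw [h1, h0]
      ring
  -- integrability of QV₀ ∘ V
  have hB_int : ∀ a : Bool, Integrable (fun ω => QV₀ (f (H ω)) a) μ := fun a =>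
    integrable_condExp.congr (hQV₀cond a).symm
  -- key set-integral identity
  have hset : ∀ S : Set Ω, MeasurableSet[mV] S →
      ∫ ω in S, W ω ∂μ
        = ∫ ω in S, (QV₀ (f (H ω)) true - QV₀ (f (H ω)) false) ∂μ := by
    intro S hS
    have hSm : MeasurableSet[m] S := hmV_le_m S hS
    have hSamb : MeasurableSet[mΩ] S := hm_le S hSm
    have h1 : ∫ ω in S, W ω ∂μ = ∫ ω in S, (Q₀ (H ω) true - Q₀ (H ω) false) ∂μ := by
      rw [← setIntegral_condExp hm_le hW_int hSm]
      exact setIntegral_congr_ae hSamb (hWcond.mono fun ω h _ => h)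
    have h2 : ∀ a : Bool, ∫ ω in S, Q₀ (H ω) a ∂μ = ∫ ω in S, QV₀ (f (H ω)) a ∂μ := by
      intro a
      rw [← setIntegral_condExp hmV_le (hQ₀int a) hS]
      exact (setIntegral_congr_ae hSamb ((hQV₀cond a).mono fun ω h _ => h)).symm
    rw [h1]
    rw [integral_sub ((hQ₀int true).integrableOn) ((hQ₀int false).integrableOn),
      integral_sub ((hB_int true).integrableOn) ((hB_int false).integrableOn),
      h2 true, h2 false]
  -- notation for the final part
  set B : Ω → ℝ := fun ω => QV₀ (f (H ω)) true - QV₀ (f (H ω)) false with hB_def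
  have hBm : Measurable[mΩ] B :=
    (((hQV₀m true).comp (hf.comp hH)).sub ((hQV₀m false).comp (hf.comp hH)))
  have hB_int' : Integrable B μ := (hB_int true).sub (hB_int false)
  set s : Ω → Bool := fun ω => if 0 < W ω then true else false with hs_def
  -- χ c : the 0-1 loss indicator; ind c : indicator of {c(V) = true}
  set χ : (𝓥 → Bool) → Ω → ℝ :=
    fun c ω => if c (f (H ω)) ≠ s ω then (1:ℝ) else 0 with hχ_def
  set ind : (𝓥 → Bool) → Ω → ℝ :=
    fun c ω => if c (f (H ω)) = true then (1:ℝ) else 0 with hind_def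
  have hsae : AEMeasurable s μ := by
    have hmeas : Measurable fun w : ℝ => if 0 < w then true else false :=
      Measurable.ite measurableSet_Ioi measurable_const measurable_const
    exact hmeas.comp_aemeasurable hWae
  have hχae : ∀ c : 𝓥 → Bool, Measurable c → AEMeasurable (χ c) μ := by
    intro c hc
    have hpair : AEMeasurable (fun ω => (c (f (H ω)), s ω)) μ :=
      ((hc.comp (hf.comp hH)).aemeasurable).prodMk hsae
    have hmeas : Measurable fun p : Bool × Bool => if p.1 ≠ p.2 then (1:ℝ) else 0 :=
      measurable_of_countable _
    exact hmeas.comp_aemeasurable hpair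
  have hloss_int : ∀ c : 𝓥 → Bool, Measurable c →
      Integrable (fun ω => |W ω| * χ c ω) μ := by
    intro c hc
    refine Integrable.mono' hW_int.abs
      ((continuous_abs.measurable.comp_aemeasurable hWae).mul (hχae c hc)).aestronglyMeasurable ?_
    filter_upwards with ω
    rw [hχ_def, Real.norm_eq_abs]
    by_cases h : c (f (H ω)) ≠ s ω <;> simp [h, abs_abs, abs_nonneg]
  have hindW_int : ∀ c : 𝓥 → Bool, Measurable c →
      Integrable (fun ω => ind c ω * W ω) μ := by
    intro c hc
    refine hW_int.bdd_mul ?_ (c := 1) (Filter.Eventually.of_forall fun ω => by by_cases h : c (f (H ω)) = true <;> simp [hind_def, h])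
    exact (Measurable.ite ((hc.comp (hf.comp hH)) (measurableSet_singleton true))
      measurable_const measurable_const).aestronglyMeasurable
  have hindB_int : ∀ c : 𝓥 → Bool, Measurable c →
      Integrable (fun ω => ind c ω * B ω) μ := by
    intro c hc
    refine hB_int'.bdd_mul ?_ (c := 1) (Filter.Eventually.of_forall fun ω => by by_cases h : c (f (H ω)) = true <;> simp [hind_def, h])
    exact (Measurable.ite ((hc.comp (hf.comp hH)) (measurableSet_singleton true))
      measurable_const measurable_const).aestronglyMeasurable
  -- ∫ ind c * W = ∫ ind c * B for measurable c
  have hswap : ∀ c : 𝓥 → Bool, Measurable c →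
      ∫ ω, ind c ω * W ω ∂μ = ∫ ω, ind c ω * B ω ∂μ := by
    intro c hc
    set S : Set Ω := (fun ω => f (H ω)) ⁻¹' (c ⁻¹' {true}) with hS_def
    have hSmV : MeasurableSet[mV] S :=
      MeasurableSpace.measurableSet_comap.mpr ⟨c ⁻¹' {true}, hc (measurableSet_singleton true), rfl⟩
    have hSamb : MeasurableSet[mΩ] S := hmV_le S hSmV
    have e1 : ∀ (φ : Ω → ℝ), (fun ω => ind c ω * φ ω) = S.indicator φ := by
      intro φ
      funext ω
      by_cases h : c (f (H ω)) = true
      · have hmem : ω ∈ S := by simp [hS_def, h]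
        rw [hind_def, Set.indicator_of_mem hmem]
        simp [h]
      · have hmem : ω ∉ S := by simp [hS_def, h]
        rw [hind_def, Set.indicator_of_notMem hmem]
        simp [h]
    rw [e1 W, e1 B, integral_indicator hSamb, integral_indicator hSamb]
    exact hset S hSmV
  -- pointwise identity: |W| χ d − |W| χ d₀ = (ind d₀ − ind d) * W
  have hpt : ∀ ω, |W ω| * χ d ω - |W ω| * χ d₀ ω = (ind d₀ ω - ind d ω) * W ω := by
    intro ω
    rcases lt_or_ge 0 (W ω) with h | h
    · have hs1 : s ω = true := by rw [hs_def]; simp [h]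
      have habs : |W ω| = W ω := abs_of_pos h
      cases h1 : d (f (H ω)) <;> cases h2 : d₀ (f (H ω)) <;>
        simp [hχ_def, hind_def, h1, h2, hs1, habs] <;> ring
    · have hs1 : s ω = false := by rw [hs_def]; simp [not_lt.mpr h]
      have habs : |W ω| = -W ω := abs_of_nonpos h
      cases h1 : d (f (H ω)) <;> cases h2 : d₀ (f (H ω)) <;>
        simp [hχ_def, hind_def, h1, h2, hs1, habs] <;> ring
  -- pointwise nonnegativity of (ind d₀ − ind d) * B
  have hd₀m : Measurable d₀ := by
    have : d₀ = fun v => if 0 < QV₀ v true - QV₀ v false then true else false := funext hd₀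
    rw [this]
    exact Measurable.ite
      (measurableSet_lt measurable_const ((hQV₀m true).sub (hQV₀m false)))
      measurable_const measurable_const
  have hBnn : ∀ ω, 0 ≤ (ind d₀ ω - ind d ω) * B ω := by
    intro ω
    have hindd : ind d ω = 0 ∨ ind d ω = 1 := by
      rw [hind_def]; by_cases h : d (f (H ω)) = true <;> simp [h]
    rcases lt_or_ge 0 (B ω) with h | h
    · have : d₀ (f (H ω)) = true := by rw [hd₀]; simp [hB_def ▸ h]
      have h0 : ind d₀ ω = 1 := by rw [hind_def]; simp [this]
      rcases hindd with h1 | h1 <;> rw [h0, h1] <;> simp [le_of_lt h]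
    · have : d₀ (f (H ω)) = false := by
        rw [hd₀]
        simp only [ite_eq_right_iff]
        intro hcon
        exact absurd hcon (not_lt.mpr h)
      have h0 : ind d₀ ω = 0 := by rw [hind_def]; simp [this]
      rcases hindd with h1 | h1 <;> rw [h0, h1] <;> simp <;> nlinarith
  -- final chain
  rw [ge_iff_le, ← sub_nonneg]
  have goal_eq : ∫ ω, |W ω| * (if d (f (H ω)) ≠ (if 0 < W ω then true else false)
        then (1:ℝ) else 0) ∂μ
      - ∫ ω, |W ω| * (if d₀ (f (H ω)) ≠ (if 0 < W ω then true else false)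
        then (1:ℝ) else 0) ∂μ
      = ∫ ω, (ind d₀ ω - ind d ω) * B ω ∂μ := by
    have e0 : ∀ c : 𝓥 → Bool,
        (fun ω => |W ω| * (if c (f (H ω)) ≠ (if 0 < W ω then true else false)
          then (1:ℝ) else 0)) = fun ω => |W ω| * χ c ω := by
      intro c; funext ω; rw [hχ_def, hs_def]
    rw [show (∫ ω, |W ω| * (if d (f (H ω)) ≠ (if 0 < W ω then true else false)
          then (1:ℝ) else 0) ∂μ) = ∫ ω, |W ω| * χ d ω ∂μ by rw [e0 d],
        show (∫ ω, |W ω| * (if d₀ (f (H ω)) ≠ (if 0 < W ω then true else false)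
          then (1:ℝ) else 0) ∂μ) = ∫ ω, |W ω| * χ d₀ ω ∂μ by rw [e0 d₀]]
    rw [← integral_sub (hloss_int d hd) (hloss_int d₀ hd₀m)]
    have e1 : (fun ω => |W ω| * χ d ω - |W ω| * χ d₀ ω)
        = fun ω => ind d₀ ω * W ω - ind d ω * W ω := by
      funext ω; rw [hpt ω]; ring
    rw [e1, integral_sub (hindW_int d₀ hd₀m) (hindW_int d hd),
      hswap d₀ hd₀m, hswap d hd,
      ← integral_sub (hindB_int d₀ hd₀m) (hindB_int d hd)]
    congr 1
    funext ω
    ring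
  rw [goal_eq]
  exact integral_nonneg hBnn
end

section
/- Optimality of the recursively defined V-restricted policy in the two-stage binary-action problem (Theorem, Appendix A): assume that either (i) for each a₁ ∈ {0,1}, V₁ is σ(V₂^{a₁})-measurable, or (ii) for all a₁, a₂ ∈ {0,1}, E[U^{a₁,a₂} ∣ σ(V₁) ⊔ σ(V₂^{a₁})] = E[U^{a₁,a₂} ∣ σ(V₂^{a₁})] almost surely. Then for every policy d = (d₁, d₂), Val(d) ≤ Val(d₀,₁, d₀,₂); that is, the policy (d₀,₁, d₀,₂) defined from the stage-2 and stage-1 blips is V-optimal. -/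
open MeasureTheory

lemma tsvop_key {Ω : Type*} [mΩ : MeasurableSpace Ω] (μ : Measure Ω) [IsProbabilityMeasure μ]
    {m : MeasurableSpace Ω} (hm : m ≤ mΩ)
    {h D B : Ω → ℝ} (hh : Measurable[m] h) (hhb : ∀ x, ‖h x‖ ≤ 1)
    (hD : Integrable D μ) (hB : B =ᵐ[μ] μ[D | m]) (hpos : ∀ x, 0 ≤ h x * B x) :
    0 ≤ ∫ x, h x * D x ∂μ := by
  have hhs : StronglyMeasurable[m] h := hh.stronglyMeasurable
  have hhae : AEStronglyMeasurable[mΩ] h μ := (hh.mono hm le_rfl).aestronglyMeasurable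
  have hInt : Integrable (fun x => h x * D x) μ := hD.bdd_mul (c := 1) hhae (Filter.Eventually.of_forall hhb)
  have h1 : μ[(fun x => h x * D x) | m] =ᵐ[μ] fun x => h x * (μ[D|m]) x :=
    condExp_mul_of_stronglyMeasurable_left hhs hInt hD
  calc (0:ℝ) ≤ ∫ x, h x * B x ∂μ := integral_nonneg hpos
    _ = ∫ x, h x * (μ[D|m]) x ∂μ :=
      integral_congr_ae (hB.mono fun x hx => by dsimp only; rw [hx])
    _ = ∫ x, (μ[(fun x => h x * D x)|m]) x ∂μ := (integral_congr_ae h1).symm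
    _ = ∫ x, h x * D x ∂μ := integral_condExp hm

lemma tsvop_pick (f : Bool → ℝ) (b : Bool) :
    (∑ a : Bool, f a * (if b = a then (1:ℝ) else 0)) = f b := by
  cases b <;> simp [Fintype.sum_bool]

lemma tsvop_sign (b₀ b : Bool) (c : ℝ) (h : b₀ = (if 0 < c then true else false)) :
    0 ≤ ((if b₀ then (1:ℝ) else 0) - (if b then (1:ℝ) else 0)) * c := by
  rcases lt_or_ge 0 c with hc | hc
  · rw [h, if_pos hc]
    cases b <;> simp [hc.le]
  · rw [h, if_neg (not_lt.mpr hc)]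
    cases b <;> simp
    nlinarith

/-- Optimality of the recursively defined V-restricted policy in the two-stage
binary-action problem: under the nestedness or coarsening condition, for every policy
`d = (d₁, d₂)`, `Val(d) ≤ Val(d₀,₁, d₀,₂)`. -/
theorem two_stage_v_optimal_policy
    {Ω 𝓥₁ 𝓥₂ : Type*} [MeasurableSpace Ω] [MeasurableSpace 𝓥₁] [MeasurableSpace 𝓥₂]
    (μ : Measure Ω) [IsProbabilityMeasure μ]
    (U : Bool → Bool → Ω → ℝ)
    (hUm : ∀ a₁ a₂, Measurable (U a₁ a₂))
    (hUint : ∀ a₁ a₂, Integrable (U a₁ a₂) μ)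
    (V₁ : Ω → 𝓥₁) (hV₁ : Measurable V₁)
    (V₂ : Bool → Ω → 𝓥₂) (hV₂ : ∀ a₁, Measurable (V₂ a₁))
    (hcond :
      (∀ a₁ : Bool, Measurable[MeasurableSpace.comap (V₂ a₁) inferInstance] V₁) ∨
      (∀ a₁ a₂ : Bool,
        μ[U a₁ a₂ | MeasurableSpace.comap V₁ inferInstance
            ⊔ MeasurableSpace.comap (V₂ a₁) inferInstance]
          =ᵐ[μ] μ[U a₁ a₂ | MeasurableSpace.comap (V₂ a₁) inferInstance]))
    -- stage-2 blip and optimal rule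
    (B₂ : Bool → 𝓥₂ → ℝ) (hB₂m : ∀ a₁, Measurable (B₂ a₁))
    (hB₂ : ∀ a₁ : Bool, (fun ω => B₂ a₁ (V₂ a₁ ω)) =ᵐ[μ]
      μ[(fun ω => U a₁ true ω - U a₁ false ω)
        | MeasurableSpace.comap (V₂ a₁) inferInstance])
    (d₀₂ : Bool → 𝓥₂ → Bool)
    (hd₀₂ : ∀ a₁ v₂, d₀₂ a₁ v₂ = if 0 < B₂ a₁ v₂ then true else false)
    -- stage-1 blip and optimal rule
    (B₁ : 𝓥₁ → ℝ) (hB₁m : Measurable B₁)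
    (hB₁ : (fun ω => B₁ (V₁ ω)) =ᵐ[μ]
      μ[(fun ω =>
          (∑ a₂ : Bool, U true a₂ ω * (if d₀₂ true (V₂ true ω) = a₂ then (1:ℝ) else 0))
          - ∑ a₂ : Bool, U false a₂ ω * (if d₀₂ false (V₂ false ω) = a₂ then (1:ℝ) else 0))
        | MeasurableSpace.comap V₁ inferInstance])
    (d₀₁ : 𝓥₁ → Bool)
    (hd₀₁ : ∀ v₁, d₀₁ v₁ = if 0 < B₁ v₁ then true else false)
    -- an arbitrary policy
    (d₁ : 𝓥₁ → Bool) (hd₁ : Measurable d₁)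
    (d₂ : Bool → 𝓥₂ → Bool) (hd₂ : ∀ a₁, Measurable (d₂ a₁)) :
    ∫ ω, ∑ a₁ : Bool, ∑ a₂ : Bool,
        U a₁ a₂ ω * (if d₂ a₁ (V₂ a₁ ω) = a₂ then (1:ℝ) else 0)
          * (if d₁ (V₁ ω) = a₁ then (1:ℝ) else 0) ∂μ
    ≤ ∫ ω, ∑ a₁ : Bool, ∑ a₂ : Bool,
        U a₁ a₂ ω * (if d₀₂ a₁ (V₂ a₁ ω) = a₂ then (1:ℝ) else 0)
          * (if d₀₁ (V₁ ω) = a₁ then (1:ℝ) else 0) ∂μ := by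
  classical
  rename_i mΩ mV1 mV2 hPμ
  set m1 : MeasurableSpace Ω := MeasurableSpace.comap V₁ inferInstance with hm1def
  set m2 : Bool → MeasurableSpace Ω := fun a₁ => MeasurableSpace.comap (V₂ a₁) inferInstance
    with hm2def
  have hm1 : m1 ≤ mΩ := by rw [hm1def]; exact hV₁.comap_le
  have hm2 : ∀ a₁, m2 a₁ ≤ mΩ := fun a₁ => (hV₂ a₁).comap_le
  have hm12 : ∀ a₁, m1 ⊔ m2 a₁ ≤ mΩ :=
    fun a₁ => sup_le hm1 (hm2 a₁)
  have hV₁m1 : Measurable[m1] V₁ := Measurable.of_comap_le le_rfl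
  have hV₂m2 : ∀ a₁, Measurable[m2 a₁] (V₂ a₁) := fun a₁ => Measurable.of_comap_le le_rfl
  -- measurability of optimal rules
  have hd₀₂m : ∀ a₁, Measurable (d₀₂ a₁) := by
    intro a₁
    have : d₀₂ a₁ = fun v₂ => if 0 < B₂ a₁ v₂ then true else false := funext (hd₀₂ a₁)
    rw [this]
    exact Measurable.ite (measurableSet_lt measurable_const (hB₂m a₁))
      measurable_const measurable_const
  have hd₀₁m : Measurable d₀₁ := by
    have : d₀₁ = fun v₁ => if 0 < B₁ v₁ then true else false := funext hd₀₁
    rw [this]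
    exact Measurable.ite (measurableSet_lt measurable_const hB₁m)
      measurable_const measurable_const
  -- reduce hypothesis to the coarsening form
  have hcond' : ∀ a₁ a₂ : Bool,
      μ[U a₁ a₂ | m1 ⊔ m2 a₁] =ᵐ[μ] μ[U a₁ a₂ | m2 a₁] := by
    rcases hcond with hi | hii
    · intro a₁ a₂
      have hle : m1 ≤ m2 a₁ := (hi a₁).comap_le
      rw [sup_eq_right.mpr hle]
    · exact hii
  -- indicator functions
  set χ : (𝓥₁ → Bool) → Bool → Ω → ℝ :=
    fun e₁ a₁ ω => if e₁ (V₁ ω) = a₁ then (1:ℝ) else 0 with hχdef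
  set ι : (Bool → 𝓥₂ → Bool) → Bool → Ω → ℝ :=
    fun e₂ a₁ ω => if e₂ a₁ (V₂ a₁ ω) then (1:ℝ) else 0 with hιdef
  have hχm : ∀ (e₁ : 𝓥₁ → Bool), Measurable e₁ → ∀ a₁, Measurable[m1] (χ e₁ a₁) := by
    intro e₁ he₁ a₁
    exact Measurable.ite ((he₁.comp hV₁m1) (measurableSet_singleton a₁))
      measurable_const measurable_const
  have hιm : ∀ (e₂ : Bool → 𝓥₂ → Bool), (∀ a₁, Measurable (e₂ a₁)) → ∀ a₁,
      Measurable[m2 a₁] (ι e₂ a₁) := by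
    intro e₂ he₂ a₁
    exact Measurable.ite (((he₂ a₁).comp (hV₂m2 a₁)) (measurableSet_singleton true))
      measurable_const measurable_const
  have hχb : ∀ e₁ a₁ ω, 0 ≤ χ e₁ a₁ ω ∧ χ e₁ a₁ ω ≤ 1 := by
    intro e₁ a₁ ω; simp only [hχdef]; split <;> norm_num
  have hιb : ∀ e₂ a₁ ω, 0 ≤ ι e₂ a₁ ω ∧ ι e₂ a₁ ω ≤ 1 := by
    intro e₂ a₁ ω; simp only [hιdef]; split <;> norm_num
  have hχc : ∀ e₁ ω, χ e₁ false ω = 1 - χ e₁ true ω := by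
    intro e₁ ω; simp only [hχdef]; cases e₁ (V₁ ω) <;> norm_num
  -- D and W
  set D : Bool → Ω → ℝ := fun a₁ ω => U a₁ true ω - U a₁ false ω with hDdef
  have hDint : ∀ a₁, Integrable (D a₁) μ := fun a₁ => (hUint a₁ true).sub (hUint a₁ false)
  set W : (Bool → 𝓥₂ → Bool) → Bool → Ω → ℝ :=
    fun e₂ a₁ ω => U a₁ (e₂ a₁ (V₂ a₁ ω)) ω with hWdef
  have hWeq : ∀ e₂ a₁ ω, W e₂ a₁ ω = U a₁ false ω + ι e₂ a₁ ω * D a₁ ω := by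
    intro e₂ a₁ ω
    simp only [hWdef, hιdef, hDdef]
    cases e₂ a₁ (V₂ a₁ ω) <;> simp <;> try ring
  have hWint : ∀ (e₂ : Bool → 𝓥₂ → Bool), (∀ a₁, Measurable (e₂ a₁)) → ∀ a₁,
      Integrable (W e₂ a₁) μ := by
    intro e₂ he₂ a₁
    have h1 : Integrable (fun ω => ι e₂ a₁ ω * D a₁ ω) μ :=
      (hDint a₁).bdd_mul (c := 1) (((hιm e₂ he₂ a₁).mono (hm2 a₁) le_rfl).aestronglyMeasurable)
        (Filter.Eventually.of_forall fun ω => by simp only [hιdef]; split <;> simp)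
    exact ((hUint a₁ false).add h1).congr
      (Filter.Eventually.of_forall fun ω => (hWeq e₂ a₁ ω).symm)
  -- χ * W is integrable
  have hWχint : ∀ (e₂ : Bool → 𝓥₂ → Bool), (∀ a₁, Measurable (e₂ a₁)) →
      ∀ (e₁ : 𝓥₁ → Bool), Measurable e₁ → ∀ a₁,
      Integrable (fun ω => W e₂ a₁ ω * χ e₁ a₁ ω) μ := by
    intro e₂ he₂ e₁ he₁ a₁
    have h1 : Integrable (fun ω => χ e₁ a₁ ω * W e₂ a₁ ω) μ :=
      (hWint e₂ he₂ a₁).bdd_mul (c := 1)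
        (((hχm e₁ he₁ a₁).mono hm1 le_rfl).aestronglyMeasurable)
        (Filter.Eventually.of_forall fun ω => by simp only [hχdef]; split <;> simp)
    exact h1.congr (Filter.Eventually.of_forall fun ω => mul_comm _ _)
  -- rewrite the two integrands
  have hcollapse : ∀ (e₁ : 𝓥₁ → Bool) (e₂ : Bool → 𝓥₂ → Bool) (ω : Ω),
      (∑ a₁ : Bool, ∑ a₂ : Bool, U a₁ a₂ ω * (if e₂ a₁ (V₂ a₁ ω) = a₂ then (1:ℝ) else 0)
        * (if e₁ (V₁ ω) = a₁ then (1:ℝ) else 0))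
      = W e₂ true ω * χ e₁ true ω + W e₂ false ω * χ e₁ false ω := by
    intro e₁ e₂ ω
    have key : ∀ a₁ : Bool,
        (∑ a₂ : Bool, U a₁ a₂ ω * (if e₂ a₁ (V₂ a₁ ω) = a₂ then (1:ℝ) else 0)
          * (if e₁ (V₁ ω) = a₁ then (1:ℝ) else 0))
        = W e₂ a₁ ω * χ e₁ a₁ ω := by
      intro a₁
      rw [← Finset.sum_mul, tsvop_pick (fun a₂ => U a₁ a₂ ω) (e₂ a₁ (V₂ a₁ ω))]
    rw [Fintype.sum_bool, key true, key false]
  rw [integral_congr_ae (Filter.Eventually.of_forall (hcollapse d₁ d₂)),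
    integral_congr_ae (Filter.Eventually.of_forall (hcollapse d₀₁ d₀₂))]
  rw [integral_add ((hWχint d₂ hd₂ d₁ hd₁ true)) ((hWχint d₂ hd₂ d₁ hd₁ false)),
    integral_add ((hWχint d₀₂ hd₀₂m d₀₁ hd₀₁m true)) ((hWχint d₀₂ hd₀₂m d₀₁ hd₀₁m false))]
  -- Step A : for each a₁, ∫ W d₂ a₁ * χ d₁ a₁ ≤ ∫ W d₀₂ a₁ * χ d₁ a₁
  have stepA : ∀ a₁ : Bool,
      ∫ ω, W d₂ a₁ ω * χ d₁ a₁ ω ∂μ ≤ ∫ ω, W d₀₂ a₁ ω * χ d₁ a₁ ω ∂μ := by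
    intro a₁
    set h : Ω → ℝ := fun ω => χ d₁ a₁ ω * (ι d₀₂ a₁ ω - ι d₂ a₁ ω) with hhdef
    have hhm : Measurable[m1 ⊔ m2 a₁] h :=
      (((hχm d₁ hd₁ a₁).mono le_sup_left le_rfl)).mul
        ((((hιm d₀₂ hd₀₂m a₁).mono le_sup_right le_rfl)).sub
          (((hιm d₂ hd₂ a₁).mono le_sup_right le_rfl)))
    have hhb : ∀ ω, ‖h ω‖ ≤ 1 := by
      intro ω
      simp only [hhdef, hχdef, hιdef]
      rcases ite_eq_or_eq (d₁ (V₁ ω) = a₁) (1:ℝ) 0 with hx | hx <;>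
        rcases ite_eq_or_eq (d₀₂ a₁ (V₂ a₁ ω) = true) (1:ℝ) 0 with hy | hy <;>
        rcases ite_eq_or_eq (d₂ a₁ (V₂ a₁ ω) = true) (1:ℝ) 0 with hz | hz <;>
        rw [hx, hy, hz] <;> norm_num
    -- B chain
    have hBchain : (fun ω => B₂ a₁ (V₂ a₁ ω)) =ᵐ[μ] μ[D a₁ | m1 ⊔ m2 a₁] := by
      have e2 : μ[D a₁ | m2 a₁] =ᵐ[μ]
          fun ω => (μ[U a₁ true | m2 a₁]) ω - (μ[U a₁ false | m2 a₁]) ω :=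
        condExp_sub (hUint a₁ true) (hUint a₁ false) _
      have e12 : μ[D a₁ | m1 ⊔ m2 a₁] =ᵐ[μ]
          fun ω => (μ[U a₁ true | m1 ⊔ m2 a₁]) ω - (μ[U a₁ false | m1 ⊔ m2 a₁]) ω :=
        condExp_sub (hUint a₁ true) (hUint a₁ false) _
      have hsw : (fun ω => (μ[U a₁ true | m2 a₁]) ω - (μ[U a₁ false | m2 a₁]) ω) =ᵐ[μ]
          fun ω => (μ[U a₁ true | m1 ⊔ m2 a₁]) ω - (μ[U a₁ false | m1 ⊔ m2 a₁]) ω :=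
        ((hcond' a₁ true).symm).sub ((hcond' a₁ false).symm)
      exact ((hB₂ a₁).trans (e2.trans (hsw.trans e12.symm)))
    have hpos : ∀ ω, 0 ≤ h ω * B₂ a₁ (V₂ a₁ ω) := by
      intro ω
      have h1 : 0 ≤ (ι d₀₂ a₁ ω - ι d₂ a₁ ω) * B₂ a₁ (V₂ a₁ ω) :=
        tsvop_sign (d₀₂ a₁ (V₂ a₁ ω)) (d₂ a₁ (V₂ a₁ ω)) (B₂ a₁ (V₂ a₁ ω))
          (hd₀₂ a₁ (V₂ a₁ ω))
      have h2 := (hχb d₁ a₁ ω).1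
      calc (0:ℝ) ≤ χ d₁ a₁ ω * ((ι d₀₂ a₁ ω - ι d₂ a₁ ω) * B₂ a₁ (V₂ a₁ ω)) :=
            mul_nonneg h2 h1
        _ = h ω * B₂ a₁ (V₂ a₁ ω) := by rw [hhdef]; ring
    have hkey : 0 ≤ ∫ ω, h ω * D a₁ ω ∂μ :=
      tsvop_key (mΩ := mΩ) μ (hm12 a₁) hhm hhb (hDint a₁) hBchain hpos
    have hdiff : ∀ ω, W d₀₂ a₁ ω * χ d₁ a₁ ω - W d₂ a₁ ω * χ d₁ a₁ ω = h ω * D a₁ ω := by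
      intro ω
      rw [hWeq d₀₂ a₁ ω, hWeq d₂ a₁ ω, hhdef]
      ring
    have hsub : ∫ ω, (W d₀₂ a₁ ω * χ d₁ a₁ ω - W d₂ a₁ ω * χ d₁ a₁ ω) ∂μ
        = (∫ ω, W d₀₂ a₁ ω * χ d₁ a₁ ω ∂μ) - ∫ ω, W d₂ a₁ ω * χ d₁ a₁ ω ∂μ :=
      integral_sub (hWχint d₀₂ hd₀₂m d₁ hd₁ a₁) (hWχint d₂ hd₂ d₁ hd₁ a₁)
    have heq : ∫ ω, (W d₀₂ a₁ ω * χ d₁ a₁ ω - W d₂ a₁ ω * χ d₁ a₁ ω) ∂μ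
        = ∫ ω, h ω * D a₁ ω ∂μ :=
      integral_congr_ae (Filter.Eventually.of_forall hdiff)
    linarith
  -- Step B
  have stepB :
      (∫ ω, W d₀₂ true ω * χ d₁ true ω ∂μ) + (∫ ω, W d₀₂ false ω * χ d₁ false ω ∂μ)
      ≤ (∫ ω, W d₀₂ true ω * χ d₀₁ true ω ∂μ) + (∫ ω, W d₀₂ false ω * χ d₀₁ false ω ∂μ) := by
    set Δ : Ω → ℝ := fun ω => W d₀₂ true ω - W d₀₂ false ω with hΔdef
    have hΔint : Integrable Δ μ := (hWint d₀₂ hd₀₂m true).sub (hWint d₀₂ hd₀₂m false)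
    set h : Ω → ℝ := fun ω => χ d₀₁ true ω - χ d₁ true ω with hhdef
    have hhm : Measurable[m1] h := (hχm d₀₁ hd₀₁m true).sub (hχm d₁ hd₁ true)
    have hhb : ∀ ω, ‖h ω‖ ≤ 1 := by
      intro ω
      simp only [hhdef, hχdef]
      rcases ite_eq_or_eq (d₀₁ (V₁ ω) = true) (1:ℝ) 0 with hx | hx <;>
        rcases ite_eq_or_eq (d₁ (V₁ ω) = true) (1:ℝ) 0 with hy | hy <;>
        rw [hx, hy] <;> norm_num
    have hBΔ : (fun ω => B₁ (V₁ ω)) =ᵐ[μ] μ[Δ | m1] := by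
      have heq : (fun ω =>
          (∑ a₂ : Bool, U true a₂ ω * (if d₀₂ true (V₂ true ω) = a₂ then (1:ℝ) else 0))
          - ∑ a₂ : Bool, U false a₂ ω * (if d₀₂ false (V₂ false ω) = a₂ then (1:ℝ) else 0))
          = Δ := by
        funext ω
        rw [tsvop_pick (fun a₂ => U true a₂ ω) (d₀₂ true (V₂ true ω)),
          tsvop_pick (fun a₂ => U false a₂ ω) (d₀₂ false (V₂ false ω))]
      rw [heq] at hB₁
      exact hB₁
    have hpos : ∀ ω, 0 ≤ h ω * B₁ (V₁ ω) := by
      intro ω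
      have h1 : 0 ≤ ((if d₀₁ (V₁ ω) then (1:ℝ) else 0) - (if d₁ (V₁ ω) then (1:ℝ) else 0))
          * B₁ (V₁ ω) :=
        tsvop_sign (d₀₁ (V₁ ω)) (d₁ (V₁ ω)) (B₁ (V₁ ω)) (hd₀₁ (V₁ ω))
      simpa [hhdef, hχdef] using h1
    have hkey : 0 ≤ ∫ ω, h ω * Δ ω ∂μ := tsvop_key (mΩ := mΩ) μ hm1 hhm hhb hΔint hBΔ hpos
    have hdiff : ∀ ω,
        (W d₀₂ true ω * χ d₀₁ true ω + W d₀₂ false ω * χ d₀₁ false ω)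
        - (W d₀₂ true ω * χ d₁ true ω + W d₀₂ false ω * χ d₁ false ω) = h ω * Δ ω := by
      intro ω
      rw [hχc d₀₁ ω, hχc d₁ ω, hhdef, hΔdef]
      ring
    have hint1 : Integrable (fun ω => W d₀₂ true ω * χ d₀₁ true ω
        + W d₀₂ false ω * χ d₀₁ false ω) μ :=
      (hWχint d₀₂ hd₀₂m d₀₁ hd₀₁m true).add (hWχint d₀₂ hd₀₂m d₀₁ hd₀₁m false)
    have hint2 : Integrable (fun ω => W d₀₂ true ω * χ d₁ true ω
        + W d₀₂ false ω * χ d₁ false ω) μ :=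
      (hWχint d₀₂ hd₀₂m d₁ hd₁ true).add (hWχint d₀₂ hd₀₂m d₁ hd₁ false)
    have hsub : ∫ ω, ((W d₀₂ true ω * χ d₀₁ true ω + W d₀₂ false ω * χ d₀₁ false ω)
        - (W d₀₂ true ω * χ d₁ true ω + W d₀₂ false ω * χ d₁ false ω)) ∂μ
        = (∫ ω, (W d₀₂ true ω * χ d₀₁ true ω + W d₀₂ false ω * χ d₀₁ false ω) ∂μ)
          - ∫ ω, (W d₀₂ true ω * χ d₁ true ω + W d₀₂ false ω * χ d₁ false ω) ∂μ :=
      integral_sub hint1 hint2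
    have heq2 : ∫ ω, ((W d₀₂ true ω * χ d₀₁ true ω + W d₀₂ false ω * χ d₀₁ false ω)
        - (W d₀₂ true ω * χ d₁ true ω + W d₀₂ false ω * χ d₁ false ω)) ∂μ
        = ∫ ω, h ω * Δ ω ∂μ :=
      integral_congr_ae (Filter.Eventually.of_forall hdiff)
    have ha1 : ∫ ω, (W d₀₂ true ω * χ d₀₁ true ω + W d₀₂ false ω * χ d₀₁ false ω) ∂μ
        = (∫ ω, W d₀₂ true ω * χ d₀₁ true ω ∂μ) + ∫ ω, W d₀₂ false ω * χ d₀₁ false ω ∂μ :=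
      integral_add (hWχint d₀₂ hd₀₂m d₀₁ hd₀₁m true) (hWχint d₀₂ hd₀₂m d₀₁ hd₀₁m false)
    have ha2 : ∫ ω, (W d₀₂ true ω * χ d₁ true ω + W d₀₂ false ω * χ d₁ false ω) ∂μ
        = (∫ ω, W d₀₂ true ω * χ d₁ true ω ∂μ) + ∫ ω, W d₀₂ false ω * χ d₁ false ω ∂μ :=
      integral_add (hWχint d₀₂ hd₀₂m d₁ hd₁ true) (hWχint d₀₂ hd₀₂m d₁ hd₁ false)
    linarith
  calc (∫ ω, W d₂ true ω * χ d₁ true ω ∂μ) + (∫ ω, W d₂ false ω * χ d₁ false ω ∂μ)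
      ≤ (∫ ω, W d₀₂ true ω * χ d₁ true ω ∂μ) + (∫ ω, W d₀₂ false ω * χ d₁ false ω ∂μ) :=
        add_le_add (stepA true) (stepA false)
    _ ≤ _ := stepB
end

section
/- Decomposition of the two-stage policy value through stage-2 conditional expectations: assume that either (i) for each a₁ ∈ {0,1}, V₁ is σ(V₂^{a₁})-measurable, or (ii) for all a₁, a₂ ∈ {0,1}, E[U^{a₁,a₂} ∣ σ(V₁) ⊔ σ(V₂^{a₁})] = E[U^{a₁,a₂} ∣ σ(V₂^{a₁})] almost surely. Then for every policy d = (d₁, d₂), Val(d) = Σ_{a₁ ∈ {0,1}} E[(Σ_{a₂ ∈ {0,1}} E[U^{a₁,a₂} ∣ σ(V₂^{a₁})]·1{d₂(a₁, V₂^{a₁}) = a₂})·1{d₁(V₁) = a₁}]. -/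
open MeasureTheory

/-! The event `{d₂(a₁, V₂^{a₁}) = a₂, d₁(V₁) = a₁}` lies in `σ(V₁) ⊔ σ(V₂^{a₁})`, and
conditioning on a σ-algebra preserves integrals over its events. Under either assumption the
conditional expectation given `σ(V₁) ⊔ σ(V₂^{a₁})` agrees a.e. with the one given `σ(V₂^{a₁})`
(under (i) the two σ-algebras coincide), so each `U^{a₁,a₂}` may be replaced by
`E[U^{a₁,a₂} ∣ σ(V₂^{a₁})]` term by term. -/

lemma mul_ite_mul_ite_eq_indicator {Ω R : Type*} [MulZeroOneClass R] (f : Ω → R)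
    (p q : Ω → Prop) [DecidablePred p] [DecidablePred q] (ω : Ω) :
    f ω * (if p ω then 1 else 0) * (if q ω then 1 else 0)
      = ({ω | p ω} ∩ {ω | q ω}).indicator f ω := by
  by_cases hp : p ω <;> by_cases hq : q ω <;> simp [hp, hq]

theorem integral_indicator_condExp_of_condExp_sup_ae_eq {Ω : Type*}
    {m₁ m₂ m₀ : MeasurableSpace Ω} {μ : Measure Ω} [IsFiniteMeasure μ] (h₁ : m₁ ≤ m₀)
    (h₂ : m₂ ≤ m₀) {f : Ω → ℝ} (hf : Integrable f μ) (hsup : μ[f | m₁ ⊔ m₂] =ᵐ[μ] μ[f | m₂])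
    {s : Set Ω} (hs : MeasurableSet[m₁ ⊔ m₂] s) :
    ∫ ω, s.indicator (μ[f | m₂]) ω ∂μ = ∫ ω, s.indicator f ω ∂μ := by
  have hle : m₁ ⊔ m₂ ≤ m₀ := sup_le h₁ h₂
  rw [integral_indicator (hle s hs), integral_indicator (hle s hs),
    ← setIntegral_condExp hle hf hs]
  exact integral_congr_ae (ae_restrict_of_ae hsup.symm)

theorem two_stage_value_decomposition_general
    {Ω 𝓥₁ 𝓥₂ : Type*} [MeasurableSpace Ω] [MeasurableSpace 𝓥₁] [MeasurableSpace 𝓥₂]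
    (μ : Measure Ω) [IsProbabilityMeasure μ]
    (U : Bool → Bool → Ω → ℝ)
    (hUint : ∀ a₁ a₂, Integrable (U a₁ a₂) μ)
    (V₁ : Ω → 𝓥₁) (hV₁ : Measurable V₁)
    (V₂ : Bool → Ω → 𝓥₂) (hV₂ : ∀ a₁, Measurable (V₂ a₁))
    (hcond :
      (∀ a₁ : Bool, Measurable[MeasurableSpace.comap (V₂ a₁) inferInstance] V₁) ∨
      (∀ a₁ a₂ : Bool,
        μ[U a₁ a₂ | MeasurableSpace.comap V₁ inferInstance
            ⊔ MeasurableSpace.comap (V₂ a₁) inferInstance]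
          =ᵐ[μ] μ[U a₁ a₂ | MeasurableSpace.comap (V₂ a₁) inferInstance]))
    (d₁ : 𝓥₁ → Bool) (hd₁ : Measurable d₁)
    (d₂ : Bool → 𝓥₂ → Bool) (hd₂ : ∀ a₁, Measurable (d₂ a₁)) :
    ∫ ω, ∑ a₁ : Bool, ∑ a₂ : Bool,
        U a₁ a₂ ω * (if d₂ a₁ (V₂ a₁ ω) = a₂ then (1:ℝ) else 0)
          * (if d₁ (V₁ ω) = a₁ then (1:ℝ) else 0) ∂μ
    = ∑ a₁ : Bool, ∫ ω,
        (∑ a₂ : Bool,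
          (μ[U a₁ a₂ | MeasurableSpace.comap (V₂ a₁) inferInstance]) ω
            * (if d₂ a₁ (V₂ a₁ ω) = a₂ then (1:ℝ) else 0))
          * (if d₁ (V₁ ω) = a₁ then (1:ℝ) else 0) ∂μ := by
  have hsup : ∀ a₁ a₂ : Bool,
      μ[U a₁ a₂ | MeasurableSpace.comap V₁ inferInstance
          ⊔ MeasurableSpace.comap (V₂ a₁) inferInstance]
        =ᵐ[μ] μ[U a₁ a₂ | MeasurableSpace.comap (V₂ a₁) inferInstance] := by
    rcases hcond with hnested | hcoarse
    · intro a₁ a₂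
      rw [sup_eq_right.mpr (measurable_iff_comap_le.mp (hnested a₁))]
    · exact hcoarse
  set A : Bool → Bool → Set Ω := fun a₁ a₂ =>
    {ω | d₂ a₁ (V₂ a₁ ω) = a₂} ∩ {ω | d₁ (V₁ ω) = a₁}
  have hA_sup : ∀ a₁ a₂, MeasurableSet[MeasurableSpace.comap V₁ inferInstance
      ⊔ MeasurableSpace.comap (V₂ a₁) inferInstance] (A a₁ a₂) := fun a₁ a₂ =>
    (le_sup_right (a := MeasurableSpace.comap V₁ inferInstance) _
        ((hd₂ a₁).comp (comap_measurable (V₂ a₁)) (measurableSet_singleton a₂))).inter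
      (le_sup_left (b := MeasurableSpace.comap (V₂ a₁) inferInstance) _
        (hd₁.comp (comap_measurable V₁) (measurableSet_singleton a₁)))
  have hA_meas : ∀ a₁ a₂, MeasurableSet (A a₁ a₂) := fun a₁ a₂ =>
    sup_le hV₁.comap_le (hV₂ a₁).comap_le _ (hA_sup a₁ a₂)
  have hind : ∀ (f : Ω → ℝ) a₁ a₂ ω,
      f ω * (if d₂ a₁ (V₂ a₁ ω) = a₂ then (1:ℝ) else 0)
          * (if d₁ (V₁ ω) = a₁ then (1:ℝ) else 0)
        = (A a₁ a₂).indicator f ω := fun f a₁ a₂ => mul_ite_mul_ite_eq_indicator f _ _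
  simp only [Finset.sum_mul, hind]
  rw [integral_finsetSum _ fun a₁ _ => integrable_finsetSum _ fun a₂ _ =>
    (hUint a₁ a₂).indicator (hA_meas a₁ a₂)]
  refine Finset.sum_congr rfl fun a₁ _ => ?_
  rw [integral_finsetSum _ fun a₂ _ => (hUint a₁ a₂).indicator (hA_meas a₁ a₂),
    integral_finsetSum _ fun a₂ _ => integrable_condExp.indicator (hA_meas a₁ a₂)]
  exact Finset.sum_congr rfl fun a₂ _ => (integral_indicator_condExp_of_condExp_sup_ae_eq
    hV₁.comap_le (hV₂ a₁).comap_le (hUint a₁ a₂) (hsup a₁ a₂) (hA_sup a₁ a₂)).symm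

/-- Decomposition of the two-stage policy value through stage-2 conditional
expectations: under the nestedness or coarsening condition, for every policy
`d = (d₁, d₂)`,
`Val(d) = Σ_{a₁} E[(Σ_{a₂} E[U^{a₁,a₂} ∣ σ(V₂^{a₁})]·1{d₂(a₁,V₂^{a₁}) = a₂})·1{d₁(V₁) = a₁}]`. -/
theorem two_stage_value_decomposition
    {Ω 𝓥₁ 𝓥₂ : Type*} [MeasurableSpace Ω] [MeasurableSpace 𝓥₁] [MeasurableSpace 𝓥₂]
    (μ : Measure Ω) [IsProbabilityMeasure μ]
    (U : Bool → Bool → Ω → ℝ)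
    (hUm : ∀ a₁ a₂, Measurable (U a₁ a₂))
    (hUint : ∀ a₁ a₂, Integrable (U a₁ a₂) μ)
    (V₁ : Ω → 𝓥₁) (hV₁ : Measurable V₁)
    (V₂ : Bool → Ω → 𝓥₂) (hV₂ : ∀ a₁, Measurable (V₂ a₁))
    (hcond :
      (∀ a₁ : Bool, Measurable[MeasurableSpace.comap (V₂ a₁) inferInstance] V₁) ∨
      (∀ a₁ a₂ : Bool,
        μ[U a₁ a₂ | MeasurableSpace.comap V₁ inferInstance
            ⊔ MeasurableSpace.comap (V₂ a₁) inferInstance]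
          =ᵐ[μ] μ[U a₁ a₂ | MeasurableSpace.comap (V₂ a₁) inferInstance]))
    (d₁ : 𝓥₁ → Bool) (hd₁ : Measurable d₁)
    (d₂ : Bool → 𝓥₂ → Bool) (hd₂ : ∀ a₁, Measurable (d₂ a₁)) :
    ∫ ω, ∑ a₁ : Bool, ∑ a₂ : Bool,
        U a₁ a₂ ω * (if d₂ a₁ (V₂ a₁ ω) = a₂ then (1:ℝ) else 0)
          * (if d₁ (V₁ ω) = a₁ then (1:ℝ) else 0) ∂μ
    = ∑ a₁ : Bool, ∫ ω,
        (∑ a₂ : Bool,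
          (μ[U a₁ a₂ | MeasurableSpace.comap (V₂ a₁) inferInstance]) ω
            * (if d₂ a₁ (V₂ a₁ ω) = a₂ then (1:ℝ) else 0))
          * (if d₁ (V₁ ω) = a₁ then (1:ℝ) else 0) ∂μ :=
  two_stage_value_decomposition_general μ U hUint V₁ hV₁ V₂ hV₂ hcond d₁ hd₁ d₂ hd₂
end

section
/- Stage-2 optimality step: assume that either (i) for each a₁ ∈ {0,1}, V₁ is σ(V₂^{a₁})-measurable, or (ii) for all a₁, a₂ ∈ {0,1}, E[U^{a₁,a₂} ∣ σ(V₁) ⊔ σ(V₂^{a₁})] = E[U^{a₁,a₂} ∣ σ(V₂^{a₁})] almost surely. Then for every stage-1 rule d₁ and every stage-2 rule d₂, Val(d₁, d₂) ≤ Val(d₁, d₀,₂), where d₀,₂(a₁, v₂) = 1{B₀,₂(a₁, v₂) > 0}. -/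
open MeasureTheory

lemma meas_ind' {Ω : Type*} {m : MeasurableSpace Ω} {f : Ω → Bool}
    (hf : Measurable[m] f) (b : Bool) :
    Measurable[m] (fun ω => if f ω = b then (1:ℝ) else 0) := by
  have h : MeasurableSet[m] {ω | f ω = b} := hf (MeasurableSet.singleton b)
  exact Measurable.ite h measurable_const measurable_const

lemma key_pullout {Ω : Type*} [m0 : MeasurableSpace Ω] (μ : Measure Ω) [IsProbabilityMeasure μ]
    {m : MeasurableSpace Ω} (hm : m ≤ m0) {H D g : Ω → ℝ}
    (hH : StronglyMeasurable[m] H) (hHb : ∀ ω, ‖H ω‖ ≤ 1)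
    (hD : Integrable D μ) (hg : μ[D|m] =ᵐ[μ] g) :
    ∫ ω, H ω * D ω ∂μ = ∫ ω, H ω * g ω ∂μ := by
  have hint : Integrable (H * D) μ :=
    hD.bdd_mul (c := 1) (StronglyMeasurable.aestronglyMeasurable (μ := μ) (hH.mono hm : StronglyMeasurable[m0] H)) (Filter.Eventually.of_forall hHb)
  have h1 : ∫ ω, H ω * D ω ∂μ = ∫ ω, (μ[H * D|m]) ω ∂μ := (integral_condExp hm).symm
  have h2 : μ[H * D|m] =ᵐ[μ] fun ω => H ω * g ω := by
    filter_upwards [condExp_mul_of_stronglyMeasurable_left hH hint hD, hg] with ω h hgg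
    simp only [Pi.mul_apply] at h ⊢
    rw [h, hgg]
  rw [h1]
  exact integral_congr_ae h2

/-- Stage-2 optimality step: under the nestedness or coarsening condition, for every
stage-1 rule `d₁` and stage-2 rule `d₂`, `Val(d₁, d₂) ≤ Val(d₁, d₀,₂)`,
where `d₀,₂(a₁, v₂) = 1{B₀,₂(a₁, v₂) > 0}`. -/
theorem two_stage_stage2_optimality
    {Ω 𝓥₁ 𝓥₂ : Type*} [MeasurableSpace Ω] [MeasurableSpace 𝓥₁] [MeasurableSpace 𝓥₂]
    (μ : Measure Ω) [IsProbabilityMeasure μ]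
    (U : Bool → Bool → Ω → ℝ)
    (hUm : ∀ a₁ a₂, Measurable (U a₁ a₂))
    (hUint : ∀ a₁ a₂, Integrable (U a₁ a₂) μ)
    (V₁ : Ω → 𝓥₁) (hV₁ : Measurable V₁)
    (V₂ : Bool → Ω → 𝓥₂) (hV₂ : ∀ a₁, Measurable (V₂ a₁))
    (hcond :
      (∀ a₁ : Bool, Measurable[MeasurableSpace.comap (V₂ a₁) inferInstance] V₁) ∨
      (∀ a₁ a₂ : Bool,
        μ[U a₁ a₂ | MeasurableSpace.comap V₁ inferInstance
            ⊔ MeasurableSpace.comap (V₂ a₁) inferInstance]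
          =ᵐ[μ] μ[U a₁ a₂ | MeasurableSpace.comap (V₂ a₁) inferInstance]))
    -- stage-2 blip and optimal rule
    (B₂ : Bool → 𝓥₂ → ℝ) (hB₂m : ∀ a₁, Measurable (B₂ a₁))
    (hB₂ : ∀ a₁ : Bool, (fun ω => B₂ a₁ (V₂ a₁ ω)) =ᵐ[μ]
      μ[(fun ω => U a₁ true ω - U a₁ false ω)
        | MeasurableSpace.comap (V₂ a₁) inferInstance])
    (d₀₂ : Bool → 𝓥₂ → Bool)
    (hd₀₂ : ∀ a₁ v₂, d₀₂ a₁ v₂ = if 0 < B₂ a₁ v₂ then true else false)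
    -- an arbitrary policy
    (d₁ : 𝓥₁ → Bool) (hd₁ : Measurable d₁)
    (d₂ : Bool → 𝓥₂ → Bool) (hd₂ : ∀ a₁, Measurable (d₂ a₁)) :
    ∫ ω, ∑ a₁ : Bool, ∑ a₂ : Bool,
        U a₁ a₂ ω * (if d₂ a₁ (V₂ a₁ ω) = a₂ then (1:ℝ) else 0)
          * (if d₁ (V₁ ω) = a₁ then (1:ℝ) else 0) ∂μ
    ≤ ∫ ω, ∑ a₁ : Bool, ∑ a₂ : Bool,
        U a₁ a₂ ω * (if d₀₂ a₁ (V₂ a₁ ω) = a₂ then (1:ℝ) else 0)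
          * (if d₁ (V₁ ω) = a₁ then (1:ℝ) else 0) ∂μ := by
  classical
  -- measurability of d₀₂
  have hd₀₂m : ∀ a₁, Measurable (d₀₂ a₁) := by
    intro a₁
    have he : d₀₂ a₁ = fun v => if 0 < B₂ a₁ v then true else false := funext (hd₀₂ a₁)
    rw [he]
    exact Measurable.ite (measurableSet_lt measurable_const (hB₂m a₁))
      measurable_const measurable_const
  -- integrability of each summand
  have hterm_int : ∀ (d : Bool → 𝓥₂ → Bool), (∀ a₁, Measurable (d a₁)) → ∀ a₁ a₂ : Bool,
      Integrable (fun ω => U a₁ a₂ ω * (if d a₁ (V₂ a₁ ω) = a₂ then (1:ℝ) else 0)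
        * (if d₁ (V₁ ω) = a₁ then (1:ℝ) else 0)) μ := by
    intro d hd a₁ a₂
    have h2 := meas_ind' ((hd a₁).comp (hV₂ a₁)) a₂
    have h1 := meas_ind' (hd₁.comp hV₁) a₁
    have he : (fun ω => U a₁ a₂ ω * (if d a₁ (V₂ a₁ ω) = a₂ then (1:ℝ) else 0)
        * (if d₁ (V₁ ω) = a₁ then (1:ℝ) else 0))
        = fun ω => ((if d a₁ (V₂ a₁ ω) = a₂ then (1:ℝ) else 0)
            * (if d₁ (V₁ ω) = a₁ then (1:ℝ) else 0)) * U a₁ a₂ ω := by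
      funext ω; ring
    rw [he]
    refine (hUint a₁ a₂).bdd_mul (c := 1) ((h2.mul h1).aestronglyMeasurable) (Filter.Eventually.of_forall fun ω => ?_)
    simp only [norm_mul, Real.norm_eq_abs]
    have : (0:ℝ) ≤ 1 := zero_le_one
    split_ifs <;> norm_num
  have hsum_int : ∀ (d : Bool → 𝓥₂ → Bool), (∀ a₁, Measurable (d a₁)) →
      Integrable (fun ω => ∑ a₁ : Bool, ∑ a₂ : Bool,
        U a₁ a₂ ω * (if d a₁ (V₂ a₁ ω) = a₂ then (1:ℝ) else 0)
          * (if d₁ (V₁ ω) = a₁ then (1:ℝ) else 0)) μ := by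
    intro d hd
    exact integrable_finset_sum _ (fun a₁ _ =>
      integrable_finset_sum _ (fun a₂ _ => hterm_int d hd a₁ a₂))
  -- the key functions
  set H : Bool → Ω → ℝ := fun a₁ ω =>
    ((if d₀₂ a₁ (V₂ a₁ ω) = true then (1:ℝ) else 0)
      - (if d₂ a₁ (V₂ a₁ ω) = true then (1:ℝ) else 0))
      * (if d₁ (V₁ ω) = a₁ then (1:ℝ) else 0) with hHdef
  set D : Bool → Ω → ℝ := fun a₁ ω => U a₁ true ω - U a₁ false ω with hDdef
  have hDint : ∀ a₁, Integrable (D a₁) μ := fun a₁ => (hUint a₁ true).sub (hUint a₁ false)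
  have hHb : ∀ a₁ ω, ‖H a₁ ω‖ ≤ 1 := by
    intro a₁ ω
    simp only [hHdef, norm_mul, Real.norm_eq_abs]
    split_ifs <;> norm_num
  -- pointwise algebraic identity for the difference of integrands
  have hdiff : ∀ ω,
      (∑ a₁ : Bool, ∑ a₂ : Bool,
        U a₁ a₂ ω * (if d₀₂ a₁ (V₂ a₁ ω) = a₂ then (1:ℝ) else 0)
          * (if d₁ (V₁ ω) = a₁ then (1:ℝ) else 0))
      - (∑ a₁ : Bool, ∑ a₂ : Bool,
        U a₁ a₂ ω * (if d₂ a₁ (V₂ a₁ ω) = a₂ then (1:ℝ) else 0)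
          * (if d₁ (V₁ ω) = a₁ then (1:ℝ) else 0))
      = ∑ a₁ : Bool, H a₁ ω * D a₁ ω := by
    intro ω
    simp only [hHdef, hDdef, Fintype.sum_bool]
    generalize d₀₂ false (V₂ false ω) = p1
    generalize d₀₂ true (V₂ true ω) = p2
    generalize d₂ false (V₂ false ω) = q1
    generalize d₂ true (V₂ true ω) = q2
    generalize d₁ (V₁ ω) = r
    cases p1 <;> cases p2 <;> cases q1 <;> cases q2 <;> cases r <;> simp <;> ring
  -- ambient measurability of H
  have hHmeas : ∀ a₁ : Bool, Measurable (H a₁) := by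
    intro a₁
    exact (((meas_ind' ((hd₀₂m a₁).comp (hV₂ a₁)) true).sub
      (meas_ind' ((hd₂ a₁).comp (hV₂ a₁)) true)).mul
      (meas_ind' (hd₁.comp hV₁) a₁))
  have hHDint : ∀ a₁ : Bool, Integrable (fun ω => H a₁ ω * D a₁ ω) μ := fun a₁ =>
    (hDint a₁).bdd_mul (c := 1) (hHmeas a₁).aestronglyMeasurable (Filter.Eventually.of_forall (hHb a₁))
  -- pointwise nonnegativity of H · (B₂ ∘ V₂)
  have hptnn : ∀ (a₁ : Bool) (ω : Ω), 0 ≤ H a₁ ω * B₂ a₁ (V₂ a₁ ω) := by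
    intro a₁ ω
    simp only [hHdef, hd₀₂ a₁ (V₂ a₁ ω)]
    rcases lt_or_ge 0 (B₂ a₁ (V₂ a₁ ω)) with hb | hb
    · simp only [hb, if_true, reduceIte]
      split_ifs <;> first | exact (‹False›).elim | nlinarith [hb]
    · have hb' : ¬ 0 < B₂ a₁ (V₂ a₁ ω) := not_lt.mpr hb
      simp only [hb', if_false, reduceIte]
      split_ifs <;> first | exact (‹False›).elim | nlinarith [hb]
  -- per-arm nonnegativity
  have hpos : ∀ a₁ : Bool, 0 ≤ ∫ ω, H a₁ ω * D a₁ ω ∂μ := by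
    intro a₁
    have hgoal : ∫ ω, H a₁ ω * D a₁ ω ∂μ = ∫ ω, H a₁ ω * B₂ a₁ (V₂ a₁ ω) ∂μ := by
      rcases hcond with h | h
      · refine key_pullout μ ((hV₂ a₁).comap_le) ?_ (hHb a₁) (hDint a₁) (hB₂ a₁).symm
        have hV₂m : Measurable[MeasurableSpace.comap (V₂ a₁) inferInstance] (V₂ a₁) :=
          measurable_iff_comap_le.mpr le_rfl
        exact ((((meas_ind' ((hd₀₂m a₁).comp hV₂m) true).sub
          (meas_ind' ((hd₂ a₁).comp hV₂m) true)).mul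
          (meas_ind' (hd₁.comp (h a₁)) a₁))).stronglyMeasurable
      · have hce : μ[D a₁ | MeasurableSpace.comap V₁ inferInstance
            ⊔ MeasurableSpace.comap (V₂ a₁) inferInstance]
            =ᵐ[μ] fun ω => B₂ a₁ (V₂ a₁ ω) := by
          have e1 := condExp_sub (m := MeasurableSpace.comap V₁ inferInstance
            ⊔ MeasurableSpace.comap (V₂ a₁) inferInstance) (μ := μ)
            (hUint a₁ true) (hUint a₁ false)
          have e2 := condExp_sub (m := MeasurableSpace.comap (V₂ a₁) inferInstance) (μ := μ)
            (hUint a₁ true) (hUint a₁ false)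
          filter_upwards [e1, e2, h a₁ true, h a₁ false, hB₂ a₁] with ω h1 h2 h3 h4 h5
          have h1' : (μ[D a₁ | MeasurableSpace.comap V₁ inferInstance
              ⊔ MeasurableSpace.comap (V₂ a₁) inferInstance]) ω
              = (μ[U a₁ true | MeasurableSpace.comap V₁ inferInstance
                  ⊔ MeasurableSpace.comap (V₂ a₁) inferInstance]) ω
                - (μ[U a₁ false | MeasurableSpace.comap V₁ inferInstance
                  ⊔ MeasurableSpace.comap (V₂ a₁) inferInstance]) ω := h1
          have h2' : (μ[D a₁ | MeasurableSpace.comap (V₂ a₁) inferInstance]) ω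
              = (μ[U a₁ true | MeasurableSpace.comap (V₂ a₁) inferInstance]) ω
                - (μ[U a₁ false | MeasurableSpace.comap (V₂ a₁) inferInstance]) ω := h2
          show (μ[D a₁ | MeasurableSpace.comap V₁ inferInstance
            ⊔ MeasurableSpace.comap (V₂ a₁) inferInstance]) ω = B₂ a₁ (V₂ a₁ ω)
          rw [h1', h3, h4, ← h2', ← h5]
        refine key_pullout μ (sup_le hV₁.comap_le (hV₂ a₁).comap_le) ?_ (hHb a₁)
          (hDint a₁) hce
        have hV₁m : Measurable[MeasurableSpace.comap V₁ inferInstance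
            ⊔ MeasurableSpace.comap (V₂ a₁) inferInstance] V₁ :=
          measurable_iff_comap_le.mpr le_sup_left
        have hV₂m : Measurable[MeasurableSpace.comap V₁ inferInstance
            ⊔ MeasurableSpace.comap (V₂ a₁) inferInstance] (V₂ a₁) :=
          measurable_iff_comap_le.mpr le_sup_right
        exact ((((meas_ind' ((hd₀₂m a₁).comp hV₂m) true).sub
          (meas_ind' ((hd₂ a₁).comp hV₂m) true)).mul
          (meas_ind' (hd₁.comp hV₁m) a₁))).stronglyMeasurable
    rw [hgoal]
    exact integral_nonneg (hptnn a₁)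
  -- conclude
  rw [← sub_nonneg, ← integral_sub (hsum_int d₀₂ hd₀₂m) (hsum_int d₂ hd₂)]
  have : (fun ω =>
      (∑ a₁ : Bool, ∑ a₂ : Bool,
        U a₁ a₂ ω * (if d₀₂ a₁ (V₂ a₁ ω) = a₂ then (1:ℝ) else 0)
          * (if d₁ (V₁ ω) = a₁ then (1:ℝ) else 0))
      - (∑ a₁ : Bool, ∑ a₂ : Bool,
        U a₁ a₂ ω * (if d₂ a₁ (V₂ a₁ ω) = a₂ then (1:ℝ) else 0)
          * (if d₁ (V₁ ω) = a₁ then (1:ℝ) else 0)))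
      = fun ω => ∑ a₁ : Bool, H a₁ ω * D a₁ ω := funext hdiff
  rw [this, integral_finset_sum]
  · exact Finset.sum_nonneg fun a₁ _ => hpos a₁
  · exact fun a₁ _ => hHDint a₁
end

section
/- Stage-1 optimality step: for every stage-1 rule d₁, Val(d₁, d₀,₂) ≤ Val(d₀,₁, d₀,₂), where d₀,₁(v₁) = 1{B₀,₁(v₁) > 0}. -/
open MeasureTheory

/-- Stage-1 optimality step: for every stage-1 rule `d₁`,
`Val(d₁, d₀,₂) ≤ Val(d₀,₁, d₀,₂)`, where `d₀,₁(v₁) = 1{B₀,₁(v₁) > 0}`. -/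
theorem two_stage_stage1_optimality
    {Ω 𝓥₁ 𝓥₂ : Type*} [MeasurableSpace Ω] [MeasurableSpace 𝓥₁] [MeasurableSpace 𝓥₂]
    (μ : Measure Ω) [IsProbabilityMeasure μ]
    (U : Bool → Bool → Ω → ℝ)
    (hUm : ∀ a₁ a₂, Measurable (U a₁ a₂))
    (hUint : ∀ a₁ a₂, Integrable (U a₁ a₂) μ)
    (V₁ : Ω → 𝓥₁) (hV₁ : Measurable V₁)
    (V₂ : Bool → Ω → 𝓥₂) (hV₂ : ∀ a₁, Measurable (V₂ a₁))
    -- stage-2 blip and optimal rule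
    (B₂ : Bool → 𝓥₂ → ℝ) (hB₂m : ∀ a₁, Measurable (B₂ a₁))
    (hB₂ : ∀ a₁ : Bool, (fun ω => B₂ a₁ (V₂ a₁ ω)) =ᵐ[μ]
      μ[(fun ω => U a₁ true ω - U a₁ false ω)
        | MeasurableSpace.comap (V₂ a₁) inferInstance])
    (d₀₂ : Bool → 𝓥₂ → Bool)
    (hd₀₂ : ∀ a₁ v₂, d₀₂ a₁ v₂ = if 0 < B₂ a₁ v₂ then true else false)
    -- stage-1 blip and optimal rule
    (B₁ : 𝓥₁ → ℝ) (hB₁m : Measurable B₁)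
    (hB₁ : (fun ω => B₁ (V₁ ω)) =ᵐ[μ]
      μ[(fun ω =>
          (∑ a₂ : Bool, U true a₂ ω * (if d₀₂ true (V₂ true ω) = a₂ then (1:ℝ) else 0))
          - ∑ a₂ : Bool, U false a₂ ω * (if d₀₂ false (V₂ false ω) = a₂ then (1:ℝ) else 0))
        | MeasurableSpace.comap V₁ inferInstance])
    (d₀₁ : 𝓥₁ → Bool)
    (hd₀₁ : ∀ v₁, d₀₁ v₁ = if 0 < B₁ v₁ then true else false)
    -- an arbitrary stage-1 rule
    (d₁ : 𝓥₁ → Bool) (hd₁ : Measurable d₁) :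
    ∫ ω, ∑ a₁ : Bool, ∑ a₂ : Bool,
        U a₁ a₂ ω * (if d₀₂ a₁ (V₂ a₁ ω) = a₂ then (1:ℝ) else 0)
          * (if d₁ (V₁ ω) = a₁ then (1:ℝ) else 0) ∂μ
    ≤ ∫ ω, ∑ a₁ : Bool, ∑ a₂ : Bool,
        U a₁ a₂ ω * (if d₀₂ a₁ (V₂ a₁ ω) = a₂ then (1:ℝ) else 0)
          * (if d₀₁ (V₁ ω) = a₁ then (1:ℝ) else 0) ∂μ := by
  classical
  have hm : MeasurableSpace.comap V₁ inferInstance ≤ ‹MeasurableSpace Ω› :=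
    measurable_iff_comap_le.mp hV₁
  -- measurability of the optimal stage-2 rule
  have hd₀₂m : ∀ a₁, Measurable (d₀₂ a₁) := by
    intro a₁
    have : d₀₂ a₁ = fun v => if 0 < B₂ a₁ v then true else false :=
      funext (hd₀₂ a₁)
    rw [this]
    exact Measurable.ite (measurableSet_lt measurable_const (hB₂m a₁))
      measurable_const measurable_const
  have hd₀₁m : Measurable d₀₁ := by
    have : d₀₁ = fun v => if 0 < B₁ v then true else false := funext hd₀₁
    rw [this]
    exact Measurable.ite (measurableSet_lt measurable_const hB₁m)
      measurable_const measurable_const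
  -- stage-2 value functions
  set W : Bool → Ω → ℝ := fun a₁ ω =>
    ∑ a₂ : Bool, U a₁ a₂ ω * (if d₀₂ a₁ (V₂ a₁ ω) = a₂ then (1:ℝ) else 0) with hW_def
  set f : Ω → ℝ := fun ω => W true ω - W false ω with hf_def
  have hWint : ∀ a₁, Integrable (W a₁) μ := by
    intro a₁
    apply integrable_finset_sum
    intro a₂ _
    have heq : (fun ω => U a₁ a₂ ω * (if d₀₂ a₁ (V₂ a₁ ω) = a₂ then (1:ℝ) else 0))
        = Set.indicator {ω | d₀₂ a₁ (V₂ a₁ ω) = a₂} (U a₁ a₂) := by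
      ext ω
      by_cases h : d₀₂ a₁ (V₂ a₁ ω) = a₂ <;> simp [Set.indicator, h]
    rw [heq]
    refine (hUint a₁ a₂).indicator ?_
    exact ((hd₀₂m a₁).comp (hV₂ a₁)) (measurableSet_singleton a₂)
  have hfint : Integrable f μ := (hWint true).sub (hWint false)
  -- pointwise decomposition of the value integrand for any stage-1 rule
  have hval : ∀ (d : 𝓥₁ → Bool) (ω : Ω),
      (∑ a₁ : Bool, ∑ a₂ : Bool,
        U a₁ a₂ ω * (if d₀₂ a₁ (V₂ a₁ ω) = a₂ then (1:ℝ) else 0)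
          * (if d (V₁ ω) = a₁ then (1:ℝ) else 0))
      = W false ω + Set.indicator (V₁ ⁻¹' (d ⁻¹' {true})) f ω := by
    intro d ω
    by_cases h : d (V₁ ω) = true
    · have hmem : ω ∈ V₁ ⁻¹' (d ⁻¹' {true}) := h
      rw [Set.indicator_of_mem hmem]
      simp only [Fintype.sum_bool, h, hf_def, hW_def, if_true, if_false,
        Bool.true_eq_false, Bool.false_eq_true, mul_one, mul_zero]
      ring
    · have hmem : ω ∉ V₁ ⁻¹' (d ⁻¹' {true}) := h
      have h' : d (V₁ ω) = false := by
        cases hdd : d (V₁ ω) <;> simp_all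
      rw [Set.indicator_of_notMem hmem]
      simp only [Fintype.sum_bool, h', hW_def, if_true, if_false,
        Bool.true_eq_false, Bool.false_eq_true, mul_one, mul_zero]
      ring
  -- the value of a rule
  have hVal : ∀ (d : 𝓥₁ → Bool), Measurable d →
      ∫ ω, ∑ a₁ : Bool, ∑ a₂ : Bool,
        U a₁ a₂ ω * (if d₀₂ a₁ (V₂ a₁ ω) = a₂ then (1:ℝ) else 0)
          * (if d (V₁ ω) = a₁ then (1:ℝ) else 0) ∂μ
      = ∫ ω, W false ω ∂μ
        + ∫ ω, Set.indicator (V₁ ⁻¹' (d ⁻¹' {true})) (fun ω => B₁ (V₁ ω)) ω ∂μ := by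
    intro d hd
    have hsm : MeasurableSet[MeasurableSpace.comap V₁ inferInstance] (V₁ ⁻¹' (d ⁻¹' {true})) :=
      ⟨d ⁻¹' {true}, hd (measurableSet_singleton true), rfl⟩
    have hs : MeasurableSet (V₁ ⁻¹' (d ⁻¹' {true})) := hm _ hsm
    have h1 : ∫ ω, ∑ a₁ : Bool, ∑ a₂ : Bool,
          U a₁ a₂ ω * (if d₀₂ a₁ (V₂ a₁ ω) = a₂ then (1:ℝ) else 0)
            * (if d (V₁ ω) = a₁ then (1:ℝ) else 0) ∂μ
        = ∫ ω, (W false ω + Set.indicator (V₁ ⁻¹' (d ⁻¹' {true})) f ω) ∂μ := by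
      exact integral_congr_ae (Filter.Eventually.of_forall (hval d))
    rw [h1, integral_add (hWint false) (hfint.indicator hs)]
    congr 1
    rw [integral_indicator hs, integral_indicator hs]
    rw [← setIntegral_condExp hm hfint hsm]
    refine setIntegral_congr_ae hs ?_
    filter_upwards [hB₁] with ω hω _
    exact hω.symm
  rw [hVal d₁ hd₁, hVal d₀₁ hd₀₁m]
  apply add_le_add_right
  -- compare the two indicator integrals pointwise
  have hgint : Integrable (fun ω => B₁ (V₁ ω)) μ :=
    integrable_condExp.congr hB₁.symm
  have hsd : MeasurableSet (V₁ ⁻¹' (d₁ ⁻¹' {true})) :=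
    hV₁ (hd₁ (measurableSet_singleton true))
  have hso : MeasurableSet (V₁ ⁻¹' (d₀₁ ⁻¹' {true})) :=
    hV₁ (hd₀₁m (measurableSet_singleton true))
  refine integral_mono (hgint.indicator hsd) (hgint.indicator hso) ?_
  intro ω
  by_cases h : 0 < B₁ (V₁ ω)
  · have hmem : ω ∈ V₁ ⁻¹' (d₀₁ ⁻¹' {true}) := by
      simp [Set.mem_preimage, hd₀₁, h]
    rw [Set.indicator_of_mem hmem]
    by_cases h2 : ω ∈ V₁ ⁻¹' (d₁ ⁻¹' {true})
    · rw [Set.indicator_of_mem h2]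
    · rw [Set.indicator_of_notMem h2]; exact h.le
  · have hmem : ω ∉ V₁ ⁻¹' (d₀₁ ⁻¹' {true}) := by
      simp [Set.mem_preimage, hd₀₁, h]
    rw [Set.indicator_of_notMem hmem]
    by_cases h2 : ω ∈ V₁ ⁻¹' (d₁ ⁻¹' {true})
    · rw [Set.indicator_of_mem h2]; exact not_lt.mp h
    · rw [Set.indicator_of_notMem h2]
end

section
/- Double robustness of the two-stage policy value score: let g = (g₁, g₂) be measurable maps gₖ : ℋₖ × {0,1} → (0,1] with gₖ(Hₖ, Aₖ) ≥ δ almost surely for some δ > 0, and let Q = (Q₁, Q₂) be measurable maps Qₖ : ℋₖ × {0,1} → ℝ with Qₖ(Hₖ, a) integrable for each a. If g = (g₀,₁, g₀,₂) or Q = (Qᵈ₀,₁, Q₀,₂), then E[Z₁(d, g, Q)] = E[Qᵈ₀,₁(H₁, d₁(H₁))]. -/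
open MeasureTheory Filter

section Aux

variable {Ω : Type*}

lemma dr_measurableSet_bool_eq {m : MeasurableSpace Ω} {f g : Ω → Bool}
    (hf : Measurable[m] f) (hg : Measurable[m] g) :
    MeasurableSet[m] {ω | f ω = g ω} := by
  have h : {ω | f ω = g ω}
      = (f ⁻¹' {true} ∩ g ⁻¹' {true}) ∪ (f ⁻¹' {false} ∩ g ⁻¹' {false}) := by
    ext ω
    cases hfw : f ω <;> cases hgw : g ω <;> simp [hfw, hgw]
  rw [h]
  exact ((hf (measurableSet_singleton true)).inter (hg (measurableSet_singleton true))).union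
    ((hf (measurableSet_singleton false)).inter (hg (measurableSet_singleton false)))

lemma dr_measurable_select {𝓗 : Type*} [MeasurableSpace 𝓗] {F : 𝓗 → Bool → ℝ}
    (hF : ∀ a, Measurable fun h => F h a) {d : 𝓗 → Bool} (hd : Measurable d) :
    Measurable fun h => F h (d h) := by
  have h : (fun h => F h (d h)) = fun h => if d h = true then F h true else F h false := by
    funext h; cases hdh : d h <;> simp [hdh]
  rw [h]
  exact Measurable.ite (hd (measurableSet_singleton true)) (hF true) (hF false)

lemma dr_integrable_select {𝓗 : Type*} {mΩ : MeasurableSpace Ω} [MeasurableSpace 𝓗]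
    {μ : Measure Ω} {F : 𝓗 → Bool → ℝ} {H : Ω → 𝓗} {d : 𝓗 → Bool}
    (hH : Measurable H) (hd : Measurable d)
    (hint : ∀ a, Integrable (fun ω => F (H ω) a) μ) :
    Integrable (fun ω => F (H ω) (d (H ω))) μ := by
  have hs : MeasurableSet {ω | d (H ω) = true} := (hd.comp hH) (measurableSet_singleton true)
  have h : (fun ω => F (H ω) (d (H ω)))
      = fun ω => {ω | d (H ω) = true}.indicator (fun ω => F (H ω) true) ω
          + {ω | d (H ω) = true}ᶜ.indicator (fun ω => F (H ω) false) ω := by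
    funext ω
    by_cases hdh : d (H ω) = true <;>
      simp [Set.indicator_apply, Set.mem_setOf_eq, Set.mem_compl_iff, hdh,
        Bool.not_eq_true]
  rw [h]
  exact ((hint true).indicator hs).add ((hint false).indicator hs.compl)

lemma dr_integrable_bdd_mul {mΩ : MeasurableSpace Ω} {μ : Measure Ω} {W Y : Ω → ℝ} {C : ℝ}
    (hW : AEStronglyMeasurable W μ) (hY : Integrable Y μ) (hb : ∀ᵐ ω ∂μ, ‖W ω‖ ≤ C) :
    Integrable (fun ω => W ω * Y ω) μ := by
  refine (hY.abs.const_mul C).mono' (hW.mul hY.1) ?_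
  filter_upwards [hb] with ω h
  have := mul_le_mul_of_nonneg_right h (norm_nonneg (Y ω))
  simpa [Real.norm_eq_abs, abs_mul] using this

lemma dr_integral_mul_condexp {mΩ : MeasurableSpace Ω} (μ : Measure Ω)
    [IsProbabilityMeasure μ] {m : MeasurableSpace Ω} (hm : m ≤ mΩ)
    {W Y G : Ω → ℝ} (hW : StronglyMeasurable[m] W) (hY : Integrable Y μ)
    (hWY : Integrable (fun ω => W ω * Y ω) μ) (hG : μ[Y|m] =ᵐ[μ] G) :
    ∫ ω, W ω * Y ω ∂μ = ∫ ω, W ω * G ω ∂μ := by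
  have h1 : μ[W * Y|m] =ᵐ[μ] W * μ[Y|m] :=
    condExp_mul_of_stronglyMeasurable_left hW (by simpa [Pi.mul_def] using hWY) hY
  calc ∫ ω, W ω * Y ω ∂μ = ∫ ω, (μ[W * Y|m]) ω ∂μ := (integral_condExp hm).symm
    _ = ∫ ω, W ω * G ω ∂μ := by
        refine integral_congr_ae (h1.trans ?_)
        filter_upwards [hG] with ω hω
        simp only [Pi.mul_apply]
        rw [hω]

lemma dr_condexp_mul_right {mΩ : MeasurableSpace Ω} (μ : Measure Ω)
    [IsProbabilityMeasure μ] {m : MeasurableSpace Ω}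
    {W Y G : Ω → ℝ} (hW : StronglyMeasurable[m] W)
    (hWY : Integrable (fun ω => Y ω * W ω) μ) (hY : Integrable Y μ)
    (hG : μ[Y|m] =ᵐ[μ] G) :
    μ[(fun ω => Y ω * W ω)|m] =ᵐ[μ] fun ω => G ω * W ω := by
  have h0 : (fun ω => Y ω * W ω) = W * Y := by funext ω; exact mul_comm _ _
  rw [h0]
  refine (condExp_mul_of_stronglyMeasurable_left hW (by rw [← h0]; exact hWY) hY).trans ?_
  filter_upwards [hG] with ω hω
  simp only [Pi.mul_apply]
  rw [hω, mul_comm]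

lemma dr_policy_condexp {mΩ : MeasurableSpace Ω} (μ : Measure Ω)
    [IsProbabilityMeasure μ] {m : MeasurableSpace Ω} (hm : m ≤ mΩ)
    {p A : Ω → Bool} (hp : Measurable[m] p) (hA : Measurable[mΩ] A)
    {f : Ω → ℝ} (hf : Integrable f μ) {G : Bool → Ω → ℝ}
    (hG : ∀ a, μ[(fun ω => (if A ω = a then (1:ℝ) else 0) * f ω)|m] =ᵐ[μ] G a) :
    μ[(fun ω => (if A ω = p ω then (1:ℝ) else 0) * f ω)|m] =ᵐ[μ] fun ω => G (p ω) ω := by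
  have hIm : ∀ a : Bool, Measurable[mΩ] fun ω => (if A ω = a then (1:ℝ) else 0) :=
    fun a => Measurable.ite (hA (measurableSet_singleton a)) measurable_const measurable_const
  have hIf : ∀ a : Bool, Integrable (fun ω => (if A ω = a then (1:ℝ) else 0) * f ω) μ := by
    intro a
    refine dr_integrable_bdd_mul (C := 1) (hIm a).aestronglyMeasurable hf ?_
    filter_upwards with ω
    by_cases h : A ω = a <;> simp [h]
  have hWm : ∀ a : Bool, StronglyMeasurable[m] fun ω => (if p ω = a then (1:ℝ) else 0) :=
    fun a => (Measurable.ite (hp (measurableSet_singleton a)) measurable_const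
      measurable_const).stronglyMeasurable
  set E : Bool → Ω → ℝ :=
    fun a ω => (if p ω = a then (1:ℝ) else 0) * ((if A ω = a then (1:ℝ) else 0) * f ω) with hE
  have hWf : ∀ a : Bool, Integrable (E a) μ := by
    intro a
    refine dr_integrable_bdd_mul (C := 1)
      (((hWm a).mono hm).measurable).aestronglyMeasurable (hIf a) ?_
    filter_upwards with ω
    by_cases h : p ω = a <;> simp [h]
  have hsplit : (fun ω => (if A ω = p ω then (1:ℝ) else 0) * f ω) = E true + E false := by
    funext ω; cases hpw : p ω <;> simp [hE, hpw]
  rw [hsplit]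
  have hEa : ∀ a, μ[E a|m] =ᵐ[μ] fun ω => (if p ω = a then (1:ℝ) else 0) * G a ω := by
    intro a
    have h0 : E a = (fun ω => (if p ω = a then (1:ℝ) else 0))
        * (fun ω => (if A ω = a then (1:ℝ) else 0) * f ω) := rfl
    rw [h0]
    refine (condExp_mul_of_stronglyMeasurable_left (hWm a) (by rw [← h0]; exact hWf a) (hIf a)).trans ?_
    filter_upwards [hG a] with ω hω
    simp only [Pi.mul_apply]
    rw [hω]
  refine (condExp_add (hWf true) (hWf false) m).trans
    (((hEa true).add (hEa false)).trans ?_)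
  filter_upwards with ω
  cases hpw : p ω <;> simp [Pi.add_apply, hpw]

end Aux


section Aux2
variable {Ω : Type*}

lemma dr_measurableSet_bool_eq' {m : MeasurableSpace Ω} {f g : Ω → Bool}
    (hf : Measurable[m] f) (hg : Measurable[m] g) :
    MeasurableSet[m] {ω | f ω = g ω} := by
  have h : {ω | f ω = g ω}
      = (f ⁻¹' {true} ∩ g ⁻¹' {true}) ∪ (f ⁻¹' {false} ∩ g ⁻¹' {false}) := by
    ext ω
    cases hfw : f ω <;> cases hgw : g ω <;> simp [hfw, hgw]
  rw [h]
  exact ((hf (measurableSet_singleton true)).inter (hg (measurableSet_singleton true))).union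
    ((hf (measurableSet_singleton false)).inter (hg (measurableSet_singleton false)))

lemma dr_measurable_select' {𝓗 : Type*} [MeasurableSpace 𝓗] {F : 𝓗 → Bool → ℝ}
    (hF : ∀ a, Measurable fun h => F h a) {d : 𝓗 → Bool} (hd : Measurable d) :
    Measurable fun h => F h (d h) := by
  have h : (fun h => F h (d h)) = fun h => if d h = true then F h true else F h false := by
    funext h; cases hdh : d h <;> simp [hdh]
  rw [h]
  exact Measurable.ite (hd (measurableSet_singleton true)) (hF true) (hF false)

lemma dr_integrable_winv_mul {𝓗 : Type*} {mΩ : MeasurableSpace Ω} [MeasurableSpace 𝓗]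
    {μ : Measure Ω} {g : 𝓗 → Bool → ℝ} {H : Ω → 𝓗} {dd : 𝓗 → Bool} {A : Ω → Bool}
    (hgm : ∀ a, Measurable fun h => g h a) (hg01 : ∀ h a, g h a ∈ Set.Ioc (0:ℝ) 1)
    (hH : Measurable H) (hd : Measurable dd) (hA : Measurable A)
    {δ : ℝ} (hδ : 0 < δ) (hgpos : ∀ᵐ ω ∂μ, δ ≤ g (H ω) (A ω))
    {X : Ω → ℝ} (hX : Integrable X μ) :
    Integrable (fun ω => (g (H ω) (dd (H ω)))⁻¹
      * ((if A ω = dd (H ω) then (1:ℝ) else 0) * X ω)) μ := by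
  refine (hX.abs.const_mul δ⁻¹).mono' ?_ ?_
  · exact (((dr_measurable_select' hgm hd).comp hH).inv.aestronglyMeasurable).mul
      ((Measurable.ite (dr_measurableSet_bool_eq' hA (hd.comp hH)) measurable_const
        measurable_const).aestronglyMeasurable.mul hX.1)
  · filter_upwards [hgpos] with ω h1
    by_cases hc : A ω = dd (H ω)
    · rw [← hc]
      have r1 : (if A ω = A ω then (1:ℝ) else 0) = 1 := if_pos rfl
      rw [r1, one_mul, Real.norm_eq_abs, abs_mul,
        abs_of_nonneg (inv_nonneg.mpr (hg01 _ _).1.le)]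
      exact mul_le_mul_of_nonneg_right (inv_anti₀ hδ h1) (abs_nonneg _)
    · have r1 : (if A ω = dd (H ω) then (1:ℝ) else 0) = 0 := if_neg hc
      rw [r1, zero_mul, mul_zero, norm_zero]
      positivity

lemma dr_integrable_term3 {𝓗₁ 𝓗₂ : Type*} {mΩ : MeasurableSpace Ω}
    [MeasurableSpace 𝓗₁] [MeasurableSpace 𝓗₂]
    {μ : Measure Ω} {g₁ : 𝓗₁ → Bool → ℝ} {g₂ : 𝓗₂ → Bool → ℝ} {H₁ : Ω → 𝓗₁} {H₂ : Ω → 𝓗₂}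
    {d₁ : 𝓗₁ → Bool} {d₂ : 𝓗₂ → Bool} {A₁ A₂ : Ω → Bool}
    (hg₁m : ∀ a, Measurable fun h => g₁ h a) (hg₁01 : ∀ h a, g₁ h a ∈ Set.Ioc (0:ℝ) 1)
    (hg₂m : ∀ a, Measurable fun h => g₂ h a) (hg₂01 : ∀ h a, g₂ h a ∈ Set.Ioc (0:ℝ) 1)
    (hH₁ : Measurable H₁) (hH₂ : Measurable H₂) (hd₁ : Measurable d₁) (hd₂ : Measurable d₂)
    (hA₁ : Measurable A₁) (hA₂ : Measurable A₂)
    {δ : ℝ} (hδ : 0 < δ) (hgpos₁ : ∀ᵐ ω ∂μ, δ ≤ g₁ (H₁ ω) (A₁ ω))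
    (hgpos₂ : ∀ᵐ ω ∂μ, δ ≤ g₂ (H₂ ω) (A₂ ω))
    {X : Ω → ℝ} (hX : Integrable X μ) :
    Integrable (fun ω => ((g₁ (H₁ ω) (d₁ (H₁ ω)))⁻¹
        * (if A₁ ω = d₁ (H₁ ω) then (1:ℝ) else 0) * (g₂ (H₂ ω) (d₂ (H₂ ω)))⁻¹)
      * ((if A₂ ω = d₂ (H₂ ω) then (1:ℝ) else 0) * X ω)) μ := by
  refine (hX.abs.const_mul (δ⁻¹ * δ⁻¹)).mono' ?_ ?_
  · exact ((((dr_measurable_select' hg₁m hd₁).comp hH₁).inv.mul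
        (Measurable.ite (dr_measurableSet_bool_eq' hA₁ (hd₁.comp hH₁)) measurable_const
          measurable_const)).mul
        ((dr_measurable_select' hg₂m hd₂).comp hH₂).inv).aestronglyMeasurable.mul
      ((Measurable.ite (dr_measurableSet_bool_eq' hA₂ (hd₂.comp hH₂)) measurable_const
        measurable_const).aestronglyMeasurable.mul hX.1)
  · filter_upwards [hgpos₁, hgpos₂] with ω h1 h2
    by_cases hc1 : A₁ ω = d₁ (H₁ ω)
    · by_cases hc2 : A₂ ω = d₂ (H₂ ω)
      · rw [← hc1, ← hc2]
        have r1 : (if A₁ ω = A₁ ω then (1:ℝ) else 0) = 1 := if_pos rfl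
        have r2 : (if A₂ ω = A₂ ω then (1:ℝ) else 0) = 1 := if_pos rfl
        rw [r1, r2, mul_one, one_mul, Real.norm_eq_abs]
        have e1 : |(g₁ (H₁ ω) (A₁ ω))⁻¹| ≤ δ⁻¹ := by
          rw [abs_of_nonneg (inv_nonneg.mpr (hg₁01 _ _).1.le)]
          exact inv_anti₀ hδ h1
        have e2 : |(g₂ (H₂ ω) (A₂ ω))⁻¹| ≤ δ⁻¹ := by
          rw [abs_of_nonneg (inv_nonneg.mpr (hg₂01 _ _).1.le)]
          exact inv_anti₀ hδ h2
        calc |(g₁ (H₁ ω) (A₁ ω))⁻¹ * (g₂ (H₂ ω) (A₂ ω))⁻¹ * X ω|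
            = |(g₁ (H₁ ω) (A₁ ω))⁻¹| * |(g₂ (H₂ ω) (A₂ ω))⁻¹| * |X ω| := by
              rw [abs_mul, abs_mul]
          _ ≤ δ⁻¹ * δ⁻¹ * |X ω| :=
              mul_le_mul_of_nonneg_right
                (mul_le_mul e1 e2 (abs_nonneg _) (inv_nonneg.mpr hδ.le)) (abs_nonneg _)
      · have r2 : (if A₂ ω = d₂ (H₂ ω) then (1:ℝ) else 0) = 0 := if_neg hc2
        rw [r2, zero_mul, mul_zero, norm_zero]
        positivity
    · have r1 : (if A₁ ω = d₁ (H₁ ω) then (1:ℝ) else 0) = 0 := if_neg hc1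
      rw [r1, mul_zero, zero_mul, zero_mul, norm_zero]
      positivity

end Aux2



set_option maxHeartbeats 1000000 in
/-- Double robustness of the two-stage policy value score: if `g = (g₀,₁, g₀,₂)` or
`Q = (Qᵈ₀,₁, Q₀,₂)`, then `E[Z₁(d, g, Q)] = E[Qᵈ₀,₁(H₁, d₁(H₁))]`. -/
theorem two_stage_dr_value
    {Ω 𝓗₁ 𝓗₂ : Type*} [MeasurableSpace Ω] [MeasurableSpace 𝓗₁] [MeasurableSpace 𝓗₂]
    (μ : Measure Ω) [IsProbabilityMeasure μ]
    (H₁ : Ω → 𝓗₁) (hH₁ : Measurable H₁)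
    (H₂ : Ω → 𝓗₂) (hH₂ : Measurable H₂)
    (hsub : MeasurableSpace.comap H₁ inferInstance ≤ MeasurableSpace.comap H₂ inferInstance)
    (A₁ A₂ : Ω → Bool) (hA₁ : Measurable A₁) (hA₂ : Measurable A₂)
    (hA₁H₂ : Measurable[MeasurableSpace.comap H₂ inferInstance] A₁)
    (U : Ω → ℝ) (hU : Integrable U μ)
    -- true action probability models
    (g₀₁ : 𝓗₁ → Bool → ℝ) (hg₀₁m : ∀ a, Measurable fun h => g₀₁ h a)
    (hg₀₁01 : ∀ h a, g₀₁ h a ∈ Set.Icc (0:ℝ) 1)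
    (hg₀₁cond : ∀ a : Bool, (fun ω => g₀₁ (H₁ ω) a)
      =ᵐ[μ] μ[(fun ω => if A₁ ω = a then (1:ℝ) else 0) | MeasurableSpace.comap H₁ inferInstance])
    (g₀₂ : 𝓗₂ → Bool → ℝ) (hg₀₂m : ∀ a, Measurable fun h => g₀₂ h a)
    (hg₀₂01 : ∀ h a, g₀₂ h a ∈ Set.Icc (0:ℝ) 1)
    (hg₀₂cond : ∀ a : Bool, (fun ω => g₀₂ (H₂ ω) a)
      =ᵐ[μ] μ[(fun ω => if A₂ ω = a then (1:ℝ) else 0) | MeasurableSpace.comap H₂ inferInstance])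
    (ε : ℝ) (hε : 0 < ε)
    (hpos₁ : ∀ᵐ ω ∂μ, ε ≤ g₀₁ (H₁ ω) (A₁ ω))
    (hpos₂ : ∀ᵐ ω ∂μ, ε ≤ g₀₂ (H₂ ω) (A₂ ω))
    -- the policy
    (d₁ : 𝓗₁ → Bool) (hd₁ : Measurable d₁)
    (d₂ : 𝓗₂ → Bool) (hd₂ : Measurable d₂)
    -- true outcome regression models
    (Q₀₂ : 𝓗₂ → Bool → ℝ) (hQ₀₂m : ∀ a, Measurable fun h => Q₀₂ h a)
    (hQ₀₂int : ∀ a : Bool, Integrable (fun ω => Q₀₂ (H₂ ω) a) μ)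
    (hQ₀₂cond : ∀ a : Bool, (fun ω => g₀₂ (H₂ ω) a * Q₀₂ (H₂ ω) a)
      =ᵐ[μ] μ[(fun ω => (if A₂ ω = a then (1:ℝ) else 0) * U ω)
              | MeasurableSpace.comap H₂ inferInstance])
    (Qd₀₁ : 𝓗₁ → Bool → ℝ) (hQd₀₁m : ∀ a, Measurable fun h => Qd₀₁ h a)
    (hQd₀₁int : ∀ a : Bool, Integrable (fun ω => Qd₀₁ (H₁ ω) a) μ)
    (hQd₀₁cond : ∀ a : Bool, (fun ω => g₀₁ (H₁ ω) a * Qd₀₁ (H₁ ω) a)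
      =ᵐ[μ] μ[(fun ω => (if A₁ ω = a then (1:ℝ) else 0) * Q₀₂ (H₂ ω) (d₂ (H₂ ω)))
              | MeasurableSpace.comap H₁ inferInstance])
    -- nuisance models
    (g₁ : 𝓗₁ → Bool → ℝ) (hg₁m : ∀ a, Measurable fun h => g₁ h a)
    (hg₁01 : ∀ h a, g₁ h a ∈ Set.Ioc (0:ℝ) 1)
    (g₂ : 𝓗₂ → Bool → ℝ) (hg₂m : ∀ a, Measurable fun h => g₂ h a)
    (hg₂01 : ∀ h a, g₂ h a ∈ Set.Ioc (0:ℝ) 1)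
    (δ : ℝ) (hδ : 0 < δ)
    (hgpos₁ : ∀ᵐ ω ∂μ, δ ≤ g₁ (H₁ ω) (A₁ ω))
    (hgpos₂ : ∀ᵐ ω ∂μ, δ ≤ g₂ (H₂ ω) (A₂ ω))
    (Q₁ : 𝓗₁ → Bool → ℝ) (hQ₁m : ∀ a, Measurable fun h => Q₁ h a)
    (hQ₁int : ∀ a : Bool, Integrable (fun ω => Q₁ (H₁ ω) a) μ)
    (Q₂ : 𝓗₂ → Bool → ℝ) (hQ₂m : ∀ a, Measurable fun h => Q₂ h a)
    (hQ₂int : ∀ a : Bool, Integrable (fun ω => Q₂ (H₂ ω) a) μ)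
    -- double robustness hypothesis
    (hgQ : (g₁ = g₀₁ ∧ g₂ = g₀₂) ∨ (Q₁ = Qd₀₁ ∧ Q₂ = Q₀₂)) :
    ∫ ω, (Q₁ (H₁ ω) (d₁ (H₁ ω))
        + (if A₁ ω = d₁ (H₁ ω) then (1:ℝ) else 0) / g₁ (H₁ ω) (A₁ ω)
          * (Q₂ (H₂ ω) (d₂ (H₂ ω)) - Q₁ (H₁ ω) (d₁ (H₁ ω)))
        + ((if A₁ ω = d₁ (H₁ ω) then (1:ℝ) else 0)
              * (if A₂ ω = d₂ (H₂ ω) then (1:ℝ) else 0))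
            / (g₁ (H₁ ω) (A₁ ω) * g₂ (H₂ ω) (A₂ ω))
          * (U ω - Q₂ (H₂ ω) (d₂ (H₂ ω)))) ∂μ
    = ∫ ω, Qd₀₁ (H₁ ω) (d₁ (H₁ ω)) ∂μ := by
  classical
  rename_i mΩ mH1 mH2 hprob
  set m₁ := MeasurableSpace.comap H₁ inferInstance with hm₁def
  set m₂ := MeasurableSpace.comap H₂ inferInstance with hm₂def
  have hm₂ : m₂ ≤ mΩ := hH₂.comap_le
  have hm₁ : m₁ ≤ mΩ := hsub.trans hm₂
  have hH₁m₁ : Measurable[m₁] H₁ := measurable_iff_comap_le.mpr le_rfl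
  have hH₂m₂ : Measurable[m₂] H₂ := measurable_iff_comap_le.mpr le_rfl
  have hH₁m₂ : Measurable[m₂] H₁ := measurable_iff_comap_le.mpr hsub
  -- measurability of building blocks
  have hι₁m : Measurable[m₂] fun ω => (if A₁ ω = d₁ (H₁ ω) then (1:ℝ) else 0) :=
    Measurable.ite (dr_measurableSet_bool_eq hA₁H₂ (hd₁.comp hH₁m₂)) measurable_const
      measurable_const
  have hι₂m : Measurable[mΩ] fun ω => (if A₂ ω = d₂ (H₂ ω) then (1:ℝ) else 0) :=
    Measurable.ite (dr_measurableSet_bool_eq hA₂ (hd₂.comp hH₂)) measurable_const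
      measurable_const
  have hw₁m : Measurable[m₁] fun ω => (g₁ (H₁ ω) (d₁ (H₁ ω)))⁻¹ :=
    ((dr_measurable_select hg₁m hd₁).comp hH₁m₁).inv
  have hw₂m : Measurable[m₂] fun ω => (g₂ (H₂ ω) (d₂ (H₂ ω)))⁻¹ :=
    ((dr_measurable_select hg₂m hd₂).comp hH₂m₂).inv
  have hq₁m : Measurable[m₁] fun ω => Q₁ (H₁ ω) (d₁ (H₁ ω)) :=
    (dr_measurable_select hQ₁m hd₁).comp hH₁m₁
  have hq₂m : Measurable[m₂] fun ω => Q₂ (H₂ ω) (d₂ (H₂ ω)) :=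
    (dr_measurable_select hQ₂m hd₂).comp hH₂m₂
  have hqdm : Measurable[m₁] fun ω => Qd₀₁ (H₁ ω) (d₁ (H₁ ω)) :=
    (dr_measurable_select hQd₀₁m hd₁).comp hH₁m₁
  -- integrability of regressions along the policy
  have hq₁i : Integrable (fun ω => Q₁ (H₁ ω) (d₁ (H₁ ω))) μ :=
    dr_integrable_select hH₁ hd₁ hQ₁int
  have hq₂i : Integrable (fun ω => Q₂ (H₂ ω) (d₂ (H₂ ω))) μ :=
    dr_integrable_select hH₂ hd₂ hQ₂int
  have hqdi : Integrable (fun ω => Qd₀₁ (H₁ ω) (d₁ (H₁ ω))) μ :=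
    dr_integrable_select hH₁ hd₁ hQd₀₁int
  have hq02i : Integrable (fun ω => Q₀₂ (H₂ ω) (d₂ (H₂ ω))) μ :=
    dr_integrable_select hH₂ hd₂ hQ₀₂int
  -- indicator measurability/integrability
  have hind₁m : ∀ a : Bool, Measurable[mΩ] fun ω => (if A₁ ω = a then (1:ℝ) else 0) :=
    fun a => Measurable.ite (hA₁ (measurableSet_singleton a)) measurable_const measurable_const
  have hind₂m : ∀ a : Bool, Measurable[mΩ] fun ω => (if A₂ ω = a then (1:ℝ) else 0) :=
    fun a => Measurable.ite (hA₂ (measurableSet_singleton a)) measurable_const measurable_const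
  have hind₁i : ∀ a : Bool, Integrable (fun ω => (if A₁ ω = a then (1:ℝ) else 0)) μ := by
    intro a
    refine (integrable_const (1:ℝ)).mono' (hind₁m a).aestronglyMeasurable ?_
    filter_upwards with ω
    by_cases h : A₁ ω = a <;> simp [h]
  have hind₂i : ∀ a : Bool, Integrable (fun ω => (if A₂ ω = a then (1:ℝ) else 0)) μ := by
    intro a
    refine (integrable_const (1:ℝ)).mono' (hind₂m a).aestronglyMeasurable ?_
    filter_upwards with ω
    by_cases h : A₂ ω = a <;> simp [h]
  -- rewrite the integrand
  have hZ : ∫ ω, (Q₁ (H₁ ω) (d₁ (H₁ ω))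
        + (if A₁ ω = d₁ (H₁ ω) then (1:ℝ) else 0) / g₁ (H₁ ω) (A₁ ω)
          * (Q₂ (H₂ ω) (d₂ (H₂ ω)) - Q₁ (H₁ ω) (d₁ (H₁ ω)))
        + ((if A₁ ω = d₁ (H₁ ω) then (1:ℝ) else 0)
              * (if A₂ ω = d₂ (H₂ ω) then (1:ℝ) else 0))
            / (g₁ (H₁ ω) (A₁ ω) * g₂ (H₂ ω) (A₂ ω))
          * (U ω - Q₂ (H₂ ω) (d₂ (H₂ ω)))) ∂μ
      = ∫ ω, (Q₁ (H₁ ω) (d₁ (H₁ ω))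
        + (g₁ (H₁ ω) (d₁ (H₁ ω)))⁻¹ * ((if A₁ ω = d₁ (H₁ ω) then (1:ℝ) else 0)
            * (Q₂ (H₂ ω) (d₂ (H₂ ω)) - Q₁ (H₁ ω) (d₁ (H₁ ω))))
        + ((g₁ (H₁ ω) (d₁ (H₁ ω)))⁻¹ * (if A₁ ω = d₁ (H₁ ω) then (1:ℝ) else 0)
            * (g₂ (H₂ ω) (d₂ (H₂ ω)))⁻¹)
          * ((if A₂ ω = d₂ (H₂ ω) then (1:ℝ) else 0)
            * (U ω - Q₂ (H₂ ω) (d₂ (H₂ ω))))) ∂μ := by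
    refine integral_congr_ae (Eventually.of_forall fun ω => ?_)
    by_cases h1 : A₁ ω = d₁ (H₁ ω) <;> by_cases h2 : A₂ ω = d₂ (H₂ ω)
    · simp only [if_pos h1, if_pos h2, h1, h2]; ring
    · simp only [if_pos h1, if_neg h2, h1]; ring
    · simp only [if_neg h1, if_pos h2, h2]; ring
    · simp only [if_neg h1, if_neg h2]; ring
  -- integrability of the three pieces
  have hT2i : Integrable (fun ω => (g₁ (H₁ ω) (d₁ (H₁ ω)))⁻¹
      * ((if A₁ ω = d₁ (H₁ ω) then (1:ℝ) else 0)
        * (Q₂ (H₂ ω) (d₂ (H₂ ω)) - Q₁ (H₁ ω) (d₁ (H₁ ω))))) μ :=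
    dr_integrable_winv_mul hg₁m hg₁01 hH₁ hd₁ hA₁ hδ hgpos₁ (hq₂i.sub hq₁i)
  have hT3i : Integrable (fun ω => ((g₁ (H₁ ω) (d₁ (H₁ ω)))⁻¹
        * (if A₁ ω = d₁ (H₁ ω) then (1:ℝ) else 0) * (g₂ (H₂ ω) (d₂ (H₂ ω)))⁻¹)
      * ((if A₂ ω = d₂ (H₂ ω) then (1:ℝ) else 0)
        * (U ω - Q₂ (H₂ ω) (d₂ (H₂ ω))))) μ :=
    dr_integrable_term3 hg₁m hg₁01 hg₂m hg₂01 hH₁ hH₂ hd₁ hd₂ hA₁ hA₂ hδ hgpos₁ hgpos₂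
      (hU.sub hq₂i)
  -- stage-2 conditional expectation computation
  have hι₂b : ∀ᵐ ω ∂μ, ‖(if A₂ ω = d₂ (H₂ ω) then (1:ℝ) else 0)‖ ≤ 1 :=
    Eventually.of_forall fun ω => by by_cases h : A₂ ω = d₂ (H₂ ω) <;> simp [h]
  have hι₁b : ∀ᵐ ω ∂μ, ‖(if A₁ ω = d₁ (H₁ ω) then (1:ℝ) else 0)‖ ≤ 1 :=
    Eventually.of_forall fun ω => by by_cases h : A₁ ω = d₁ (H₁ ω) <;> simp [h]
  have hi2U : Integrable (fun ω => (if A₂ ω = d₂ (H₂ ω) then (1:ℝ) else 0) * U ω) μ :=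
    dr_integrable_bdd_mul (C := 1) hι₂m.aestronglyMeasurable hU hι₂b
  have hi2q : Integrable (fun ω => (if A₂ ω = d₂ (H₂ ω) then (1:ℝ) else 0)
      * Q₂ (H₂ ω) (d₂ (H₂ ω))) μ :=
    dr_integrable_bdd_mul (C := 1) hι₂m.aestronglyMeasurable hq₂i hι₂b
  have hY₂i : Integrable (fun ω => (if A₂ ω = d₂ (H₂ ω) then (1:ℝ) else 0)
      * (U ω - Q₂ (H₂ ω) (d₂ (H₂ ω)))) μ :=
    dr_integrable_bdd_mul (C := 1) hι₂m.aestronglyMeasurable (hU.sub hq₂i) hι₂b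
  have hce_q₂ : ∀ a : Bool, μ[(fun ω => (if A₂ ω = a then (1:ℝ) else 0)
      * Q₂ (H₂ ω) (d₂ (H₂ ω)))|m₂]
      =ᵐ[μ] fun ω => g₀₂ (H₂ ω) a * Q₂ (H₂ ω) (d₂ (H₂ ω)) := by
    intro a
    refine dr_condexp_mul_right μ hq₂m.stronglyMeasurable ?_ (hind₂i a) (hg₀₂cond a).symm
    refine dr_integrable_bdd_mul (C := 1) (hind₂m a).aestronglyMeasurable hq₂i ?_
    filter_upwards with ω
    by_cases h : A₂ ω = a <;> simp [h]
  have hce₂U : μ[(fun ω => (if A₂ ω = d₂ (H₂ ω) then (1:ℝ) else 0) * U ω)|m₂]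
      =ᵐ[μ] fun ω => g₀₂ (H₂ ω) (d₂ (H₂ ω)) * Q₀₂ (H₂ ω) (d₂ (H₂ ω)) :=
    dr_policy_condexp (G := fun a ω => g₀₂ (H₂ ω) a * Q₀₂ (H₂ ω) a) μ hm₂
      (hd₂.comp hH₂m₂) hA₂ hU (fun a => (hQ₀₂cond a).symm)
  have hce₂q : μ[(fun ω => (if A₂ ω = d₂ (H₂ ω) then (1:ℝ) else 0)
      * Q₂ (H₂ ω) (d₂ (H₂ ω)))|m₂]
      =ᵐ[μ] fun ω => g₀₂ (H₂ ω) (d₂ (H₂ ω)) * Q₂ (H₂ ω) (d₂ (H₂ ω)) :=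
    dr_policy_condexp (G := fun a ω => g₀₂ (H₂ ω) a * Q₂ (H₂ ω) (d₂ (H₂ ω))) μ hm₂
      (hd₂.comp hH₂m₂) hA₂ hq₂i hce_q₂
  have hY₂ce : μ[(fun ω => (if A₂ ω = d₂ (H₂ ω) then (1:ℝ) else 0)
      * (U ω - Q₂ (H₂ ω) (d₂ (H₂ ω))))|m₂]
      =ᵐ[μ] fun ω => g₀₂ (H₂ ω) (d₂ (H₂ ω))
        * (Q₀₂ (H₂ ω) (d₂ (H₂ ω)) - Q₂ (H₂ ω) (d₂ (H₂ ω))) := by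
    have hsplit : (fun ω => (if A₂ ω = d₂ (H₂ ω) then (1:ℝ) else 0)
        * (U ω - Q₂ (H₂ ω) (d₂ (H₂ ω))))
        = (fun ω => (if A₂ ω = d₂ (H₂ ω) then (1:ℝ) else 0) * U ω)
          - (fun ω => (if A₂ ω = d₂ (H₂ ω) then (1:ℝ) else 0) * Q₂ (H₂ ω) (d₂ (H₂ ω))) := by
      funext ω; simp only [Pi.sub_apply]; ring
    rw [hsplit]
    refine (condExp_sub hi2U hi2q m₂).trans ((hce₂U.sub hce₂q).trans ?_)
    filter_upwards with ω
    try simp only [Pi.sub_apply]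
    ring
  have hW₂sm : StronglyMeasurable[m₂] fun ω => (g₁ (H₁ ω) (d₁ (H₁ ω)))⁻¹
      * (if A₁ ω = d₁ (H₁ ω) then (1:ℝ) else 0) * (g₂ (H₂ ω) (d₂ (H₂ ω)))⁻¹ :=
    (((hw₁m.mono hsub le_rfl).mul hι₁m).mul hw₂m).stronglyMeasurable
  have hT3 : ∫ ω, ((g₁ (H₁ ω) (d₁ (H₁ ω)))⁻¹
        * (if A₁ ω = d₁ (H₁ ω) then (1:ℝ) else 0) * (g₂ (H₂ ω) (d₂ (H₂ ω)))⁻¹)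
      * ((if A₂ ω = d₂ (H₂ ω) then (1:ℝ) else 0) * (U ω - Q₂ (H₂ ω) (d₂ (H₂ ω)))) ∂μ
      = ∫ ω, ((g₁ (H₁ ω) (d₁ (H₁ ω)))⁻¹
        * (if A₁ ω = d₁ (H₁ ω) then (1:ℝ) else 0) * (g₂ (H₂ ω) (d₂ (H₂ ω)))⁻¹)
      * (g₀₂ (H₂ ω) (d₂ (H₂ ω)) * (Q₀₂ (H₂ ω) (d₂ (H₂ ω)) - Q₂ (H₂ ω) (d₂ (H₂ ω)))) ∂μ :=
    dr_integral_mul_condexp μ hm₂ hW₂sm hY₂i hT3i hY₂ce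
  -- stage-1 conditional expectation computation
  have hi1Q : Integrable (fun ω => (if A₁ ω = d₁ (H₁ ω) then (1:ℝ) else 0)
      * Q₀₂ (H₂ ω) (d₂ (H₂ ω))) μ :=
    dr_integrable_bdd_mul (C := 1) (hι₁m.mono hm₂ le_rfl).aestronglyMeasurable hq02i hι₁b
  have hi1q : Integrable (fun ω => (if A₁ ω = d₁ (H₁ ω) then (1:ℝ) else 0)
      * Q₁ (H₁ ω) (d₁ (H₁ ω))) μ :=
    dr_integrable_bdd_mul (C := 1) (hι₁m.mono hm₂ le_rfl).aestronglyMeasurable hq₁i hι₁b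
  have hY₁i : Integrable (fun ω => (if A₁ ω = d₁ (H₁ ω) then (1:ℝ) else 0)
      * (Q₀₂ (H₂ ω) (d₂ (H₂ ω)) - Q₁ (H₁ ω) (d₁ (H₁ ω)))) μ :=
    dr_integrable_bdd_mul (C := 1) (hι₁m.mono hm₂ le_rfl).aestronglyMeasurable
      (hq02i.sub hq₁i) hι₁b
  have hce_q₁ : ∀ a : Bool, μ[(fun ω => (if A₁ ω = a then (1:ℝ) else 0)
      * Q₁ (H₁ ω) (d₁ (H₁ ω)))|m₁]
      =ᵐ[μ] fun ω => g₀₁ (H₁ ω) a * Q₁ (H₁ ω) (d₁ (H₁ ω)) := by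
    intro a
    refine dr_condexp_mul_right μ hq₁m.stronglyMeasurable ?_ (hind₁i a) (hg₀₁cond a).symm
    refine dr_integrable_bdd_mul (C := 1) (hind₁m a).aestronglyMeasurable hq₁i ?_
    filter_upwards with ω
    by_cases h : A₁ ω = a <;> simp [h]
  have hce₁Q : μ[(fun ω => (if A₁ ω = d₁ (H₁ ω) then (1:ℝ) else 0)
      * Q₀₂ (H₂ ω) (d₂ (H₂ ω)))|m₁]
      =ᵐ[μ] fun ω => g₀₁ (H₁ ω) (d₁ (H₁ ω)) * Qd₀₁ (H₁ ω) (d₁ (H₁ ω)) :=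
    dr_policy_condexp (G := fun a ω => g₀₁ (H₁ ω) a * Qd₀₁ (H₁ ω) a) μ hm₁
      (hd₁.comp hH₁m₁) hA₁ hq02i (fun a => (hQd₀₁cond a).symm)
  have hce₁q : μ[(fun ω => (if A₁ ω = d₁ (H₁ ω) then (1:ℝ) else 0)
      * Q₁ (H₁ ω) (d₁ (H₁ ω)))|m₁]
      =ᵐ[μ] fun ω => g₀₁ (H₁ ω) (d₁ (H₁ ω)) * Q₁ (H₁ ω) (d₁ (H₁ ω)) :=
    dr_policy_condexp (G := fun a ω => g₀₁ (H₁ ω) a * Q₁ (H₁ ω) (d₁ (H₁ ω))) μ hm₁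
      (hd₁.comp hH₁m₁) hA₁ hq₁i hce_q₁
  have hY₁ce : μ[(fun ω => (if A₁ ω = d₁ (H₁ ω) then (1:ℝ) else 0)
      * (Q₀₂ (H₂ ω) (d₂ (H₂ ω)) - Q₁ (H₁ ω) (d₁ (H₁ ω))))|m₁]
      =ᵐ[μ] fun ω => g₀₁ (H₁ ω) (d₁ (H₁ ω))
        * (Qd₀₁ (H₁ ω) (d₁ (H₁ ω)) - Q₁ (H₁ ω) (d₁ (H₁ ω))) := by
    have hsplit : (fun ω => (if A₁ ω = d₁ (H₁ ω) then (1:ℝ) else 0)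
        * (Q₀₂ (H₂ ω) (d₂ (H₂ ω)) - Q₁ (H₁ ω) (d₁ (H₁ ω))))
        = (fun ω => (if A₁ ω = d₁ (H₁ ω) then (1:ℝ) else 0) * Q₀₂ (H₂ ω) (d₂ (H₂ ω)))
          - (fun ω => (if A₁ ω = d₁ (H₁ ω) then (1:ℝ) else 0) * Q₁ (H₁ ω) (d₁ (H₁ ω))) := by
      funext ω; simp only [Pi.sub_apply]; ring
    rw [hsplit]
    refine (condExp_sub hi1Q hi1q m₁).trans ((hce₁Q.sub hce₁q).trans ?_)
    filter_upwards with ω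
    try simp only [Pi.sub_apply]
    ring
  have hWY₁i : Integrable (fun ω => (g₁ (H₁ ω) (d₁ (H₁ ω)))⁻¹
      * ((if A₁ ω = d₁ (H₁ ω) then (1:ℝ) else 0)
        * (Q₀₂ (H₂ ω) (d₂ (H₂ ω)) - Q₁ (H₁ ω) (d₁ (H₁ ω))))) μ :=
    dr_integrable_winv_mul hg₁m hg₁01 hH₁ hd₁ hA₁ hδ hgpos₁ (hq02i.sub hq₁i)
  have h3 : ∫ ω, (g₁ (H₁ ω) (d₁ (H₁ ω)))⁻¹
        * ((if A₁ ω = d₁ (H₁ ω) then (1:ℝ) else 0)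
          * (Q₀₂ (H₂ ω) (d₂ (H₂ ω)) - Q₁ (H₁ ω) (d₁ (H₁ ω)))) ∂μ
      = ∫ ω, (g₁ (H₁ ω) (d₁ (H₁ ω)))⁻¹
        * (g₀₁ (H₁ ω) (d₁ (H₁ ω)) * (Qd₀₁ (H₁ ω) (d₁ (H₁ ω)) - Q₁ (H₁ ω) (d₁ (H₁ ω)))) ∂μ :=
    dr_integral_mul_condexp μ hm₁ hw₁m.stronglyMeasurable hY₁i hWY₁i hY₁ce
  have hsI : ∫ ω, (Q₁ (H₁ ω) (d₁ (H₁ ω))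
        + (g₁ (H₁ ω) (d₁ (H₁ ω)))⁻¹ * ((if A₁ ω = d₁ (H₁ ω) then (1:ℝ) else 0)
            * (Q₂ (H₂ ω) (d₂ (H₂ ω)) - Q₁ (H₁ ω) (d₁ (H₁ ω))))
        + ((g₁ (H₁ ω) (d₁ (H₁ ω)))⁻¹ * (if A₁ ω = d₁ (H₁ ω) then (1:ℝ) else 0)
            * (g₂ (H₂ ω) (d₂ (H₂ ω)))⁻¹)
          * ((if A₂ ω = d₂ (H₂ ω) then (1:ℝ) else 0)
            * (U ω - Q₂ (H₂ ω) (d₂ (H₂ ω))))) ∂μ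
      = (∫ ω, Q₁ (H₁ ω) (d₁ (H₁ ω)) ∂μ)
        + (∫ ω, (g₁ (H₁ ω) (d₁ (H₁ ω)))⁻¹ * ((if A₁ ω = d₁ (H₁ ω) then (1:ℝ) else 0)
            * (Q₂ (H₂ ω) (d₂ (H₂ ω)) - Q₁ (H₁ ω) (d₁ (H₁ ω)))) ∂μ)
        + ∫ ω, ((g₁ (H₁ ω) (d₁ (H₁ ω)))⁻¹ * (if A₁ ω = d₁ (H₁ ω) then (1:ℝ) else 0)
            * (g₂ (H₂ ω) (d₂ (H₂ ω)))⁻¹)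
          * ((if A₂ ω = d₂ (H₂ ω) then (1:ℝ) else 0)
            * (U ω - Q₂ (H₂ ω) (d₂ (H₂ ω)))) ∂μ := by
    have h12 : ∫ ω, (Q₁ (H₁ ω) (d₁ (H₁ ω))
        + (g₁ (H₁ ω) (d₁ (H₁ ω)))⁻¹ * ((if A₁ ω = d₁ (H₁ ω) then (1:ℝ) else 0)
            * (Q₂ (H₂ ω) (d₂ (H₂ ω)) - Q₁ (H₁ ω) (d₁ (H₁ ω))))) ∂μ
        = (∫ ω, Q₁ (H₁ ω) (d₁ (H₁ ω)) ∂μ)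
          + ∫ ω, (g₁ (H₁ ω) (d₁ (H₁ ω)))⁻¹ * ((if A₁ ω = d₁ (H₁ ω) then (1:ℝ) else 0)
            * (Q₂ (H₂ ω) (d₂ (H₂ ω)) - Q₁ (H₁ ω) (d₁ (H₁ ω)))) ∂μ :=
      integral_add hq₁i hT2i
    have h123 : ∫ ω, ((Q₁ (H₁ ω) (d₁ (H₁ ω))
        + (g₁ (H₁ ω) (d₁ (H₁ ω)))⁻¹ * ((if A₁ ω = d₁ (H₁ ω) then (1:ℝ) else 0)
            * (Q₂ (H₂ ω) (d₂ (H₂ ω)) - Q₁ (H₁ ω) (d₁ (H₁ ω)))))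
        + ((g₁ (H₁ ω) (d₁ (H₁ ω)))⁻¹ * (if A₁ ω = d₁ (H₁ ω) then (1:ℝ) else 0)
            * (g₂ (H₂ ω) (d₂ (H₂ ω)))⁻¹)
          * ((if A₂ ω = d₂ (H₂ ω) then (1:ℝ) else 0)
            * (U ω - Q₂ (H₂ ω) (d₂ (H₂ ω))))) ∂μ
        = (∫ ω, (Q₁ (H₁ ω) (d₁ (H₁ ω))
        + (g₁ (H₁ ω) (d₁ (H₁ ω)))⁻¹ * ((if A₁ ω = d₁ (H₁ ω) then (1:ℝ) else 0)
            * (Q₂ (H₂ ω) (d₂ (H₂ ω)) - Q₁ (H₁ ω) (d₁ (H₁ ω))))) ∂μ)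
          + ∫ ω, ((g₁ (H₁ ω) (d₁ (H₁ ω)))⁻¹ * (if A₁ ω = d₁ (H₁ ω) then (1:ℝ) else 0)
            * (g₂ (H₂ ω) (d₂ (H₂ ω)))⁻¹)
          * ((if A₂ ω = d₂ (H₂ ω) then (1:ℝ) else 0)
            * (U ω - Q₂ (H₂ ω) (d₂ (H₂ ω)))) ∂μ :=
      integral_add (hq₁i.add hT2i) hT3i
    rw [h123, h12]
  rw [hZ, hsI, hT3]
  rcases hgQ with ⟨hgg₁, hgg₂⟩ | ⟨hQQ₁, hQQ₂⟩
  · -- g is correct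
    subst hgg₁; subst hgg₂
    have hT3'i : Integrable (fun ω => (g₁ (H₁ ω) (d₁ (H₁ ω)))⁻¹
        * ((if A₁ ω = d₁ (H₁ ω) then (1:ℝ) else 0)
          * (Q₀₂ (H₂ ω) (d₂ (H₂ ω)) - Q₂ (H₂ ω) (d₂ (H₂ ω))))) μ :=
      dr_integrable_winv_mul hg₁m hg₁01 hH₁ hd₁ hA₁ hδ hgpos₁ (hq02i.sub hq₂i)
    have h1 : ∫ ω, ((g₁ (H₁ ω) (d₁ (H₁ ω)))⁻¹
          * (if A₁ ω = d₁ (H₁ ω) then (1:ℝ) else 0) * (g₂ (H₂ ω) (d₂ (H₂ ω)))⁻¹)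
        * (g₂ (H₂ ω) (d₂ (H₂ ω)) * (Q₀₂ (H₂ ω) (d₂ (H₂ ω)) - Q₂ (H₂ ω) (d₂ (H₂ ω)))) ∂μ
        = ∫ ω, (g₁ (H₁ ω) (d₁ (H₁ ω)))⁻¹ * ((if A₁ ω = d₁ (H₁ ω) then (1:ℝ) else 0)
          * (Q₀₂ (H₂ ω) (d₂ (H₂ ω)) - Q₂ (H₂ ω) (d₂ (H₂ ω)))) ∂μ := by
      refine integral_congr_ae (Eventually.of_forall fun ω => ?_)
      beta_reduce
      have hne : (g₂ (H₂ ω) (d₂ (H₂ ω)))⁻¹ * g₂ (H₂ ω) (d₂ (H₂ ω)) = 1 :=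
        inv_mul_cancel₀ (hg₂01 _ _).1.ne'
      calc ((g₁ (H₁ ω) (d₁ (H₁ ω)))⁻¹
          * (if A₁ ω = d₁ (H₁ ω) then (1:ℝ) else 0) * (g₂ (H₂ ω) (d₂ (H₂ ω)))⁻¹)
        * (g₂ (H₂ ω) (d₂ (H₂ ω)) * (Q₀₂ (H₂ ω) (d₂ (H₂ ω)) - Q₂ (H₂ ω) (d₂ (H₂ ω))))
          = ((g₂ (H₂ ω) (d₂ (H₂ ω)))⁻¹ * g₂ (H₂ ω) (d₂ (H₂ ω)))
            * ((g₁ (H₁ ω) (d₁ (H₁ ω)))⁻¹ * ((if A₁ ω = d₁ (H₁ ω) then (1:ℝ) else 0)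
              * (Q₀₂ (H₂ ω) (d₂ (H₂ ω)) - Q₂ (H₂ ω) (d₂ (H₂ ω))))) := by ring
        _ = (g₁ (H₁ ω) (d₁ (H₁ ω)))⁻¹ * ((if A₁ ω = d₁ (H₁ ω) then (1:ℝ) else 0)
              * (Q₀₂ (H₂ ω) (d₂ (H₂ ω)) - Q₂ (H₂ ω) (d₂ (H₂ ω)))) := by rw [hne, one_mul]
    have h2comb : (∫ ω, (g₁ (H₁ ω) (d₁ (H₁ ω)))⁻¹ * ((if A₁ ω = d₁ (H₁ ω) then (1:ℝ) else 0)
            * (Q₂ (H₂ ω) (d₂ (H₂ ω)) - Q₁ (H₁ ω) (d₁ (H₁ ω)))) ∂μ)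
          + ∫ ω, (g₁ (H₁ ω) (d₁ (H₁ ω)))⁻¹ * ((if A₁ ω = d₁ (H₁ ω) then (1:ℝ) else 0)
            * (Q₀₂ (H₂ ω) (d₂ (H₂ ω)) - Q₂ (H₂ ω) (d₂ (H₂ ω)))) ∂μ
        = ∫ ω, (g₁ (H₁ ω) (d₁ (H₁ ω)))⁻¹ * ((if A₁ ω = d₁ (H₁ ω) then (1:ℝ) else 0)
            * (Q₀₂ (H₂ ω) (d₂ (H₂ ω)) - Q₁ (H₁ ω) (d₁ (H₁ ω)))) ∂μ := by
      refine (integral_add hT2i hT3'i).symm.trans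
        (integral_congr_ae (Eventually.of_forall fun ω => ?_))
      beta_reduce
      ring
    have h4 : ∫ ω, (g₁ (H₁ ω) (d₁ (H₁ ω)))⁻¹
          * (g₁ (H₁ ω) (d₁ (H₁ ω)) * (Qd₀₁ (H₁ ω) (d₁ (H₁ ω)) - Q₁ (H₁ ω) (d₁ (H₁ ω)))) ∂μ
        = ∫ ω, (Qd₀₁ (H₁ ω) (d₁ (H₁ ω)) - Q₁ (H₁ ω) (d₁ (H₁ ω))) ∂μ := by
      refine integral_congr_ae (Eventually.of_forall fun ω => ?_)
      beta_reduce
      rw [← mul_assoc, inv_mul_cancel₀ (hg₁01 _ _).1.ne', one_mul]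
    rw [h1, add_assoc, h2comb, h3, h4, integral_sub hqdi hq₁i]
    ring
  · -- Q is correct
    subst hQQ₁; subst hQQ₂
    have hz3 : ∫ ω, ((g₁ (H₁ ω) (d₁ (H₁ ω)))⁻¹
          * (if A₁ ω = d₁ (H₁ ω) then (1:ℝ) else 0) * (g₂ (H₂ ω) (d₂ (H₂ ω)))⁻¹)
        * (g₀₂ (H₂ ω) (d₂ (H₂ ω)) * (Q₂ (H₂ ω) (d₂ (H₂ ω)) - Q₂ (H₂ ω) (d₂ (H₂ ω)))) ∂μ = 0 := by
      simp
    have hz2 : ∫ ω, (g₁ (H₁ ω) (d₁ (H₁ ω)))⁻¹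
          * (g₀₁ (H₁ ω) (d₁ (H₁ ω)) * (Q₁ (H₁ ω) (d₁ (H₁ ω)) - Q₁ (H₁ ω) (d₁ (H₁ ω)))) ∂μ = 0 := by
      simp
    rw [h3, hz2, hz3, add_zero, add_zero]
end
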